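/- arXiv:2104.09329 — 3 statements merged into one kernel-verified Lean document; each statement's English description precedes it below -/
import Mathlib

section
/- Let L₁, L₂ > 0 and B = [0,L₁]×[0,L₂]. Let n ∈ ℕ, let H : ℝ² × ℝⁿ × (ℝⁿ×ℝⁿ) × (ℝⁿ×ℝⁿ×ℝⁿ) → ℝ be smooth, written H(z, x, x₁₀, x₀₁, x₂₀, x₁₁, x₀₂), and let x : ℝ × ℝ² → ℝⁿ be smooth. Write j(t,z) = (z, x, ∂₁x, ∂₂x, ∂₁²x, ∂₁∂₂x, ∂₂²x)(t,z) for the second jet, let all partial derivatives of H below be evaluated along j, and let d₁, d₂ denote the spatial partial derivatives ∂₁, ∂₂ of the composite map z ↦ (∂H/∂·)(j(t,z)). Then for every t: d/dt ∫_B H(j(t,z)) dz = ∫_B Σ_α E_α ∂ₜxᵅ dz + ∫₀^{L₁} [ Σ_α (∂H/∂x₀₁ᵅ − d₁(∂H/∂x₁₁ᵅ) − d₂(∂H/∂x₀₂ᵅ)) ∂ₜxᵅ + Σ_α (∂H/∂x₀₂ᵅ) ∂₂∂ₜxᵅ ]_{z²=0}^{z²=L₂} dz¹ + ∫₀^{L₂}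 [ Σ_α (∂H/∂x₁₀ᵅ − d₂(∂H/∂x₁₁ᵅ) − d₁(∂H/∂x₂₀ᵅ)) ∂ₜxᵅ + Σ_α (∂H/∂x₂₀ᵅ) ∂₁∂ₜxᵅ ]_{z¹=0}^{z¹=L₁} dz² + [ [ Σ_α (∂H/∂x₁₁ᵅ) ∂ₜxᵅ ]_{z¹=0}^{z¹=L₁} ]_{z²=0}^{z²=L₂}, where E_α = ∂H/∂xᵅ − d₁(∂H/∂x₁₀ᵅ) − d₂(∂H/∂x₀₁ᵅ) + d₁d₁(∂H/∂x₂₀ᵅ) + d₁d₂(∂H/∂x₁₁ᵅ) + d₂d₂(∂H/∂x₀₂ᵅ) is the variational derivative of H along j, and [f]_{a}^{b} denotes f evaluated at b minus f evaluated at a. -/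
open MeasureTheory intervalIntegral

noncomputable section

/-- Type of second-order Hamiltonian densities
`H(z, x, x₁₀, x₀₁, x₂₀, x₁₁, x₀₂)` on a two-dimensional spatial domain. -/
abbrev Jet2Fun (n : ℕ) :=
  (ℝ × ℝ) → (Fin n → ℝ) → (Fin n → ℝ) → (Fin n → ℝ) → (Fin n → ℝ) → (Fin n → ℝ) →
    (Fin n → ℝ) → ℝ

variable {n : ℕ}

/-- `∂H/∂xᵅ`. -/
def pHx (H : Jet2Fun n) (α : Fin n) : Jet2Fun n := fun z a b c d e f =>
  deriv (fun s => H z (Function.update a α s) b c d e f) (a α)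

/-- `∂H/∂x₁₀ᵅ`. -/
def pHx10 (H : Jet2Fun n) (α : Fin n) : Jet2Fun n := fun z a b c d e f =>
  deriv (fun s => H z a (Function.update b α s) c d e f) (b α)

/-- `∂H/∂x₀₁ᵅ`. -/
def pHx01 (H : Jet2Fun n) (α : Fin n) : Jet2Fun n := fun z a b c d e f =>
  deriv (fun s => H z a b (Function.update c α s) d e f) (c α)

/-- `∂H/∂x₂₀ᵅ`. -/
def pHx20 (H : Jet2Fun n) (α : Fin n) : Jet2Fun n := fun z a b c d e f =>
  deriv (fun s => H z a b c (Function.update d α s) e f) (d α)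

/-- `∂H/∂x₁₁ᵅ`. -/
def pHx11 (H : Jet2Fun n) (α : Fin n) : Jet2Fun n := fun z a b c d e f =>
  deriv (fun s => H z a b c d (Function.update e α s) f) (e α)

/-- `∂H/∂x₀₂ᵅ`. -/
def pHx02 (H : Jet2Fun n) (α : Fin n) : Jet2Fun n := fun z a b c d e f =>
  deriv (fun s => H z a b c d e (Function.update f α s)) (f α)

/-- Partial derivative in `z¹` of a (possibly vector-valued) spatial field. -/
def vD1 {E : Type*} [NormedAddCommGroup E] [NormedSpace ℝ E] (u : ℝ → ℝ → E) :
    ℝ → ℝ → E := fun z1 z2 => deriv (fun s => u s z2) z1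

/-- Partial derivative in `z²` of a (possibly vector-valued) spatial field. -/
def vD2 {E : Type*} [NormedAddCommGroup E] [NormedSpace ℝ E] (u : ℝ → ℝ → E) :
    ℝ → ℝ → E := fun z1 z2 => deriv (fun s => u z1 s) z2

/-- Evaluation of a density `G` along the second jet
`j(t,z) = (z, x, ∂₁x, ∂₂x, ∂₁²x, ∂₁∂₂x, ∂₂²x)(t,z)` of the field `x`. -/
def atJet (x : ℝ → ℝ → ℝ → Fin n → ℝ) (G : Jet2Fun n) (t z1 z2 : ℝ) : ℝ :=
  G (z1, z2) (x t z1 z2) (vD1 (x t) z1 z2) (vD2 (x t) z1 z2)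
    (vD1 (vD1 (x t)) z1 z2) (vD1 (vD2 (x t)) z1 z2) (vD2 (vD2 (x t)) z1 z2)

/-- Time derivative `∂ₜx` of the field. -/
def xDt (x : ℝ → ℝ → ℝ → Fin n → ℝ) (t : ℝ) : ℝ → ℝ → Fin n → ℝ :=
  fun z1 z2 => deriv (fun s => x s z1 z2) t

/-- Variational derivative
`E_α = ∂H/∂xᵅ − d₁(∂H/∂x₁₀ᵅ) − d₂(∂H/∂x₀₁ᵅ) + d₁d₁(∂H/∂x₂₀ᵅ) + d₁d₂(∂H/∂x₁₁ᵅ)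
  + d₂d₂(∂H/∂x₀₂ᵅ)` along the jet of `x`. -/
def varDer (H : Jet2Fun n) (x : ℝ → ℝ → ℝ → Fin n → ℝ) (α : Fin n) (t z1 z2 : ℝ) : ℝ :=
  atJet x (pHx H α) t z1 z2
    - vD1 (atJet x (pHx10 H α) t) z1 z2
    - vD2 (atJet x (pHx01 H α) t) z1 z2
    + vD1 (vD1 (atJet x (pHx20 H α) t)) z1 z2
    + vD1 (vD2 (atJet x (pHx11 H α) t)) z1 z2
    + vD2 (vD2 (atJet x (pHx02 H α) t)) z1 z2

/-- Boundary integrand on the edges `z² ∈ {0, L₂}`: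
`Σ_α (∂H/∂x₀₁ᵅ − d₁(∂H/∂x₁₁ᵅ) − d₂(∂H/∂x₀₂ᵅ)) ∂ₜxᵅ + Σ_α (∂H/∂x₀₂ᵅ) ∂₂∂ₜxᵅ`. -/
def edgeZ2 (H : Jet2Fun n) (x : ℝ → ℝ → ℝ → Fin n → ℝ) (t z1 z2 : ℝ) : ℝ :=
  (∑ α : Fin n,
      (atJet x (pHx01 H α) t z1 z2 - vD1 (atJet x (pHx11 H α) t) z1 z2
        - vD2 (atJet x (pHx02 H α) t) z1 z2) * xDt x t z1 z2 α)
    + ∑ α : Fin n, atJet x (pHx02 H α) t z1 z2 * vD2 (xDt x t) z1 z2 α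

/-- Boundary integrand on the edges `z¹ ∈ {0, L₁}`:
`Σ_α (∂H/∂x₁₀ᵅ − d₂(∂H/∂x₁₁ᵅ) − d₁(∂H/∂x₂₀ᵅ)) ∂ₜxᵅ + Σ_α (∂H/∂x₂₀ᵅ) ∂₁∂ₜxᵅ`. -/
def edgeZ1 (H : Jet2Fun n) (x : ℝ → ℝ → ℝ → Fin n → ℝ) (t z1 z2 : ℝ) : ℝ :=
  (∑ α : Fin n,
      (atJet x (pHx10 H α) t z1 z2 - vD2 (atJet x (pHx11 H α) t) z1 z2
        - vD1 (atJet x (pHx20 H α) t) z1 z2) * xDt x t z1 z2 α)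
    + ∑ α : Fin n, atJet x (pHx20 H α) t z1 z2 * vD1 (xDt x t) z1 z2 α

/-- Corner density `Σ_α (∂H/∂x₁₁ᵅ) ∂ₜxᵅ`. -/
def cornerTerm (H : Jet2Fun n) (x : ℝ → ℝ → ℝ → Fin n → ℝ) (t z1 z2 : ℝ) : ℝ :=
  ∑ α : Fin n, atJet x (pHx11 H α) t z1 z2 * xDt x t z1 z2 α

namespace Stmt0Aux


variable {X : Type*} [NormedAddCommGroup X] [NormedSpace ℝ X]
variable {E : Type*} [NormedAddCommGroup E] [NormedSpace ℝ E]

/-- directional partial derivative. -/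
def pd (v : X) (f : X → E) (p : X) : E := fderiv ℝ f p v

def e1 : ℝ × ℝ × ℝ := (1, 0, 0)
def e2 : ℝ × ℝ × ℝ := (0, 1, 0)
def e3 : ℝ × ℝ × ℝ := (0, 0, 1)

theorem pd_contDiff (v : X) {f : X → E} (hf : ContDiff ℝ (⊤ : ℕ∞) f) :
    ContDiff ℝ (⊤ : ℕ∞) (pd v f) :=
  (hf.fderiv_right (by simp)).clm_apply contDiff_const

theorem pd_comm {f : X → E} (hf : ContDiff ℝ (⊤ : ℕ∞) f) (v w : X)
    (p : X) : pd v (pd w f) p = pd w (pd v f) p := by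
  have hd : Differentiable ℝ f := hf.differentiable (by simp)
  have hd' : Differentiable ℝ (fderiv ℝ f) :=
    (hf.fderiv_right (m := ((⊤:ℕ∞) : WithTop ℕ∞)) (by simp)).differentiable (by simp)
  have key : ∀ a b : X, pd a (pd b f) p = fderiv ℝ (fderiv ℝ f) p a b := by
    intro a b
    have heq : fderiv ℝ (fun q => fderiv ℝ f q b) p =
        ((fderiv ℝ (fderiv ℝ f) p).flip b) := by
      rw [fderiv_clm_apply (hd' p) (differentiableAt_const b)]
      simp
    have h2 : pd a (pd b f) p = fderiv ℝ (fun q => fderiv ℝ f q b) p a := rfl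
    rw [h2, heq, ContinuousLinearMap.flip_apply]
  rw [key, key]
  exact second_derivative_symmetric (fun y => (hd y).hasFDerivAt)
    ((hd' p).hasFDerivAt) v w

theorem hasDerivAt_slice1 {f : ℝ × ℝ × ℝ → E} {t z1 z2 : ℝ}
    (hf : DifferentiableAt ℝ f (t, z1, z2)) :
    HasDerivAt (fun s => f (t, s, z2)) (pd e2 f (t, z1, z2)) z1 := by
  have hγ : HasDerivAt (fun s : ℝ => ((t, s, z2) : ℝ × ℝ × ℝ)) e2 z1 :=
    (hasDerivAt_const z1 t).prodMk ((hasDerivAt_id z1).prodMk (hasDerivAt_const z1 z2))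
  exact hf.hasFDerivAt.comp_hasDerivAt z1 hγ

theorem hasDerivAt_slice2 {f : ℝ × ℝ × ℝ → E} {t z1 z2 : ℝ}
    (hf : DifferentiableAt ℝ f (t, z1, z2)) :
    HasDerivAt (fun s => f (t, z1, s)) (pd e3 f (t, z1, z2)) z2 := by
  have hγ : HasDerivAt (fun s : ℝ => ((t, z1, s) : ℝ × ℝ × ℝ)) e3 z2 :=
    (hasDerivAt_const z2 t).prodMk ((hasDerivAt_const z2 z1).prodMk (hasDerivAt_id z2))
  exact hf.hasFDerivAt.comp_hasDerivAt z2 hγ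

theorem hasDerivAt_slice0 {f : ℝ × ℝ × ℝ → E} {t z1 z2 : ℝ}
    (hf : DifferentiableAt ℝ f (t, z1, z2)) :
    HasDerivAt (fun s => f (s, z1, z2)) (pd e1 f (t, z1, z2)) t := by
  have hγ : HasDerivAt (fun s : ℝ => ((s, z1, z2) : ℝ × ℝ × ℝ)) e1 t :=
    (hasDerivAt_id t).prodMk ((hasDerivAt_const t z1).prodMk (hasDerivAt_const t z2))
  exact hf.hasFDerivAt.comp_hasDerivAt t hγ


/-! ### slice/derivative helpers -/

theorem vD1_eq_pd {g : ℝ × ℝ × ℝ → E} (hg : Differentiable ℝ g)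
    (u : ℝ → ℝ → ℝ → E) (hu : ∀ t a b, u t a b = g (t, a, b)) (t z1 z2 : ℝ) :
    vD1 (u t) z1 z2 = pd e2 g (t, z1, z2) := by
  have h : (fun s => u t s z2) = fun s => g (t, s, z2) := funext fun s => hu t s z2
  show deriv (fun s => u t s z2) z1 = _
  rw [h]
  exact (hasDerivAt_slice1 (hg _)).deriv

theorem vD2_eq_pd {g : ℝ × ℝ × ℝ → E} (hg : Differentiable ℝ g)
    (u : ℝ → ℝ → ℝ → E) (hu : ∀ t a b, u t a b = g (t, a, b)) (t z1 z2 : ℝ) :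
    vD2 (u t) z1 z2 = pd e3 g (t, z1, z2) := by
  have h : (fun s => u t z1 s) = fun s => g (t, z1, s) := funext fun s => hu t z1 s
  show deriv (fun s => u t z1 s) z2 = _
  rw [h]
  exact (hasDerivAt_slice2 (hg _)).deriv

/-! ### jet space -/

abbrev Y (n : ℕ) := (ℝ × ℝ) × (Fin n → ℝ) × (Fin n → ℝ) × (Fin n → ℝ) × (Fin n → ℝ) ×
  (Fin n → ℝ) × (Fin n → ℝ)

variable {n : ℕ}

/-- uncurried density. -/
def Gu (G : Jet2Fun n) : Y n → ℝ := fun y =>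
  G y.1 y.2.1 y.2.2.1 y.2.2.2.1 y.2.2.2.2.1 y.2.2.2.2.2.1 y.2.2.2.2.2.2

def ins1 : (Fin n → ℝ) →ₗ[ℝ] Y n where
  toFun v := ((0, 0), v, 0, 0, 0, 0, 0)
  map_add' a b := by simp [Prod.ext_iff]
  map_smul' c a := by simp [Prod.ext_iff]

def ins2 : (Fin n → ℝ) →ₗ[ℝ] Y n where
  toFun v := ((0, 0), 0, v, 0, 0, 0, 0)
  map_add' a b := by simp [Prod.ext_iff]
  map_smul' c a := by simp [Prod.ext_iff]

def ins3 : (Fin n → ℝ) →ₗ[ℝ] Y n where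
  toFun v := ((0, 0), 0, 0, v, 0, 0, 0)
  map_add' a b := by simp [Prod.ext_iff]
  map_smul' c a := by simp [Prod.ext_iff]

def ins4 : (Fin n → ℝ) →ₗ[ℝ] Y n where
  toFun v := ((0, 0), 0, 0, 0, v, 0, 0)
  map_add' a b := by simp [Prod.ext_iff]
  map_smul' c a := by simp [Prod.ext_iff]

def ins5 : (Fin n → ℝ) →ₗ[ℝ] Y n where
  toFun v := ((0, 0), 0, 0, 0, 0, v, 0)
  map_add' a b := by simp [Prod.ext_iff]
  map_smul' c a := by simp [Prod.ext_iff]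

def ins6 : (Fin n → ℝ) →ₗ[ℝ] Y n where
  toFun v := ((0, 0), 0, 0, 0, 0, 0, v)
  map_add' a b := by simp [Prod.ext_iff]
  map_smul' c a := by simp [Prod.ext_iff]

theorem apply_ins (L : Y n →L[ℝ] ℝ) (ι : (Fin n → ℝ) →ₗ[ℝ] Y n) (v : Fin n → ℝ) :
    L (ι v) = ∑ α : Fin n, v α * L (ι (Pi.single α 1)) := by
  have h := LinearMap.pi_apply_eq_sum_univ
    ((L : Y n →ₗ[ℝ] ℝ).comp ι) v
  have hs : ∀ α : Fin n, (Pi.single α 1 : Fin n → ℝ) = fun j => if α = j then 1 else 0 :=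
    fun α => funext fun j => by by_cases hj : α = j <;> simp [Pi.single_apply, hj, eq_comm]
  simp only [smul_eq_mul, LinearMap.comp_apply, ContinuousLinearMap.coe_coe] at h
  rw [h]
  refine Finset.sum_congr rfl fun α _ => ?_
  rw [hs α]

theorem split7 (v0 v1 v2 v3 v4 v5 : Fin n → ℝ) :
    (((0, 0), v0, v1, v2, v3, v4, v5) : Y n)
      = ins1 v0 + ins2 v1 + ins3 v2 + ins4 v3 + ins5 v4 + ins6 v5 := by
  simp [ins1, ins2, ins3, ins4, ins5, ins6, Prod.ext_iff]

/-! ### partial derivatives of the density as directional derivatives -/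

theorem pHx_eq {H : Jet2Fun n} (hH : Differentiable ℝ (Gu H)) (α : Fin n) (y : Y n) :
    Gu (pHx H α) y = fderiv ℝ (Gu H) y (ins1 (Pi.single α 1)) := by
  have hγ : HasDerivAt (fun s : ℝ =>
      ((y.1, Function.update y.2.1 α s, y.2.2.1, y.2.2.2.1, y.2.2.2.2.1, y.2.2.2.2.2.1,
        y.2.2.2.2.2.2) : Y n)) (ins1 (Pi.single α 1)) (y.2.1 α) := by
    exact (hasDerivAt_const _ _).prodMk ((hasDerivAt_update _ _ _).prodMk (hasDerivAt_const _ _))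
  have key := ((hH _).hasFDerivAt.comp_hasDerivAt (y.2.1 α) hγ).deriv
  have hy : ((y.1, Function.update y.2.1 α (y.2.1 α), y.2.2.1, y.2.2.2.1, y.2.2.2.2.1,
      y.2.2.2.2.2.1, y.2.2.2.2.2.2) : Y n) = y := by
    simp [Function.update_eq_self]
  rw [hy] at key
  exact key

theorem pHx10_eq {H : Jet2Fun n} (hH : Differentiable ℝ (Gu H)) (α : Fin n) (y : Y n) :
    Gu (pHx10 H α) y = fderiv ℝ (Gu H) y (ins2 (Pi.single α 1)) := by
  have hγ : HasDerivAt (fun s : ℝ =>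
      ((y.1, y.2.1, Function.update y.2.2.1 α s, y.2.2.2.1, y.2.2.2.2.1, y.2.2.2.2.2.1,
        y.2.2.2.2.2.2) : Y n)) (ins2 (Pi.single α 1)) (y.2.2.1 α) :=
    (hasDerivAt_const _ _).prodMk ((hasDerivAt_const _ _).prodMk
      ((hasDerivAt_update _ _ _).prodMk (hasDerivAt_const _ _)))
  have key := ((hH _).hasFDerivAt.comp_hasDerivAt (y.2.2.1 α) hγ).deriv
  have hy : ((y.1, y.2.1, Function.update y.2.2.1 α (y.2.2.1 α), y.2.2.2.1, y.2.2.2.2.1,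
      y.2.2.2.2.2.1, y.2.2.2.2.2.2) : Y n) = y := by simp [Function.update_eq_self]
  rw [hy] at key
  exact key

theorem pHx01_eq {H : Jet2Fun n} (hH : Differentiable ℝ (Gu H)) (α : Fin n) (y : Y n) :
    Gu (pHx01 H α) y = fderiv ℝ (Gu H) y (ins3 (Pi.single α 1)) := by
  have hγ : HasDerivAt (fun s : ℝ =>
      ((y.1, y.2.1, y.2.2.1, Function.update y.2.2.2.1 α s, y.2.2.2.2.1, y.2.2.2.2.2.1,
        y.2.2.2.2.2.2) : Y n)) (ins3 (Pi.single α 1)) (y.2.2.2.1 α) :=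
    (hasDerivAt_const _ _).prodMk ((hasDerivAt_const _ _).prodMk ((hasDerivAt_const _ _).prodMk
      ((hasDerivAt_update _ _ _).prodMk (hasDerivAt_const _ _))))
  have key := ((hH _).hasFDerivAt.comp_hasDerivAt (y.2.2.2.1 α) hγ).deriv
  have hy : ((y.1, y.2.1, y.2.2.1, Function.update y.2.2.2.1 α (y.2.2.2.1 α), y.2.2.2.2.1,
      y.2.2.2.2.2.1, y.2.2.2.2.2.2) : Y n) = y := by simp [Function.update_eq_self]
  rw [hy] at key
  exact key

theorem pHx20_eq {H : Jet2Fun n} (hH : Differentiable ℝ (Gu H)) (α : Fin n) (y : Y n) :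
    Gu (pHx20 H α) y = fderiv ℝ (Gu H) y (ins4 (Pi.single α 1)) := by
  have hγ : HasDerivAt (fun s : ℝ =>
      ((y.1, y.2.1, y.2.2.1, y.2.2.2.1, Function.update y.2.2.2.2.1 α s, y.2.2.2.2.2.1,
        y.2.2.2.2.2.2) : Y n)) (ins4 (Pi.single α 1)) (y.2.2.2.2.1 α) :=
    (hasDerivAt_const _ _).prodMk ((hasDerivAt_const _ _).prodMk ((hasDerivAt_const _ _).prodMk
      ((hasDerivAt_const _ _).prodMk ((hasDerivAt_update _ _ _).prodMk (hasDerivAt_const _ _)))))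
  have key := ((hH _).hasFDerivAt.comp_hasDerivAt (y.2.2.2.2.1 α) hγ).deriv
  have hy : ((y.1, y.2.1, y.2.2.1, y.2.2.2.1, Function.update y.2.2.2.2.1 α (y.2.2.2.2.1 α),
      y.2.2.2.2.2.1, y.2.2.2.2.2.2) : Y n) = y := by simp [Function.update_eq_self]
  rw [hy] at key
  exact key

theorem pHx11_eq {H : Jet2Fun n} (hH : Differentiable ℝ (Gu H)) (α : Fin n) (y : Y n) :
    Gu (pHx11 H α) y = fderiv ℝ (Gu H) y (ins5 (Pi.single α 1)) := by
  have hγ : HasDerivAt (fun s : ℝ =>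
      ((y.1, y.2.1, y.2.2.1, y.2.2.2.1, y.2.2.2.2.1, Function.update y.2.2.2.2.2.1 α s,
        y.2.2.2.2.2.2) : Y n)) (ins5 (Pi.single α 1)) (y.2.2.2.2.2.1 α) :=
    (hasDerivAt_const _ _).prodMk ((hasDerivAt_const _ _).prodMk ((hasDerivAt_const _ _).prodMk
      ((hasDerivAt_const _ _).prodMk ((hasDerivAt_const _ _).prodMk
        ((hasDerivAt_update _ _ _).prodMk (hasDerivAt_const _ _))))))
  have key := ((hH _).hasFDerivAt.comp_hasDerivAt (y.2.2.2.2.2.1 α) hγ).deriv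
  have hy : ((y.1, y.2.1, y.2.2.1, y.2.2.2.1, y.2.2.2.2.1,
      Function.update y.2.2.2.2.2.1 α (y.2.2.2.2.2.1 α),
      y.2.2.2.2.2.2) : Y n) = y := by simp [Function.update_eq_self]
  rw [hy] at key
  exact key

theorem pHx02_eq {H : Jet2Fun n} (hH : Differentiable ℝ (Gu H)) (α : Fin n) (y : Y n) :
    Gu (pHx02 H α) y = fderiv ℝ (Gu H) y (ins6 (Pi.single α 1)) := by
  have hγ : HasDerivAt (fun s : ℝ =>
      ((y.1, y.2.1, y.2.2.1, y.2.2.2.1, y.2.2.2.2.1, y.2.2.2.2.2.1,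
        Function.update y.2.2.2.2.2.2 α s) : Y n)) (ins6 (Pi.single α 1)) (y.2.2.2.2.2.2 α) :=
    (hasDerivAt_const _ _).prodMk ((hasDerivAt_const _ _).prodMk ((hasDerivAt_const _ _).prodMk
      ((hasDerivAt_const _ _).prodMk ((hasDerivAt_const _ _).prodMk
        ((hasDerivAt_const _ _).prodMk (hasDerivAt_update _ _ _))))))
  have key := ((hH _).hasFDerivAt.comp_hasDerivAt (y.2.2.2.2.2.2 α) hγ).deriv
  have hy : ((y.1, y.2.1, y.2.2.1, y.2.2.2.1, y.2.2.2.2.1, y.2.2.2.2.2.1,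
      Function.update y.2.2.2.2.2.2 α (y.2.2.2.2.2.2 α)) : Y n) = y := by
    simp [Function.update_eq_self]
  rw [hy] at key
  exact key

/-! ### the jet map of the field -/

theorem pd_prod {F G : Type*} [NormedAddCommGroup F] [NormedSpace ℝ F]
    [NormedAddCommGroup G] [NormedSpace ℝ G] (v : X) {g : X → F} {h : X → G} {p : X}
    (hg : DifferentiableAt ℝ g p) (hh : DifferentiableAt ℝ h p) :
    pd v (fun q => (g q, h q)) p = (pd v g p, pd v h p) := by
  have := (hg.hasFDerivAt.prodMk hh.hasFDerivAt).fderiv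
  simp only [pd, this, ContinuousLinearMap.prod_apply]

variable (x : ℝ → ℝ → ℝ → Fin n → ℝ)

def fx : ℝ × ℝ × ℝ → Fin n → ℝ := fun q => x q.1 q.2.1 q.2.2

def J : ℝ × ℝ × ℝ → Y n := fun p =>
  ((p.2.1, p.2.2), fx x p, pd e2 (fx x) p, pd e3 (fx x) p,
    pd e2 (pd e2 (fx x)) p, pd e2 (pd e3 (fx x)) p, pd e3 (pd e3 (fx x)) p)

def projC : (ℝ × ℝ × ℝ) →L[ℝ] ℝ × ℝ :=
  ((ContinuousLinearMap.fst ℝ ℝ ℝ).comp (ContinuousLinearMap.snd ℝ ℝ (ℝ × ℝ))).prod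
    ((ContinuousLinearMap.snd ℝ ℝ ℝ).comp (ContinuousLinearMap.snd ℝ ℝ (ℝ × ℝ)))

theorem J_contDiff (hx : ContDiff ℝ (⊤ : ℕ∞) (fx x)) : ContDiff ℝ (⊤ : ℕ∞) (J x) := by
  refine ContDiff.prodMk ?_ (hx.prodMk ((pd_contDiff e2 hx).prodMk ((pd_contDiff e3 hx).prodMk
    ((pd_contDiff e2 (pd_contDiff e2 hx)).prodMk ((pd_contDiff e2 (pd_contDiff e3 hx)).prodMk
      (pd_contDiff e3 (pd_contDiff e3 hx)))))))
  exact projC.contDiff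

theorem atJet_eq (hx : ContDiff ℝ (⊤ : ℕ∞) (fx x)) (G : Jet2Fun n) (t z1 z2 : ℝ) :
    atJet x G t z1 z2 = Gu G (J x (t, z1, z2)) := by
  have hd : Differentiable ℝ (fx x) := hx.differentiable (by simp)
  have c2 : ∀ t a b, vD1 (x t) a b = pd e2 (fx x) (t, a, b) :=
    vD1_eq_pd hd x (fun _ _ _ => rfl)
  have c3 : ∀ t a b, vD2 (x t) a b = pd e3 (fx x) (t, a, b) :=
    vD2_eq_pd hd x (fun _ _ _ => rfl)
  have hd2 : Differentiable ℝ (pd e2 (fx x)) := (pd_contDiff e2 hx).differentiable (by simp)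
  have hd3 : Differentiable ℝ (pd e3 (fx x)) := (pd_contDiff e3 hx).differentiable (by simp)
  have c4 : ∀ t a b, vD1 (vD1 (x t)) a b = pd e2 (pd e2 (fx x)) (t, a, b) :=
    vD1_eq_pd hd2 (fun t => vD1 (x t)) c2
  have c5 : ∀ t a b, vD1 (vD2 (x t)) a b = pd e2 (pd e3 (fx x)) (t, a, b) :=
    vD1_eq_pd hd3 (fun t => vD2 (x t)) c3
  have c6 : ∀ t a b, vD2 (vD2 (x t)) a b = pd e3 (pd e3 (fx x)) (t, a, b) :=
    vD2_eq_pd hd3 (fun t => vD2 (x t)) c3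
  simp only [atJet, Gu, J]
  rw [c2, c3, c4, c5, c6]
  rfl

theorem xDt_eq (hx : ContDiff ℝ (⊤ : ℕ∞) (fx x)) (t z1 z2 : ℝ) :
    xDt x t z1 z2 = pd e1 (fx x) (t, z1, z2) :=
  (hasDerivAt_slice0 ((hx.differentiable (by simp)) _)).deriv

theorem vD1_xDt_eq (hx : ContDiff ℝ (⊤ : ℕ∞) (fx x)) (t z1 z2 : ℝ) :
    vD1 (xDt x t) z1 z2 = pd e2 (pd e1 (fx x)) (t, z1, z2) :=
  vD1_eq_pd ((pd_contDiff e1 hx).differentiable (by simp)) (xDt x) (xDt_eq x hx) t z1 z2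

theorem vD2_xDt_eq (hx : ContDiff ℝ (⊤ : ℕ∞) (fx x)) (t z1 z2 : ℝ) :
    vD2 (xDt x t) z1 z2 = pd e3 (pd e1 (fx x)) (t, z1, z2) :=
  vD2_eq_pd ((pd_contDiff e1 hx).differentiable (by simp)) (xDt x) (xDt_eq x hx) t z1 z2

/-- the density evaluated on the jet, as a function on `ℝ³`. -/
def Af (G : Jet2Fun n) : ℝ × ℝ × ℝ → ℝ := fun p => Gu G (J x p)

theorem Af_contDiff (hx : ContDiff ℝ (⊤ : ℕ∞) (fx x)) {G : Jet2Fun n}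
    (hG : ContDiff ℝ (⊤ : ℕ∞) (Gu G)) : ContDiff ℝ (⊤ : ℕ∞) (Af x G) :=
  hG.comp (J_contDiff x hx)

theorem GuPHx10 {H : Jet2Fun n} (hH : Differentiable ℝ (Gu H)) (α : Fin n) :
    Gu (pHx10 H α) = pd (ins2 (Pi.single α 1)) (Gu H) :=
  funext fun y => pHx10_eq hH α y

theorem GuPHx {H : Jet2Fun n} (hH : Differentiable ℝ (Gu H)) (α : Fin n) :
    Gu (pHx H α) = pd (ins1 (Pi.single α 1)) (Gu H) := funext fun y => pHx_eq hH α y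

theorem GuPHx01 {H : Jet2Fun n} (hH : Differentiable ℝ (Gu H)) (α : Fin n) :
    Gu (pHx01 H α) = pd (ins3 (Pi.single α 1)) (Gu H) := funext fun y => pHx01_eq hH α y

theorem GuPHx20 {H : Jet2Fun n} (hH : Differentiable ℝ (Gu H)) (α : Fin n) :
    Gu (pHx20 H α) = pd (ins4 (Pi.single α 1)) (Gu H) := funext fun y => pHx20_eq hH α y

theorem GuPHx11 {H : Jet2Fun n} (hH : Differentiable ℝ (Gu H)) (α : Fin n) :
    Gu (pHx11 H α) = pd (ins5 (Pi.single α 1)) (Gu H) := funext fun y => pHx11_eq hH α y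

theorem GuPHx02 {H : Jet2Fun n} (hH : Differentiable ℝ (Gu H)) (α : Fin n) :
    Gu (pHx02 H α) = pd (ins6 (Pi.single α 1)) (Gu H) := funext fun y => pHx02_eq hH α y

/-- master chain rule in time. -/
theorem timeDeriv (hx : ContDiff ℝ (⊤ : ℕ∞) (fx x)) {H : Jet2Fun n}
    (hH : ContDiff ℝ (⊤ : ℕ∞) (Gu H)) (p : ℝ × ℝ × ℝ) :
    pd e1 (Af x H) p =
      ∑ α : Fin n,
        (Af x (pHx H α) p * pd e1 (fx x) p α
          + Af x (pHx10 H α) p * pd e2 (pd e1 (fx x)) p α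
          + Af x (pHx01 H α) p * pd e3 (pd e1 (fx x)) p α
          + Af x (pHx20 H α) p * pd e2 (pd e2 (pd e1 (fx x))) p α
          + Af x (pHx11 H α) p * pd e2 (pd e3 (pd e1 (fx x))) p α
          + Af x (pHx02 H α) p * pd e3 (pd e3 (pd e1 (fx x))) p α) := by
  set f := fx x with hf
  have hdf : Differentiable ℝ f := hx.differentiable (by simp)
  have hdH : Differentiable ℝ (Gu H) := hH.differentiable (by simp)
  have hJ : ContDiff ℝ (⊤ : ℕ∞) (J x) := J_contDiff x hx
  have hdJ : Differentiable ℝ (J x) := hJ.differentiable (by simp)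
  -- step 1: chain rule
  have step1 : pd e1 (Af x H) p = fderiv ℝ (Gu H) (J x p) (pd e1 (J x) p) := by
    have hcomp := fderiv_comp p (hdH (J x p)) (hdJ p)
    have : Af x H = (Gu H) ∘ (J x) := rfl
    rw [this]
    show fderiv ℝ (Gu H ∘ J x) p e1 = _
    rw [hcomp]
    rfl
  -- step 2: derivative of the jet map in direction e1
  have hc0 : pd e1 (fun p : ℝ × ℝ × ℝ => (p.2.1, p.2.2)) p = ((0 : ℝ), (0 : ℝ)) := by
    have h1 : (fun p : ℝ × ℝ × ℝ => (p.2.1, p.2.2)) = ⇑projC := rfl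
    rw [pd, h1, ContinuousLinearMap.fderiv]
    simp [projC, e1]
  have step2 : pd e1 (J x) p =
      (((0 : ℝ), (0 : ℝ)), pd e1 f p, pd e1 (pd e2 f) p, pd e1 (pd e3 f) p,
        pd e1 (pd e2 (pd e2 f)) p, pd e1 (pd e2 (pd e3 f)) p,
        pd e1 (pd e3 (pd e3 f)) p) := by
    have d2 : Differentiable ℝ (pd e2 f) := (pd_contDiff e2 hx).differentiable (by simp)
    have d3 : Differentiable ℝ (pd e3 f) := (pd_contDiff e3 hx).differentiable (by simp)
    have d22 : Differentiable ℝ (pd e2 (pd e2 f)) :=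
      (pd_contDiff e2 (pd_contDiff e2 hx)).differentiable (by simp)
    have d23 : Differentiable ℝ (pd e2 (pd e3 f)) :=
      (pd_contDiff e2 (pd_contDiff e3 hx)).differentiable (by simp)
    have d33 : Differentiable ℝ (pd e3 (pd e3 f)) :=
      (pd_contDiff e3 (pd_contDiff e3 hx)).differentiable (by simp)
    have hC : DifferentiableAt ℝ (fun p : ℝ × ℝ × ℝ => (p.2.1, p.2.2)) p :=
      projC.differentiableAt
    rw [show J x = fun p : ℝ × ℝ × ℝ =>
      ((p.2.1, p.2.2), fx x p, pd e2 (fx x) p, pd e3 (fx x) p,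
        pd e2 (pd e2 (fx x)) p, pd e2 (pd e3 (fx x)) p, pd e3 (pd e3 (fx x)) p) from rfl]
    rw [pd_prod e1 hC (((hdf p).prodMk ((d2 p).prodMk ((d3 p).prodMk
      ((d22 p).prodMk ((d23 p).prodMk (d33 p)))))))]
    rw [pd_prod e1 (hdf p) ((d2 p).prodMk ((d3 p).prodMk ((d22 p).prodMk ((d23 p).prodMk (d33 p)))))]
    rw [pd_prod e1 (d2 p) ((d3 p).prodMk ((d22 p).prodMk ((d23 p).prodMk (d33 p))))]
    rw [pd_prod e1 (d3 p) ((d22 p).prodMk ((d23 p).prodMk (d33 p)))]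
    rw [pd_prod e1 (d22 p) ((d23 p).prodMk (d33 p))]
    rw [pd_prod e1 (d23 p) (d33 p)]
    rw [hc0]
  -- step 3: commute e1 inward
  have sw2 : pd e1 (pd e2 f) = pd e2 (pd e1 f) := funext fun q => pd_comm hx e1 e2 q
  have sw3 : pd e1 (pd e3 f) = pd e3 (pd e1 f) := funext fun q => pd_comm hx e1 e3 q
  have sw22 : pd e1 (pd e2 (pd e2 f)) p = pd e2 (pd e2 (pd e1 f)) p := by
    rw [pd_comm (pd_contDiff e2 hx) e1 e2 p, sw2]
  have sw23 : pd e1 (pd e2 (pd e3 f)) p = pd e2 (pd e3 (pd e1 f)) p := by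
    rw [pd_comm (pd_contDiff e3 hx) e1 e2 p, sw3]
  have sw33 : pd e1 (pd e3 (pd e3 f)) p = pd e3 (pd e3 (pd e1 f)) p := by
    rw [pd_comm (pd_contDiff e3 hx) e1 e3 p, sw3]
  rw [step1, step2, sw22, sw23, sw33, congrFun sw2 p, congrFun sw3 p]
  -- step 4: expand the directional derivative slotwise
  set L := fderiv ℝ (Gu H) (J x p) with hL
  set v0 := pd e1 f p
  set v1 := pd e2 (pd e1 f) p
  set v2 := pd e3 (pd e1 f) p
  set v3 := pd e2 (pd e2 (pd e1 f)) p
  set v4 := pd e2 (pd e3 (pd e1 f)) p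
  set v5 := pd e3 (pd e3 (pd e1 f)) p
  rw [split7 v0 v1 v2 v3 v4 v5]
  rw [map_add, map_add, map_add, map_add, map_add]
  rw [apply_ins L ins1 v0, apply_ins L ins2 v1, apply_ins L ins3 v2, apply_ins L ins4 v3,
    apply_ins L ins5 v4, apply_ins L ins6 v5]
  have r1 : ∀ α, L (ins1 (Pi.single α 1)) = Af x (pHx H α) p := by
    intro α; rw [show Af x (pHx H α) p = Gu (pHx H α) (J x p) from rfl, pHx_eq hdH]
  have r2 : ∀ α, L (ins2 (Pi.single α 1)) = Af x (pHx10 H α) p := by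
    intro α; rw [show Af x (pHx10 H α) p = Gu (pHx10 H α) (J x p) from rfl, pHx10_eq hdH]
  have r3 : ∀ α, L (ins3 (Pi.single α 1)) = Af x (pHx01 H α) p := by
    intro α; rw [show Af x (pHx01 H α) p = Gu (pHx01 H α) (J x p) from rfl, pHx01_eq hdH]
  have r4 : ∀ α, L (ins4 (Pi.single α 1)) = Af x (pHx20 H α) p := by
    intro α; rw [show Af x (pHx20 H α) p = Gu (pHx20 H α) (J x p) from rfl, pHx20_eq hdH]
  have r5 : ∀ α, L (ins5 (Pi.single α 1)) = Af x (pHx11 H α) p := by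
    intro α; rw [show Af x (pHx11 H α) p = Gu (pHx11 H α) (J x p) from rfl, pHx11_eq hdH]
  have r6 : ∀ α, L (ins6 (Pi.single α 1)) = Af x (pHx02 H α) p := by
    intro α; rw [show Af x (pHx02 H α) p = Gu (pHx02 H α) (J x p) from rfl, pHx02_eq hdH]
  simp only [r1, r2, r3, r4, r5, r6]
  rw [← Finset.sum_add_distrib, ← Finset.sum_add_distrib, ← Finset.sum_add_distrib,
    ← Finset.sum_add_distrib, ← Finset.sum_add_distrib]
  refine Finset.sum_congr rfl fun α _ => ?_
  ring

/-! ### pd algebra -/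

theorem pd_apply {g : X → Fin n → ℝ} {p : X} (hg : DifferentiableAt ℝ g p) (v : X)
    (α : Fin n) : pd v (fun q => g q α) p = pd v g p α := by
  have h := ((ContinuousLinearMap.proj (R := ℝ) (φ := fun _ : Fin n => ℝ)
    α).hasFDerivAt.comp p hg.hasFDerivAt).fderiv
  show fderiv ℝ (fun q => g q α) p v = _
  have hfun : (fun q => g q α) = (ContinuousLinearMap.proj (R := ℝ)
      (φ := fun _ : Fin n => ℝ) α) ∘ g := rfl
  rw [hfun, h]
  rfl

theorem pd_mul {g h : X → ℝ} {p : X} (hg : DifferentiableAt ℝ g p)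
    (hh : DifferentiableAt ℝ h p) (v : X) :
    pd v (fun q => g q * h q) p = pd v g p * h p + g p * pd v h p := by
  show fderiv ℝ (fun q => g q * h q) p v = _
  rw [fderiv_fun_mul hg hh]
  simp [pd, mul_comm]
  ring

theorem pd_add {g h : X → ℝ} {p : X} (hg : DifferentiableAt ℝ g p)
    (hh : DifferentiableAt ℝ h p) (v : X) :
    pd v (fun q => g q + h q) p = pd v g p + pd v h p := by
  show fderiv ℝ (fun q => g q + h q) p v = _
  rw [fderiv_fun_add hg hh]; rfl

theorem pd_sub {g h : X → ℝ} {p : X} (hg : DifferentiableAt ℝ g p)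
    (hh : DifferentiableAt ℝ h p) (v : X) :
    pd v (fun q => g q - h q) p = pd v g p - pd v h p := by
  show fderiv ℝ (fun q => g q - h q) p v = _
  rw [fderiv_fun_sub hg hh]; rfl

theorem pd_sum {ι : Type*} (s : Finset ι) {g : ι → X → ℝ} {p : X}
    (hg : ∀ i ∈ s, DifferentiableAt ℝ (g i) p) (v : X) :
    pd v (fun q => ∑ i ∈ s, g i q) p = ∑ i ∈ s, pd v (g i) p := by
  show fderiv ℝ (fun q => ∑ i ∈ s, g i q) p v = _
  rw [fderiv_fun_sum hg]
  simp [pd, ContinuousLinearMap.sum_apply]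

/-! ### integral helpers -/

theorem iter_eq_set {k : ℝ → ℝ → ℝ} (hk : Continuous fun z : ℝ × ℝ => k z.1 z.2)
    {L1 L2 : ℝ} (h1 : 0 ≤ L1) (h2 : 0 ≤ L2) :
    ∫ z1 in (0:ℝ)..L1, ∫ z2 in (0:ℝ)..L2, k z1 z2
      = ∫ z in Set.Ioc (0:ℝ) L1 ×ˢ Set.Ioc (0:ℝ) L2, k z.1 z.2 := by
  have hint : IntegrableOn (fun z : ℝ × ℝ => k z.1 z.2)
      (Set.Ioc (0:ℝ) L1 ×ˢ Set.Ioc (0:ℝ) L2) := by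
    refine (hk.continuousOn.integrableOn_compact ((isCompact_Icc (a := (0:ℝ)) (b := L1)).prod
      (isCompact_Icc (a := (0:ℝ)) (b := L2)))).mono_set ?_
    exact Set.prod_mono Set.Ioc_subset_Icc_self Set.Ioc_subset_Icc_self
  rw [MeasureTheory.Measure.volume_eq_prod] at hint
  rw [show (volume : Measure (ℝ × ℝ)) = (volume : Measure ℝ).prod (volume : Measure ℝ) from rfl,
    MeasureTheory.setIntegral_prod _ hint]
  rw [intervalIntegral.integral_of_le h1]
  refine MeasureTheory.setIntegral_congr_fun measurableSet_Ioc fun z1 _ => ?_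
  rw [intervalIntegral.integral_of_le h2]

theorem iter_swap {k : ℝ → ℝ → ℝ} (hk : Continuous fun z : ℝ × ℝ => k z.1 z.2)
    {L1 L2 : ℝ} (h1 : 0 ≤ L1) (h2 : 0 ≤ L2) :
    ∫ z1 in (0:ℝ)..L1, ∫ z2 in (0:ℝ)..L2, k z1 z2
      = ∫ z2 in (0:ℝ)..L2, ∫ z1 in (0:ℝ)..L1, k z1 z2 := by
  have hint : Integrable (Function.uncurry k)
      ((volume.restrict (Set.Ioc (0:ℝ) L1)).prod (volume.restrict (Set.Ioc (0:ℝ) L2))) := by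
    rw [MeasureTheory.Measure.prod_restrict]
    refine ((hk.continuousOn.integrableOn_compact ((isCompact_Icc (a := (0:ℝ)) (b := L1)).prod
      (isCompact_Icc (a := (0:ℝ)) (b := L2)))).mono_set (Set.prod_mono Set.Ioc_subset_Icc_self
      Set.Ioc_subset_Icc_self)).congr_fun (fun z _ => rfl) ?_
    exact (measurableSet_Ioc.prod measurableSet_Ioc)
  have := MeasureTheory.integral_integral_swap hint
  rw [intervalIntegral.integral_of_le h1, intervalIntegral.integral_of_le h2]
  simp only [intervalIntegral.integral_of_le h1, intervalIntegral.integral_of_le h2]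
  exact this

/-! ### the four spatial densities -/

variable (H : Jet2Fun n)

def Efun : ℝ × ℝ × ℝ → ℝ := fun p =>
  ∑ α : Fin n,
    (Af x (pHx H α) p - pd e2 (Af x (pHx10 H α)) p - pd e3 (Af x (pHx01 H α)) p
      + pd e2 (pd e2 (Af x (pHx20 H α))) p + pd e2 (pd e3 (Af x (pHx11 H α))) p
      + pd e3 (pd e3 (Af x (pHx02 H α))) p) * pd e1 (fx x) p α

def Pfun : ℝ × ℝ × ℝ → ℝ := fun p =>
  (∑ α : Fin n,
    (Af x (pHx10 H α) p - pd e3 (Af x (pHx11 H α)) p - pd e2 (Af x (pHx20 H α)) p)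
      * pd e1 (fx x) p α)
  + ∑ α : Fin n, Af x (pHx20 H α) p * pd e2 (pd e1 (fx x)) p α

def Qfun : ℝ × ℝ × ℝ → ℝ := fun p =>
  (∑ α : Fin n,
    (Af x (pHx01 H α) p - pd e2 (Af x (pHx11 H α)) p - pd e3 (Af x (pHx02 H α)) p)
      * pd e1 (fx x) p α)
  + ∑ α : Fin n, Af x (pHx02 H α) p * pd e3 (pd e1 (fx x)) p α

def Cfun : ℝ × ℝ × ℝ → ℝ := fun p =>
  ∑ α : Fin n, Af x (pHx11 H α) p * pd e1 (fx x) p α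

/-- the pointwise decomposition identity. -/
theorem main_identity (hx : ContDiff ℝ (⊤ : ℕ∞) (fx x))
    (hH : ContDiff ℝ (⊤ : ℕ∞) (Gu H)) (p : ℝ × ℝ × ℝ) :
    pd e1 (Af x H) p =
      Efun x H p + pd e2 (Pfun x H) p + pd e3 (Qfun x H) p + pd e2 (pd e3 (Cfun x H)) p := by
  have hdH : Differentiable ℝ (Gu H) := hH.differentiable (by simp)
  -- smoothness of the atoms
  have hA0 : ∀ α, ContDiff ℝ (⊤ : ℕ∞) (Af x (pHx H α)) := fun α => by
    refine Af_contDiff x hx ?_; rw [GuPHx hdH]; exact pd_contDiff _ hH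
  have hA10 : ∀ α, ContDiff ℝ (⊤ : ℕ∞) (Af x (pHx10 H α)) := fun α => by
    refine Af_contDiff x hx ?_; rw [GuPHx10 hdH]; exact pd_contDiff _ hH
  have hA01 : ∀ α, ContDiff ℝ (⊤ : ℕ∞) (Af x (pHx01 H α)) := fun α => by
    refine Af_contDiff x hx ?_; rw [GuPHx01 hdH]; exact pd_contDiff _ hH
  have hA20 : ∀ α, ContDiff ℝ (⊤ : ℕ∞) (Af x (pHx20 H α)) := fun α => by
    refine Af_contDiff x hx ?_; rw [GuPHx20 hdH]; exact pd_contDiff _ hH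
  have hA11 : ∀ α, ContDiff ℝ (⊤ : ℕ∞) (Af x (pHx11 H α)) := fun α => by
    refine Af_contDiff x hx ?_; rw [GuPHx11 hdH]; exact pd_contDiff _ hH
  have hA02 : ∀ α, ContDiff ℝ (⊤ : ℕ∞) (Af x (pHx02 H α)) := fun α => by
    refine Af_contDiff x hx ?_; rw [GuPHx02 hdH]; exact pd_contDiff _ hH
  have hW : ContDiff ℝ (⊤ : ℕ∞) (pd e1 (fx x)) := pd_contDiff e1 hx
  have D : ∀ {g : ℝ × ℝ × ℝ → ℝ}, ContDiff ℝ (⊤ : ℕ∞) g → ∀ q,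
      DifferentiableAt ℝ g q := fun h q => h.differentiable (by simp) q
  have DW : ∀ q, DifferentiableAt ℝ (pd e1 (fx x)) q :=
    fun q => hW.differentiable (by simp) q
  have DW2 : ∀ q, DifferentiableAt ℝ (pd e2 (pd e1 (fx x))) q :=
    fun q => (pd_contDiff e2 hW).differentiable (by simp) q
  have DW3 : ∀ q, DifferentiableAt ℝ (pd e3 (pd e1 (fx x))) q :=
    fun q => (pd_contDiff e3 hW).differentiable (by simp) q
  have DWα : ∀ α q, DifferentiableAt ℝ (fun q => pd e1 (fx x) q α) q := fun α q =>
    ((ContinuousLinearMap.proj (R := ℝ) (φ := fun _ : Fin n => ℝ) α).differentiable.comp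
      (hW.differentiable (by simp))) q
  have DW2α : ∀ α q, DifferentiableAt ℝ (fun q => pd e2 (pd e1 (fx x)) q α) q := fun α q =>
    ((ContinuousLinearMap.proj (R := ℝ) (φ := fun _ : Fin n => ℝ) α).differentiable.comp
      ((pd_contDiff e2 hW).differentiable (by simp))) q
  have DW3α : ∀ α q, DifferentiableAt ℝ (fun q => pd e3 (pd e1 (fx x)) q α) q := fun α q =>
    ((ContinuousLinearMap.proj (R := ℝ) (φ := fun _ : Fin n => ℝ) α).differentiable.comp
      ((pd_contDiff e3 hW).differentiable (by simp))) q
  -- expansion of pd e2 Pfun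
  have hP : pd e2 (Pfun x H) p =
      (∑ α : Fin n,
        ((pd e2 (Af x (pHx10 H α)) p - pd e2 (pd e3 (Af x (pHx11 H α))) p
            - pd e2 (pd e2 (Af x (pHx20 H α))) p) * pd e1 (fx x) p α
          + (Af x (pHx10 H α) p - pd e3 (Af x (pHx11 H α)) p - pd e2 (Af x (pHx20 H α)) p)
            * pd e2 (pd e1 (fx x)) p α))
      + ∑ α : Fin n,
        (pd e2 (Af x (pHx20 H α)) p * pd e2 (pd e1 (fx x)) p α
          + Af x (pHx20 H α) p * pd e2 (pd e2 (pd e1 (fx x))) p α) := by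
    have hd1 : ∀ α q, DifferentiableAt ℝ (fun q =>
        (Af x (pHx10 H α) q - pd e3 (Af x (pHx11 H α)) q - pd e2 (Af x (pHx20 H α)) q)
          * pd e1 (fx x) q α) q := fun α q =>
      (((D (hA10 α) q).sub (D (pd_contDiff e3 (hA11 α)) q)).sub
        (D (pd_contDiff e2 (hA20 α)) q)).mul (DWα α q)
    have hd2 : ∀ α q, DifferentiableAt ℝ (fun q =>
        Af x (pHx20 H α) q * pd e2 (pd e1 (fx x)) q α) q := fun α q =>
      (D (hA20 α) q).mul (DW2α α q)
    rw [show Pfun x H = fun q =>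
      (∑ α : Fin n,
        (Af x (pHx10 H α) q - pd e3 (Af x (pHx11 H α)) q - pd e2 (Af x (pHx20 H α)) q)
          * pd e1 (fx x) q α)
      + ∑ α : Fin n, Af x (pHx20 H α) q * pd e2 (pd e1 (fx x)) q α from rfl]
    rw [pd_add (DifferentiableAt.fun_sum (fun α _ => hd1 α p))
      (DifferentiableAt.fun_sum (fun α _ => hd2 α p))]
    rw [pd_sum Finset.univ (fun α _ => hd1 α p), pd_sum Finset.univ (fun α _ => hd2 α p)]
    congr 1
    · refine Finset.sum_congr rfl fun α _ => ?_
      rw [pd_mul (((D (hA10 α) p).fun_sub (D (pd_contDiff e3 (hA11 α)) p)).fun_sub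
          (D (pd_contDiff e2 (hA20 α)) p)) (DWα α p)]
      rw [pd_sub ((D (hA10 α) p).fun_sub (D (pd_contDiff e3 (hA11 α)) p))
        (D (pd_contDiff e2 (hA20 α)) p)]
      rw [pd_sub (D (hA10 α) p) (D (pd_contDiff e3 (hA11 α)) p)]
      rw [pd_apply (DW p) e2 α]
    · refine Finset.sum_congr rfl fun α _ => ?_
      rw [pd_mul (D (hA20 α) p) (DW2α α p), pd_apply (DW2 p) e2 α]
  -- expansion of pd e3 Qfun
  have hQ : pd e3 (Qfun x H) p =
      (∑ α : Fin n,
        ((pd e3 (Af x (pHx01 H α)) p - pd e2 (pd e3 (Af x (pHx11 H α))) p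
            - pd e3 (pd e3 (Af x (pHx02 H α))) p) * pd e1 (fx x) p α
          + (Af x (pHx01 H α) p - pd e2 (Af x (pHx11 H α)) p - pd e3 (Af x (pHx02 H α)) p)
            * pd e3 (pd e1 (fx x)) p α))
      + ∑ α : Fin n,
        (pd e3 (Af x (pHx02 H α)) p * pd e3 (pd e1 (fx x)) p α
          + Af x (pHx02 H α) p * pd e3 (pd e3 (pd e1 (fx x))) p α) := by
    have hd1 : ∀ α q, DifferentiableAt ℝ (fun q =>
        (Af x (pHx01 H α) q - pd e2 (Af x (pHx11 H α)) q - pd e3 (Af x (pHx02 H α)) q)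
          * pd e1 (fx x) q α) q := fun α q =>
      (((D (hA01 α) q).sub (D (pd_contDiff e2 (hA11 α)) q)).sub
        (D (pd_contDiff e3 (hA02 α)) q)).mul (DWα α q)
    have hd2 : ∀ α q, DifferentiableAt ℝ (fun q =>
        Af x (pHx02 H α) q * pd e3 (pd e1 (fx x)) q α) q := fun α q =>
      (D (hA02 α) q).mul (DW3α α q)
    rw [show Qfun x H = fun q =>
      (∑ α : Fin n,
        (Af x (pHx01 H α) q - pd e2 (Af x (pHx11 H α)) q - pd e3 (Af x (pHx02 H α)) q)
          * pd e1 (fx x) q α)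
      + ∑ α : Fin n, Af x (pHx02 H α) q * pd e3 (pd e1 (fx x)) q α from rfl]
    rw [pd_add (DifferentiableAt.fun_sum (fun α _ => hd1 α p))
      (DifferentiableAt.fun_sum (fun α _ => hd2 α p))]
    rw [pd_sum Finset.univ (fun α _ => hd1 α p), pd_sum Finset.univ (fun α _ => hd2 α p)]
    congr 1
    · refine Finset.sum_congr rfl fun α _ => ?_
      rw [pd_mul (((D (hA01 α) p).fun_sub (D (pd_contDiff e2 (hA11 α)) p)).fun_sub
          (D (pd_contDiff e3 (hA02 α)) p)) (DWα α p)]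
      rw [pd_sub ((D (hA01 α) p).fun_sub (D (pd_contDiff e2 (hA11 α)) p))
        (D (pd_contDiff e3 (hA02 α)) p)]
      rw [pd_sub (D (hA01 α) p) (D (pd_contDiff e2 (hA11 α)) p)]
      rw [pd_apply (DW p) e3 α]
      rw [pd_comm (hA11 α) e3 e2 p]
    · refine Finset.sum_congr rfl fun α _ => ?_
      rw [pd_mul (D (hA02 α) p) (DW3α α p), pd_apply (DW3 p) e3 α]
  -- expansion of pd e2 (pd e3 Cfun)
  have hC3 : pd e3 (Cfun x H) = fun q =>
      ∑ α : Fin n, (pd e3 (Af x (pHx11 H α)) q * pd e1 (fx x) q α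
        + Af x (pHx11 H α) q * pd e3 (pd e1 (fx x)) q α) := by
    funext q
    have hd : ∀ α q', DifferentiableAt ℝ
        (fun q => Af x (pHx11 H α) q * pd e1 (fx x) q α) q' := fun α q' =>
      (D (hA11 α) q').mul (DWα α q')
    rw [show Cfun x H = fun q => ∑ α : Fin n, Af x (pHx11 H α) q * pd e1 (fx x) q α from rfl]
    rw [pd_sum Finset.univ (fun α _ => hd α q)]
    refine Finset.sum_congr rfl fun α _ => ?_
    rw [pd_mul (D (hA11 α) q) (DWα α q), pd_apply (DW q) e3 α]
  have hC : pd e2 (pd e3 (Cfun x H)) p =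
      ∑ α : Fin n, (pd e2 (pd e3 (Af x (pHx11 H α))) p * pd e1 (fx x) p α
        + pd e3 (Af x (pHx11 H α)) p * pd e2 (pd e1 (fx x)) p α
        + pd e2 (Af x (pHx11 H α)) p * pd e3 (pd e1 (fx x)) p α
        + Af x (pHx11 H α) p * pd e2 (pd e3 (pd e1 (fx x))) p α) := by
    rw [hC3]
    have hd1 : ∀ α q, DifferentiableAt ℝ
        (fun q => pd e3 (Af x (pHx11 H α)) q * pd e1 (fx x) q α) q := fun α q =>
      (D (pd_contDiff e3 (hA11 α)) q).mul (DWα α q)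
    have hd2 : ∀ α q, DifferentiableAt ℝ
        (fun q => Af x (pHx11 H α) q * pd e3 (pd e1 (fx x)) q α) q := fun α q =>
      (D (hA11 α) q).mul (DW3α α q)
    have hdterm : ∀ α q, DifferentiableAt ℝ
        (fun q => pd e3 (Af x (pHx11 H α)) q * pd e1 (fx x) q α
          + Af x (pHx11 H α) q * pd e3 (pd e1 (fx x)) q α) q := fun α q =>
      (hd1 α q).add (hd2 α q)
    rw [pd_sum Finset.univ (fun α _ => hdterm α p)]
    refine Finset.sum_congr rfl fun α _ => ?_
    rw [pd_add (hd1 α p) (hd2 α p)]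
    rw [pd_mul (D (pd_contDiff e3 (hA11 α)) p) (DWα α p)]
    rw [pd_mul (D (hA11 α) p) (DW3α α p)]
    rw [pd_apply (DW p) e2 α, pd_apply (DW3 p) e2 α]
    ring
  -- assemble
  rw [timeDeriv x hx hH p, hP, hQ, hC]
  rw [show Efun x H p = ∑ α : Fin n,
    (Af x (pHx H α) p - pd e2 (Af x (pHx10 H α)) p - pd e3 (Af x (pHx01 H α)) p
      + pd e2 (pd e2 (Af x (pHx20 H α))) p + pd e2 (pd e3 (Af x (pHx11 H α))) p
      + pd e3 (pd e3 (Af x (pHx02 H α))) p) * pd e1 (fx x) p α from rfl]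
  rw [← Finset.sum_add_distrib, ← Finset.sum_add_distrib, ← Finset.sum_add_distrib,
    ← Finset.sum_add_distrib, ← Finset.sum_add_distrib]
  refine Finset.sum_congr rfl fun α _ => ?_
  ring

/-! ### vD of atJet -/

theorem vD1_atJet (hx : ContDiff ℝ (⊤ : ℕ∞) (fx x)) {G : Jet2Fun n}
    (hG : ContDiff ℝ (⊤ : ℕ∞) (Gu G)) (t z1 z2 : ℝ) :
    vD1 (atJet x G t) z1 z2 = pd e2 (Af x G) (t, z1, z2) :=
  vD1_eq_pd ((Af_contDiff x hx hG).differentiable (by simp)) (atJet x G)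
    (fun t a b => atJet_eq x hx G t a b) t z1 z2

theorem vD2_atJet (hx : ContDiff ℝ (⊤ : ℕ∞) (fx x)) {G : Jet2Fun n}
    (hG : ContDiff ℝ (⊤ : ℕ∞) (Gu G)) (t z1 z2 : ℝ) :
    vD2 (atJet x G t) z1 z2 = pd e3 (Af x G) (t, z1, z2) :=
  vD2_eq_pd ((Af_contDiff x hx hG).differentiable (by simp)) (atJet x G)
    (fun t a b => atJet_eq x hx G t a b) t z1 z2

theorem vD11_atJet (hx : ContDiff ℝ (⊤ : ℕ∞) (fx x)) {G : Jet2Fun n}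
    (hG : ContDiff ℝ (⊤ : ℕ∞) (Gu G)) (t z1 z2 : ℝ) :
    vD1 (vD1 (atJet x G t)) z1 z2 = pd e2 (pd e2 (Af x G)) (t, z1, z2) :=
  vD1_eq_pd ((pd_contDiff e2 (Af_contDiff x hx hG)).differentiable (by simp))
    (fun t => vD1 (atJet x G t)) (fun t a b => vD1_atJet x hx hG t a b) t z1 z2

theorem vD12_atJet (hx : ContDiff ℝ (⊤ : ℕ∞) (fx x)) {G : Jet2Fun n}
    (hG : ContDiff ℝ (⊤ : ℕ∞) (Gu G)) (t z1 z2 : ℝ) :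
    vD1 (vD2 (atJet x G t)) z1 z2 = pd e2 (pd e3 (Af x G)) (t, z1, z2) :=
  vD1_eq_pd ((pd_contDiff e3 (Af_contDiff x hx hG)).differentiable (by simp))
    (fun t => vD2 (atJet x G t)) (fun t a b => vD2_atJet x hx hG t a b) t z1 z2

theorem vD22_atJet (hx : ContDiff ℝ (⊤ : ℕ∞) (fx x)) {G : Jet2Fun n}
    (hG : ContDiff ℝ (⊤ : ℕ∞) (Gu G)) (t z1 z2 : ℝ) :
    vD2 (vD2 (atJet x G t)) z1 z2 = pd e3 (pd e3 (Af x G)) (t, z1, z2) :=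
  vD2_eq_pd ((pd_contDiff e3 (Af_contDiff x hx hG)).differentiable (by simp))
    (fun t => vD2 (atJet x G t)) (fun t a b => vD2_atJet x hx hG t a b) t z1 z2

/-! ### Gu-smoothness of the partial-derivative densities -/

theorem hGu0 (hH : ContDiff ℝ (⊤ : ℕ∞) (Gu H)) (α : Fin n) :
    ContDiff ℝ (⊤ : ℕ∞) (Gu (pHx H α)) := by
  rw [GuPHx (hH.differentiable (by simp))]; exact pd_contDiff _ hH

theorem hGu10 (hH : ContDiff ℝ (⊤ : ℕ∞) (Gu H)) (α : Fin n) :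
    ContDiff ℝ (⊤ : ℕ∞) (Gu (pHx10 H α)) := by
  rw [GuPHx10 (hH.differentiable (by simp))]; exact pd_contDiff _ hH

theorem hGu01 (hH : ContDiff ℝ (⊤ : ℕ∞) (Gu H)) (α : Fin n) :
    ContDiff ℝ (⊤ : ℕ∞) (Gu (pHx01 H α)) := by
  rw [GuPHx01 (hH.differentiable (by simp))]; exact pd_contDiff _ hH

theorem hGu20 (hH : ContDiff ℝ (⊤ : ℕ∞) (Gu H)) (α : Fin n) :
    ContDiff ℝ (⊤ : ℕ∞) (Gu (pHx20 H α)) := by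
  rw [GuPHx20 (hH.differentiable (by simp))]; exact pd_contDiff _ hH

theorem hGu11 (hH : ContDiff ℝ (⊤ : ℕ∞) (Gu H)) (α : Fin n) :
    ContDiff ℝ (⊤ : ℕ∞) (Gu (pHx11 H α)) := by
  rw [GuPHx11 (hH.differentiable (by simp))]; exact pd_contDiff _ hH

theorem hGu02 (hH : ContDiff ℝ (⊤ : ℕ∞) (Gu H)) (α : Fin n) :
    ContDiff ℝ (⊤ : ℕ∞) (Gu (pHx02 H α)) := by
  rw [GuPHx02 (hH.differentiable (by simp))]; exact pd_contDiff _ hH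

/-! ### identification of the boundary densities -/

theorem edgeZ1_eq (hx : ContDiff ℝ (⊤ : ℕ∞) (fx x)) (hH : ContDiff ℝ (⊤ : ℕ∞) (Gu H))
    (t z1 z2 : ℝ) : edgeZ1 H x t z1 z2 = Pfun x H (t, z1, z2) := by
  simp only [edgeZ1, Pfun]
  congr 1
  · refine Finset.sum_congr rfl fun α _ => ?_
    rw [atJet_eq x hx, vD2_atJet x hx (hGu11 H hH α), vD1_atJet x hx (hGu20 H hH α),
      xDt_eq x hx]
    rfl
  · refine Finset.sum_congr rfl fun α _ => ?_
    rw [atJet_eq x hx, vD1_xDt_eq x hx]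
    rfl

theorem edgeZ2_eq (hx : ContDiff ℝ (⊤ : ℕ∞) (fx x)) (hH : ContDiff ℝ (⊤ : ℕ∞) (Gu H))
    (t z1 z2 : ℝ) : edgeZ2 H x t z1 z2 = Qfun x H (t, z1, z2) := by
  simp only [edgeZ2, Qfun]
  congr 1
  · refine Finset.sum_congr rfl fun α _ => ?_
    rw [atJet_eq x hx, vD1_atJet x hx (hGu11 H hH α), vD2_atJet x hx (hGu02 H hH α),
      xDt_eq x hx]
    rfl
  · refine Finset.sum_congr rfl fun α _ => ?_
    rw [atJet_eq x hx, vD2_xDt_eq x hx]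
    rfl

theorem corner_eq (hx : ContDiff ℝ (⊤ : ℕ∞) (fx x)) (hH : ContDiff ℝ (⊤ : ℕ∞) (Gu H))
    (t z1 z2 : ℝ) : cornerTerm H x t z1 z2 = Cfun x H (t, z1, z2) := by
  simp only [cornerTerm, Cfun]
  refine Finset.sum_congr rfl fun α _ => ?_
  rw [atJet_eq x hx, xDt_eq x hx]
  rfl

theorem sumVar_eq (hx : ContDiff ℝ (⊤ : ℕ∞) (fx x)) (hH : ContDiff ℝ (⊤ : ℕ∞) (Gu H))
    (t z1 z2 : ℝ) :
    ∑ α : Fin n, varDer H x α t z1 z2 * xDt x t z1 z2 α = Efun x H (t, z1, z2) := by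
  simp only [varDer, Efun]
  refine Finset.sum_congr rfl fun α _ => ?_
  rw [atJet_eq x hx, vD1_atJet x hx (hGu10 H hH α), vD2_atJet x hx (hGu01 H hH α),
    vD11_atJet x hx (hGu20 H hH α), vD12_atJet x hx (hGu11 H hH α),
    vD22_atJet x hx (hGu02 H hH α), xDt_eq x hx]
  rfl

/-! ### differentiation under the integral sign -/

theorem partA {L1 L2 : ℝ} (hL1 : 0 ≤ L1) (hL2 : 0 ≤ L2)
    (hx : ContDiff ℝ (⊤ : ℕ∞) (fx x)) (hH : ContDiff ℝ (⊤ : ℕ∞) (Gu H)) (t : ℝ) :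
    HasDerivAt (fun τ => ∫ z1 in (0:ℝ)..L1, ∫ z2 in (0:ℝ)..L2, atJet x H τ z1 z2)
      (∫ z1 in (0:ℝ)..L1, ∫ z2 in (0:ℝ)..L2, pd e1 (Af x H) (t, z1, z2)) t := by
  have hgC : ContDiff ℝ (⊤ : ℕ∞) (Af x H) := Af_contDiff x hx hH
  have contg : Continuous (Af x H) := hgC.continuous
  have contg1 : Continuous (pd e1 (Af x H)) := (pd_contDiff e1 hgC).continuous
  set A : Set (ℝ × ℝ) := Set.Ioc (0:ℝ) L1 ×ˢ Set.Ioc (0:ℝ) L2 with hA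
  have hsub : A ⊆ Set.Icc (0:ℝ) L1 ×ˢ Set.Icc (0:ℝ) L2 :=
    Set.prod_mono Set.Ioc_subset_Icc_self Set.Ioc_subset_Icc_self
  have hKcomp : IsCompact ((Set.Icc (t-1) (t+1)) ×ˢ (Set.Icc (0:ℝ) L1 ×ˢ Set.Icc (0:ℝ) L2)) :=
    isCompact_Icc.prod (isCompact_Icc.prod isCompact_Icc)
  obtain ⟨C, hC⟩ := hKcomp.exists_bound_of_continuousOn contg1.continuousOn
  have μAfin : volume A < ⊤ :=
    (measure_mono hsub).trans_lt (isCompact_Icc.prod isCompact_Icc).measure_lt_top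
  have hcurve : ∀ τ : ℝ, Continuous (fun z : ℝ × ℝ => ((τ, z.1, z.2) : ℝ × ℝ × ℝ)) :=
    fun τ => continuous_const.prodMk continuous_id
  have hmeas : ∀ᶠ τ in nhds t, AEStronglyMeasurable
      (fun z : ℝ × ℝ => Af x H (τ, z.1, z.2)) (volume.restrict A) :=
    Filter.Eventually.of_forall fun τ =>
      ((contg.comp (hcurve τ)).aestronglyMeasurable)
  have hint : Integrable (fun z : ℝ × ℝ => Af x H (t, z.1, z.2)) (volume.restrict A) :=
    (((contg.comp (hcurve t)).continuousOn.integrableOn_compact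
      (isCompact_Icc.prod isCompact_Icc)).mono_set hsub)
  have hmeas' : AEStronglyMeasurable (fun z : ℝ × ℝ => pd e1 (Af x H) (t, z.1, z.2))
      (volume.restrict A) := ((contg1.comp (hcurve t)).aestronglyMeasurable)
  have hbound : ∀ᵐ z ∂(volume.restrict A), ∀ τ ∈ Metric.ball t 1,
      ‖pd e1 (Af x H) (τ, z.1, z.2)‖ ≤ C := by
    refine (MeasureTheory.ae_restrict_mem (measurableSet_Ioc.prod measurableSet_Ioc)).mono
      (fun z hz τ hτ => hC _ ⟨?_, hsub hz⟩)
    have := Metric.mem_ball.1 hτ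
    rw [Real.dist_eq] at this
    constructor <;> [linarith [abs_lt.1 this |>.1]; linarith [abs_lt.1 this |>.2]]
  have hbint : Integrable (fun _ : ℝ × ℝ => C) (volume.restrict A) :=
    MeasureTheory.integrableOn_const μAfin.ne
  have hdiff : ∀ᵐ z ∂(volume.restrict A), ∀ τ ∈ Metric.ball t 1,
      HasDerivAt (fun τ => Af x H (τ, z.1, z.2)) (pd e1 (Af x H) (τ, z.1, z.2)) τ :=
    Filter.Eventually.of_forall fun z τ _ =>
      hasDerivAt_slice0 (hgC.differentiable (by simp) _)
  have key := (hasDerivAt_integral_of_dominated_loc_of_deriv_le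
    (μ := volume.restrict A) (F := fun τ (z : ℝ × ℝ) => Af x H (τ, z.1, z.2))
    (F' := fun τ (z : ℝ × ℝ) => pd e1 (Af x H) (τ, z.1, z.2)) (x₀ := t)
    (bound := fun _ => C) (Metric.ball_mem_nhds t one_pos) hmeas hint hmeas' hbound hbint hdiff).2
  have hptw : ∀ τ z1 z2, atJet x H τ z1 z2 = Af x H (τ, z1, z2) :=
    fun τ z1 z2 => atJet_eq x hx H τ z1 z2
  have hfun : (fun τ => ∫ z1 in (0:ℝ)..L1, ∫ z2 in (0:ℝ)..L2, atJet x H τ z1 z2)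
      = fun τ => ∫ z in A, Af x H (τ, z.1, z.2) := by
    funext τ
    simp only [hptw]
    exact iter_eq_set (contg.comp (hcurve τ)) hL1 hL2
  have hval : ∫ z1 in (0:ℝ)..L1, ∫ z2 in (0:ℝ)..L2, pd e1 (Af x H) (t, z1, z2)
      = ∫ z in A, pd e1 (Af x H) (t, z.1, z.2) :=
    iter_eq_set (contg1.comp (hcurve t)) hL1 hL2
  rw [hfun, hval]
  exact key

/-! ### smoothness of the four densities -/

theorem projα_contDiff (α : Fin n) {g : ℝ × ℝ × ℝ → Fin n → ℝ}
    (hg : ContDiff ℝ (⊤ : ℕ∞) g) : ContDiff ℝ (⊤ : ℕ∞) (fun q => g q α) :=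
  (ContinuousLinearMap.proj (R := ℝ) (φ := fun _ : Fin n => ℝ) α).contDiff.comp hg

theorem Efun_contDiff (hx : ContDiff ℝ (⊤ : ℕ∞) (fx x))
    (hH : ContDiff ℝ (⊤ : ℕ∞) (Gu H)) : ContDiff ℝ (⊤ : ℕ∞) (Efun x H) := by
  refine ContDiff.sum fun α _ => ContDiff.mul ?_ (projα_contDiff α (pd_contDiff e1 hx))
  have h0 := Af_contDiff x hx (hGu0 H hH α)
  have h10 := Af_contDiff x hx (hGu10 H hH α)
  have h01 := Af_contDiff x hx (hGu01 H hH α)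
  have h20 := Af_contDiff x hx (hGu20 H hH α)
  have h11 := Af_contDiff x hx (hGu11 H hH α)
  have h02 := Af_contDiff x hx (hGu02 H hH α)
  exact ((((h0.sub (pd_contDiff e2 h10)).sub (pd_contDiff e3 h01)).add
    (pd_contDiff e2 (pd_contDiff e2 h20))).add
    (pd_contDiff e2 (pd_contDiff e3 h11))).add (pd_contDiff e3 (pd_contDiff e3 h02))

theorem Pfun_contDiff (hx : ContDiff ℝ (⊤ : ℕ∞) (fx x))
    (hH : ContDiff ℝ (⊤ : ℕ∞) (Gu H)) : ContDiff ℝ (⊤ : ℕ∞) (Pfun x H) := by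
  refine ContDiff.add (ContDiff.sum fun α _ => ContDiff.mul ?_
    (projα_contDiff α (pd_contDiff e1 hx)))
    (ContDiff.sum fun α _ => ContDiff.mul (Af_contDiff x hx (hGu20 H hH α))
    (projα_contDiff α (pd_contDiff e2 (pd_contDiff e1 hx))))
  exact ((Af_contDiff x hx (hGu10 H hH α)).sub
    (pd_contDiff e3 (Af_contDiff x hx (hGu11 H hH α)))).sub
    (pd_contDiff e2 (Af_contDiff x hx (hGu20 H hH α)))

theorem Qfun_contDiff (hx : ContDiff ℝ (⊤ : ℕ∞) (fx x))
    (hH : ContDiff ℝ (⊤ : ℕ∞) (Gu H)) : ContDiff ℝ (⊤ : ℕ∞) (Qfun x H) := by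
  refine ContDiff.add (ContDiff.sum fun α _ => ContDiff.mul ?_
    (projα_contDiff α (pd_contDiff e1 hx)))
    (ContDiff.sum fun α _ => ContDiff.mul (Af_contDiff x hx (hGu02 H hH α))
    (projα_contDiff α (pd_contDiff e3 (pd_contDiff e1 hx))))
  exact ((Af_contDiff x hx (hGu01 H hH α)).sub
    (pd_contDiff e2 (Af_contDiff x hx (hGu11 H hH α)))).sub
    (pd_contDiff e3 (Af_contDiff x hx (hGu02 H hH α)))

theorem Cfun_contDiff (hx : ContDiff ℝ (⊤ : ℕ∞) (fx x))
    (hH : ContDiff ℝ (⊤ : ℕ∞) (Gu H)) : ContDiff ℝ (⊤ : ℕ∞) (Cfun x H) :=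
  ContDiff.sum fun α _ => ContDiff.mul (Af_contDiff x hx (hGu11 H hH α))
    (projα_contDiff α (pd_contDiff e1 hx))

/-! ### the spatial decomposition of the integral -/

theorem partB {L1 L2 : ℝ} (hL1 : 0 ≤ L1) (hL2 : 0 ≤ L2)
    (hx : ContDiff ℝ (⊤ : ℕ∞) (fx x)) (hH : ContDiff ℝ (⊤ : ℕ∞) (Gu H)) (t : ℝ) :
    ∫ z1 in (0:ℝ)..L1, ∫ z2 in (0:ℝ)..L2, pd e1 (Af x H) (t, z1, z2)
      = (∫ z1 in (0:ℝ)..L1, ∫ z2 in (0:ℝ)..L2, Efun x H (t, z1, z2))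
        + (∫ z1 in (0:ℝ)..L1, (Qfun x H (t, z1, L2) - Qfun x H (t, z1, 0)))
        + (∫ z2 in (0:ℝ)..L2, (Pfun x H (t, L1, z2) - Pfun x H (t, 0, z2)))
        + ((Cfun x H (t, L1, L2) - Cfun x H (t, 0, L2))
            - (Cfun x H (t, L1, 0) - Cfun x H (t, 0, 0))) := by
  have hEC := Efun_contDiff x H hx hH
  have hPC := Pfun_contDiff x H hx hH
  have hQC := Qfun_contDiff x H hx hH
  have hCC := Cfun_contDiff x H hx hH
  have DD : ∀ {g : ℝ × ℝ × ℝ → ℝ}, ContDiff ℝ (⊤ : ℕ∞) g → ∀ q,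
      DifferentiableAt ℝ g q := fun h q => h.differentiable (by simp) q
  have hcurve : ∀ τ : ℝ, Continuous (fun z : ℝ × ℝ => ((τ, z.1, z.2) : ℝ × ℝ × ℝ)) :=
    fun τ => continuous_const.prodMk continuous_id
  have hcont : ∀ {g : ℝ × ℝ × ℝ → ℝ}, ContDiff ℝ (⊤ : ℕ∞) g →
      Continuous (fun z : ℝ × ℝ => g (t, z.1, z.2)) := fun h =>
    h.continuous.comp (hcurve t)
  set A : Set (ℝ × ℝ) := Set.Ioc (0:ℝ) L1 ×ˢ Set.Ioc (0:ℝ) L2 with hA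
  have hsub : A ⊆ Set.Icc (0:ℝ) L1 ×ˢ Set.Icc (0:ℝ) L2 :=
    Set.prod_mono Set.Ioc_subset_Icc_self Set.Ioc_subset_Icc_self
  have hio : ∀ {g : ℝ × ℝ × ℝ → ℝ}, ContDiff ℝ (⊤ : ℕ∞) g →
      IntegrableOn (fun z : ℝ × ℝ => g (t, z.1, z.2)) A := fun h =>
    ((hcont h).continuousOn.integrableOn_compact
      (isCompact_Icc.prod isCompact_Icc)).mono_set hsub
  -- pointwise identity under the double integral
  have step1 : ∫ z1 in (0:ℝ)..L1, ∫ z2 in (0:ℝ)..L2, pd e1 (Af x H) (t, z1, z2)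
      = ∫ z in A, (Efun x H (t, z.1, z.2) + pd e2 (Pfun x H) (t, z.1, z.2)
          + pd e3 (Qfun x H) (t, z.1, z.2) + pd e2 (pd e3 (Cfun x H)) (t, z.1, z.2)) := by
    simp only [main_identity x H hx hH]
    exact iter_eq_set (by
      exact ((((hcont hEC).add (hcont (pd_contDiff e2 hPC))).add
        (hcont (pd_contDiff e3 hQC))).add (hcont (pd_contDiff e2 (pd_contDiff e3 hCC)))))
      hL1 hL2
  -- split the set integral
  have step2 : ∫ z in A, (Efun x H (t, z.1, z.2) + pd e2 (Pfun x H) (t, z.1, z.2)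
        + pd e3 (Qfun x H) (t, z.1, z.2) + pd e2 (pd e3 (Cfun x H)) (t, z.1, z.2))
      = (∫ z in A, Efun x H (t, z.1, z.2)) + (∫ z in A, pd e2 (Pfun x H) (t, z.1, z.2))
        + (∫ z in A, pd e3 (Qfun x H) (t, z.1, z.2))
        + (∫ z in A, pd e2 (pd e3 (Cfun x H)) (t, z.1, z.2)) := by
    have iE := hio hEC
    have iP := hio (pd_contDiff e2 hPC)
    have iQ := hio (pd_contDiff e3 hQC)
    have iC := hio (pd_contDiff e2 (pd_contDiff e3 hCC))
    have iEP : IntegrableOn (fun z : ℝ × ℝ =>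
        Efun x H (t, z.1, z.2) + pd e2 (Pfun x H) (t, z.1, z.2)) A := iE.add iP
    have iEPQ : IntegrableOn (fun z : ℝ × ℝ =>
        Efun x H (t, z.1, z.2) + pd e2 (Pfun x H) (t, z.1, z.2)
          + pd e3 (Qfun x H) (t, z.1, z.2)) A := iEP.add iQ
    rw [MeasureTheory.integral_add iEPQ iC, MeasureTheory.integral_add iEP iQ,
      MeasureTheory.integral_add iE iP]
  -- term E
  have hE : ∫ z in A, Efun x H (t, z.1, z.2)
      = ∫ z1 in (0:ℝ)..L1, ∫ z2 in (0:ℝ)..L2, Efun x H (t, z1, z2) :=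
    (iter_eq_set (k := fun z1 z2 => Efun x H (t, z1, z2)) (hcont hEC) hL1 hL2).symm
  -- term P : swap then FTC in z1
  have hP : ∫ z in A, pd e2 (Pfun x H) (t, z.1, z.2)
      = ∫ z2 in (0:ℝ)..L2, (Pfun x H (t, L1, z2) - Pfun x H (t, 0, z2)) := by
    rw [← iter_eq_set (k := fun z1 z2 => pd e2 (Pfun x H) (t, z1, z2)) (hcont (pd_contDiff e2 hPC)) hL1 hL2]
    rw [iter_swap (k := fun z1 z2 => pd e2 (Pfun x H) (t, z1, z2)) (hcont (pd_contDiff e2 hPC)) hL1 hL2]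
    refine intervalIntegral.integral_congr fun z2 _ => ?_
    refine intervalIntegral.integral_eq_sub_of_hasDerivAt
      (fun z1 _ => hasDerivAt_slice1 (DD hPC (t, z1, z2))) ?_
    exact (((pd_contDiff e2 hPC).continuous).comp
      (continuous_const.prodMk (continuous_id.prodMk continuous_const))).intervalIntegrable
      0 L1
  -- term Q : FTC in z2
  have hQ : ∫ z in A, pd e3 (Qfun x H) (t, z.1, z.2)
      = ∫ z1 in (0:ℝ)..L1, (Qfun x H (t, z1, L2) - Qfun x H (t, z1, 0)) := by
    rw [← iter_eq_set (k := fun z1 z2 => pd e3 (Qfun x H) (t, z1, z2)) (hcont (pd_contDiff e3 hQC)) hL1 hL2]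
    refine intervalIntegral.integral_congr fun z1 _ => ?_
    refine intervalIntegral.integral_eq_sub_of_hasDerivAt
      (fun z2 _ => hasDerivAt_slice2 (DD hQC (t, z1, z2))) ?_
    exact (((pd_contDiff e3 hQC).continuous).comp
      (continuous_const.prodMk (continuous_const.prodMk continuous_id))).intervalIntegrable
      0 L2
  -- corner term
  have hCswap : ∀ z1 z2 : ℝ, pd e2 (pd e3 (Cfun x H)) (t, z1, z2)
      = pd e3 (pd e2 (Cfun x H)) (t, z1, z2) := fun z1 z2 => pd_comm hCC e2 e3 (t, z1, z2)
  have hCo : ∫ z in A, pd e2 (pd e3 (Cfun x H)) (t, z.1, z.2)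
      = (Cfun x H (t, L1, L2) - Cfun x H (t, 0, L2))
        - (Cfun x H (t, L1, 0) - Cfun x H (t, 0, 0)) := by
    rw [← iter_eq_set (k := fun z1 z2 => pd e2 (pd e3 (Cfun x H)) (t, z1, z2)) (hcont (pd_contDiff e2 (pd_contDiff e3 hCC))) hL1 hL2]
    have inner : ∀ z1 : ℝ, ∫ z2 in (0:ℝ)..L2, pd e2 (pd e3 (Cfun x H)) (t, z1, z2)
        = pd e2 (Cfun x H) (t, z1, L2) - pd e2 (Cfun x H) (t, z1, 0) := by
      intro z1
      have : ∀ z2 : ℝ, pd e2 (pd e3 (Cfun x H)) (t, z1, z2)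
          = pd e3 (pd e2 (Cfun x H)) (t, z1, z2) := fun z2 => hCswap z1 z2
      rw [intervalIntegral.integral_congr (g := fun z2 =>
        pd e3 (pd e2 (Cfun x H)) (t, z1, z2)) (fun z2 _ => this z2)]
      refine intervalIntegral.integral_eq_sub_of_hasDerivAt
        (fun z2 _ => hasDerivAt_slice2 (DD (pd_contDiff e2 hCC) (t, z1, z2))) ?_
      exact (((pd_contDiff e3 (pd_contDiff e2 hCC)).continuous).comp
        (continuous_const.prodMk (continuous_const.prodMk continuous_id))).intervalIntegrable
        0 L2
    rw [intervalIntegral.integral_congr (g := fun z1 =>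
      pd e2 (Cfun x H) (t, z1, L2) - pd e2 (Cfun x H) (t, z1, 0)) (fun z1 _ => inner z1)]
    have contSlice1 : ∀ z2 : ℝ, Continuous (fun z1 : ℝ => pd e2 (Cfun x H) (t, z1, z2)) :=
      fun z2 => ((pd_contDiff e2 hCC).continuous).comp
        (continuous_const.prodMk (continuous_id.prodMk continuous_const))
    rw [intervalIntegral.integral_sub ((contSlice1 L2).intervalIntegrable 0 L1)
      ((contSlice1 0).intervalIntegrable 0 L1)]
    have ftc1 : ∀ z2 : ℝ, ∫ z1 in (0:ℝ)..L1, pd e2 (Cfun x H) (t, z1, z2)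
        = Cfun x H (t, L1, z2) - Cfun x H (t, 0, z2) := fun z2 =>
      intervalIntegral.integral_eq_sub_of_hasDerivAt
        (fun z1 _ => hasDerivAt_slice1 (DD hCC (t, z1, z2)))
        ((((pd_contDiff e2 hCC).continuous).comp (continuous_const.prodMk
          (continuous_id.prodMk continuous_const))).intervalIntegrable 0 L1)
    rw [ftc1 L2, ftc1 0]
  rw [step1, step2, hE, hP, hQ, hCo]
  ring

end Stmt0Aux

/-- decomposition theorem for a second-order Hamiltonian density on
the rectangle `B = [0,L₁]×[0,L₂]`: the time derivative of `∫_B H(j(t,z)) dz`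
splits into the domain term given by the variational derivative, boundary terms
given by the two boundary operators on the four edges, and a corner term. -/
theorem stmt0 (L1 L2 : ℝ) (hL1 : 0 < L1) (hL2 : 0 < L2)
    (H : Jet2Fun n)
    (hH : ContDiff ℝ (⊤ : ℕ∞)
      (fun q : (ℝ × ℝ) × (Fin n → ℝ) × (Fin n → ℝ) × (Fin n → ℝ) × (Fin n → ℝ) ×
          (Fin n → ℝ) × (Fin n → ℝ) =>
        H q.1 q.2.1 q.2.2.1 q.2.2.2.1 q.2.2.2.2.1 q.2.2.2.2.2.1 q.2.2.2.2.2.2))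
    (x : ℝ → ℝ → ℝ → Fin n → ℝ)
    (hx : ContDiff ℝ (⊤ : ℕ∞) (fun q : ℝ × ℝ × ℝ => x q.1 q.2.1 q.2.2)) :
    ∀ t : ℝ,
      HasDerivAt
        (fun τ => ∫ z1 in (0:ℝ)..L1, ∫ z2 in (0:ℝ)..L2, atJet x H τ z1 z2)
        ((∫ z1 in (0:ℝ)..L1, ∫ z2 in (0:ℝ)..L2,
            ∑ α : Fin n, varDer H x α t z1 z2 * xDt x t z1 z2 α)
          + (∫ z1 in (0:ℝ)..L1, (edgeZ2 H x t z1 L2 - edgeZ2 H x t z1 0))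
          + (∫ z2 in (0:ℝ)..L2, (edgeZ1 H x t L1 z2 - edgeZ1 H x t 0 z2))
          + ((cornerTerm H x t L1 L2 - cornerTerm H x t 0 L2)
              - (cornerTerm H x t L1 0 - cornerTerm H x t 0 0)))
        t := by
  intro t
  have hxf : ContDiff ℝ (⊤ : ℕ∞) (Stmt0Aux.fx x) := hx
  have hHu : ContDiff ℝ (⊤ : ℕ∞) (Stmt0Aux.Gu H) := hH
  have pa := Stmt0Aux.partA x H hL1.le hL2.le hxf hHu t
  have pb := Stmt0Aux.partB x H hL1.le hL2.le hxf hHu t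
  rw [pb] at pa
  have hdom : (∫ z1 in (0:ℝ)..L1, ∫ z2 in (0:ℝ)..L2,
      ∑ α : Fin n, varDer H x α t z1 z2 * xDt x t z1 z2 α)
      = ∫ z1 in (0:ℝ)..L1, ∫ z2 in (0:ℝ)..L2, Stmt0Aux.Efun x H (t, z1, z2) :=
    intervalIntegral.integral_congr fun z1 _ =>
      intervalIntegral.integral_congr fun z2 _ => Stmt0Aux.sumVar_eq x H hxf hHu t z1 z2
  have hq : (∫ z1 in (0:ℝ)..L1, (edgeZ2 H x t z1 L2 - edgeZ2 H x t z1 0))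
      = ∫ z1 in (0:ℝ)..L1, (Stmt0Aux.Qfun x H (t, z1, L2) - Stmt0Aux.Qfun x H (t, z1, 0)) :=
    intervalIntegral.integral_congr fun z1 _ => by
      rw [Stmt0Aux.edgeZ2_eq x H hxf hHu, Stmt0Aux.edgeZ2_eq x H hxf hHu]
  have hp : (∫ z2 in (0:ℝ)..L2, (edgeZ1 H x t L1 z2 - edgeZ1 H x t 0 z2))
      = ∫ z2 in (0:ℝ)..L2, (Stmt0Aux.Pfun x H (t, L1, z2) - Stmt0Aux.Pfun x H (t, 0, z2)) :=
    intervalIntegral.integral_congr fun z2 _ => by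
      rw [Stmt0Aux.edgeZ1_eq x H hxf hHu, Stmt0Aux.edgeZ1_eq x H hxf hHu]
  have hc : ((cornerTerm H x t L1 L2 - cornerTerm H x t 0 L2)
      - (cornerTerm H x t L1 0 - cornerTerm H x t 0 0))
      = (Stmt0Aux.Cfun x H (t, L1, L2) - Stmt0Aux.Cfun x H (t, 0, L2))
        - (Stmt0Aux.Cfun x H (t, L1, 0) - Stmt0Aux.Cfun x H (t, 0, 0)) := by
    rw [Stmt0Aux.corner_eq x H hxf hHu, Stmt0Aux.corner_eq x H hxf hHu,
      Stmt0Aux.corner_eq x H hxf hHu, Stmt0Aux.corner_eq x H hxf hHu]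
  rw [hdom, hq, hp, hc]
  exact pa

end
end

section
/- Let D_E, ν ∈ ℝ and let w : ℝ² → ℝ be C³. Consider the Kirchhoff plate potential density V(w₂₀, w₁₁, w₀₂) = (D_E/2)[w₂₀² + w₀₂² + 2ν w₂₀ w₀₂ + 2(1−ν) w₁₁²] as a function of the second-order jet variables. Then, evaluating along the jets of w (i.e. substituting w₂₀ = ∂₁²w, w₁₁ = ∂₁∂₂w, w₀₂ = ∂₂²w): (i) the first boundary operator in coordinates adapted to an edge {z² = const} satisfies (∂V/∂w₀₁ − d₁(∂V/∂w₁₁) − d₂(∂V/∂w₀₂)) ∘ j(w) = −D_E(∂₂³w + (2−ν)∂₁²∂₂w), where d₁, d₂ are the spatial derivatives of the composite map and ∂V/∂w₀₁ = 0; and (ii) the second boundary operator satisfies (∂V/∂w₀₂) ∘ j(w) = D_E(∂₂²w + ν∂₁²w). -/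
noncomputable section

/-- Partial derivative with respect to the first coordinate `z¹`. -/
def pd1 (u : ℝ → ℝ → ℝ) : ℝ → ℝ → ℝ := fun z1 z2 => deriv (fun s => u s z2) z1

/-- Partial derivative with respect to the second coordinate `z²`. -/
def pd2 (u : ℝ → ℝ → ℝ) : ℝ → ℝ → ℝ := fun z1 z2 => deriv (fun s => u z1 s) z2

namespace Aux

/-- Uncurried version of a function of two real variables. -/
def U (u : ℝ → ℝ → ℝ) : ℝ × ℝ → ℝ := fun p => u p.1 p.2

lemma hasDerivAt1 {u : ℝ → ℝ → ℝ} {z1 z2 : ℝ} (h : DifferentiableAt ℝ (U u) (z1, z2)) :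
    HasDerivAt (fun s => u s z2) (fderiv ℝ (U u) (z1, z2) (1, 0)) z1 :=
  by have := h.hasFDerivAt.comp_hasDerivAt z1 ((hasDerivAt_id' z1).prodMk (hasDerivAt_const z1 z2)); exact this

lemma hasDerivAt2 {u : ℝ → ℝ → ℝ} {z1 z2 : ℝ} (h : DifferentiableAt ℝ (U u) (z1, z2)) :
    HasDerivAt (fun s => u z1 s) (fderiv ℝ (U u) (z1, z2) (0, 1)) z2 :=
  h.hasFDerivAt.comp_hasDerivAt z2 ((hasDerivAt_const z2 z1).prodMk (hasDerivAt_id z2))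

lemma pd1_eq {u : ℝ → ℝ → ℝ} (h : Differentiable ℝ (U u)) (z1 z2 : ℝ) :
    pd1 u z1 z2 = fderiv ℝ (U u) (z1, z2) (1, 0) := (hasDerivAt1 (h _)).deriv

lemma pd2_eq {u : ℝ → ℝ → ℝ} (h : Differentiable ℝ (U u)) (z1 z2 : ℝ) :
    pd2 u z1 z2 = fderiv ℝ (U u) (z1, z2) (0, 1) := (hasDerivAt2 (h _)).deriv

lemma contDiff_fderiv_apply {G : ℝ × ℝ → ℝ} {n m : WithTop ℕ∞} (h : ContDiff ℝ n G)
    (hmn : m + 1 ≤ n) (v : ℝ × ℝ) : ContDiff ℝ m (fun p => fderiv ℝ G p v) :=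
  (h.fderiv_right hmn).clm_apply contDiff_const

lemma fderiv_fderiv_apply {G : ℝ × ℝ → ℝ} (h : ContDiff ℝ 2 G) (p v u' : ℝ × ℝ) :
    fderiv ℝ (fun q => fderiv ℝ G q v) p u' = fderiv ℝ (fderiv ℝ G) p u' v := by
  have hd : DifferentiableAt ℝ (fderiv ℝ G) p :=
    (h.fderiv_right (m := 1) (by norm_num)).differentiable one_ne_zero p
  rw [fderiv_clm_apply hd (differentiableAt_const v)]
  simp

/-- Clairaut's theorem for curried `C²` functions. -/
lemma clairaut {u : ℝ → ℝ → ℝ} (h : ContDiff ℝ 2 (U u)) (z1 z2 : ℝ) :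
    pd1 (pd2 u) z1 z2 = pd2 (pd1 u) z1 z2 := by
  have h1 : Differentiable ℝ (U u) := h.differentiable (by norm_num)
  have hA1 : ContDiff ℝ 1 (fun p => fderiv ℝ (U u) p (1, 0)) :=
    contDiff_fderiv_apply h (by norm_num) _
  have hA2 : ContDiff ℝ 1 (fun p => fderiv ℝ (U u) p (0, 1)) :=
    contDiff_fderiv_apply h (by norm_num) _
  have e2 : (fun s => pd2 u s z2) = fun s => fderiv ℝ (U u) (s, z2) (0, 1) :=
    funext fun s => pd2_eq h1 s z2
  have e1 : (fun s => pd1 u z1 s) = fun s => fderiv ℝ (U u) (z1, s) (1, 0) :=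
    funext fun s => pd1_eq h1 z1 s
  have hsymm := (h.contDiffAt (x := (z1, z2))).isSymmSndFDerivAt (n := 2) (by simp)
  have l1 : pd1 (pd2 u) z1 z2 = fderiv ℝ (fun q => fderiv ℝ (U u) q (0,1)) (z1, z2) (1, 0) := by
    show deriv (fun s => pd2 u s z2) z1 = _
    rw [e2]
    exact (hasDerivAt1 (u := fun a b => fderiv ℝ (U u) (a, b) (0,1))
      ((hA2.differentiable one_ne_zero) _)).deriv
  have l2 : pd2 (pd1 u) z1 z2 = fderiv ℝ (fun q => fderiv ℝ (U u) q (1,0)) (z1, z2) (0, 1) := by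
    show deriv (fun s => pd1 u z1 s) z2 = _
    rw [e1]
    exact (hasDerivAt2 (u := fun a b => fderiv ℝ (U u) (a, b) (1,0))
      ((hA1.differentiable one_ne_zero) _)).deriv
  rw [l1, l2, fderiv_fderiv_apply h, fderiv_fderiv_apply h]
  exact hsymm _ _

end Aux

/-- for the Kirchhoff plate potential density
`V(w₂₀, w₁₁, w₀₂) = (D_E/2)[w₂₀² + w₀₂² + 2ν w₂₀ w₀₂ + 2(1−ν) w₁₁²]`,
evaluating along the second jets of `w` (i.e. `w₂₀ = ∂₁²w`, `w₁₁ = ∂₁∂₂w`,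
`w₀₂ = ∂₂²w`):
(i) the first boundary operator (adapted to an edge `z² = const`), namely
`∂V/∂w₀₁ − d₁(∂V/∂w₁₁) − d₂(∂V/∂w₀₂)` along the jets, with `∂V/∂w₀₁ = 0`,
equals `−D_E(∂₂³w + (2−ν)∂₁²∂₂w)`;
(ii) the second boundary operator `∂V/∂w₀₂` along the jets equals
`D_E(∂₂²w + ν∂₁²w)`. -/
theorem stmt3 (D_E ν : ℝ) (w : ℝ → ℝ → ℝ)
    (hw : ContDiff ℝ 3 (fun q : ℝ × ℝ => w q.1 q.2))
    (V : ℝ → ℝ → ℝ → ℝ)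
    (hV : ∀ w20 w11 w02 : ℝ,
      V w20 w11 w02 =
        D_E / 2 * (w20 ^ 2 + w02 ^ 2 + 2 * ν * w20 * w02 + 2 * (1 - ν) * w11 ^ 2)) :
    (∀ z1 z2 : ℝ,
      (0 : ℝ)
        - pd1 (fun a b =>
            deriv (fun s => V (pd1 (pd1 w) a b) s (pd2 (pd2 w) a b)) (pd1 (pd2 w) a b)) z1 z2
        - pd2 (fun a b =>
            deriv (fun s => V (pd1 (pd1 w) a b) (pd1 (pd2 w) a b) s) (pd2 (pd2 w) a b)) z1 z2
      = -(D_E * (pd2 (pd2 (pd2 w)) z1 z2 + (2 - ν) * pd1 (pd1 (pd2 w)) z1 z2))) ∧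
    (∀ z1 z2 : ℝ,
      deriv (fun s => V (pd1 (pd1 w) z1 z2) (pd1 (pd2 w) z1 z2) s) (pd2 (pd2 w) z1 z2)
        = D_E * (pd2 (pd2 w) z1 z2 + ν * pd1 (pd1 w) z1 z2)) := by
  have hw' : ContDiff ℝ 3 (Aux.U w) := hw
  have hw1 : Differentiable ℝ (Aux.U w) := hw'.differentiable (by norm_num)
  -- the uncurried first partials, as fderiv applications
  have hu1 : Aux.U (pd1 w) = fun p => fderiv ℝ (Aux.U w) p (1, 0) :=
    funext fun p => Aux.pd1_eq hw1 p.1 p.2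
  have hu2 : Aux.U (pd2 w) = fun p => fderiv ℝ (Aux.U w) p (0, 1) :=
    funext fun p => Aux.pd2_eq hw1 p.1 p.2
  have hU1 : ContDiff ℝ 2 (Aux.U (pd1 w)) := by
    rw [hu1]; exact Aux.contDiff_fderiv_apply hw' (by norm_num) _
  have hU2 : ContDiff ℝ 2 (Aux.U (pd2 w)) := by
    rw [hu2]; exact Aux.contDiff_fderiv_apply hw' (by norm_num) _
  have hU1d : Differentiable ℝ (Aux.U (pd1 w)) := hU1.differentiable (by norm_num)
  have hU2d : Differentiable ℝ (Aux.U (pd2 w)) := hU2.differentiable (by norm_num)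
  -- the uncurried second partials
  have hu11 : Aux.U (pd1 (pd1 w)) = fun p => fderiv ℝ (Aux.U (pd1 w)) p (1, 0) :=
    funext fun p => Aux.pd1_eq hU1d p.1 p.2
  have hu22 : Aux.U (pd2 (pd2 w)) = fun p => fderiv ℝ (Aux.U (pd2 w)) p (0, 1) :=
    funext fun p => Aux.pd2_eq hU2d p.1 p.2
  have hU11 : ContDiff ℝ 1 (Aux.U (pd1 (pd1 w))) := by
    rw [hu11]; exact Aux.contDiff_fderiv_apply hU1 (by norm_num) _
  have hU22 : ContDiff ℝ 1 (Aux.U (pd2 (pd2 w))) := by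
    rw [hu22]; exact Aux.contDiff_fderiv_apply hU2 (by norm_num) _
  -- derivatives of V in its second and third slots
  have hVd2 : ∀ a c x : ℝ, deriv (fun s => V a s c) x = 2 * D_E * (1 - ν) * x := by
    intro a c x
    have hfe : (fun s => V a s c)
        = fun s => D_E / 2 * (a ^ 2 + c ^ 2 + 2 * ν * a * c) + D_E * (1 - ν) * s ^ 2 :=
      funext fun s => by rw [hV]; ring
    rw [hfe]
    rw [(((hasDerivAt_pow 2 x).const_mul (D_E * (1 - ν))).const_add
      (D_E / 2 * (a ^ 2 + c ^ 2 + 2 * ν * a * c))).deriv]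
    push_cast; ring
  have hVd3 : ∀ a b x : ℝ, deriv (fun s => V a b s) x = D_E * (x + ν * a) := by
    intro a b x
    have hfe : (fun s => V a b s)
        = fun s => D_E / 2 * (a ^ 2 + 2 * (1 - ν) * b ^ 2) + ((D_E * ν * a) * s
            + D_E / 2 * s ^ 2) :=
      funext fun s => by rw [hV]; ring
    rw [hfe]
    refine ((((hasDerivAt_id' x).const_mul (D_E * ν * a)).add
      ((hasDerivAt_pow 2 x).const_mul (D_E / 2))).const_add
      (D_E / 2 * (a ^ 2 + 2 * (1 - ν) * b ^ 2))).deriv.trans ?_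
    push_cast; ring
  constructor
  · intro z1 z2
    -- first term
    have e1 : (fun a b =>
        deriv (fun s => V (pd1 (pd1 w) a b) s (pd2 (pd2 w) a b)) (pd1 (pd2 w) a b))
        = fun a b => 2 * D_E * (1 - ν) * pd1 (pd2 w) a b :=
      funext fun a => funext fun b => hVd2 _ _ _
    have e2 : (fun a b =>
        deriv (fun s => V (pd1 (pd1 w) a b) (pd1 (pd2 w) a b) s) (pd2 (pd2 w) a b))
        = fun a b => D_E * (pd2 (pd2 w) a b + ν * pd1 (pd1 w) a b) :=
      funext fun a => funext fun b => hVd3 _ _ _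
    rw [e1, e2]
    have hT1 : pd1 (fun a b => 2 * D_E * (1 - ν) * pd1 (pd2 w) a b) z1 z2
        = 2 * D_E * (1 - ν) * pd1 (pd1 (pd2 w)) z1 z2 := by
      show deriv (fun s => 2 * D_E * (1 - ν) * pd1 (pd2 w) s z2) z1 = _
      rw [deriv_const_mul_field]
      rfl
    have hd222 : DifferentiableAt ℝ (fun s => pd2 (pd2 w) z1 s) z2 :=
      (Aux.hasDerivAt2 ((hU22.differentiable one_ne_zero) (z1, z2))).differentiableAt
    have hd112 : DifferentiableAt ℝ (fun s => ν * pd1 (pd1 w) z1 s) z2 := by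
      exact ((Aux.hasDerivAt2
        ((hU11.differentiable one_ne_zero) (z1, z2))).differentiableAt).const_mul ν
    have hT2 : pd2 (fun a b => D_E * (pd2 (pd2 w) a b + ν * pd1 (pd1 w) a b)) z1 z2
        = D_E * (pd2 (pd2 (pd2 w)) z1 z2 + ν * pd2 (pd1 (pd1 w)) z1 z2) := by
      show deriv (fun s => D_E * (pd2 (pd2 w) z1 s + ν * pd1 (pd1 w) z1 s)) z2 = _
      rw [deriv_const_mul_field, deriv_fun_add hd222 hd112, deriv_const_mul_field]
      rfl
    rw [hT1, hT2]
    -- mixed partials commute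
    have hc1 : pd1 (pd2 (pd1 w)) z1 z2 = pd2 (pd1 (pd1 w)) z1 z2 :=
      Aux.clairaut hU1 z1 z2
    have hc0 : pd2 (pd1 w) = pd1 (pd2 w) :=
      funext fun a => funext fun b => (Aux.clairaut (hw'.of_le (by norm_num)) a b).symm
    have hkey : pd2 (pd1 (pd1 w)) z1 z2 = pd1 (pd1 (pd2 w)) z1 z2 := by
      rw [← hc1, hc0]
    rw [hkey]
    ring
  · intro z1 z2
    rw [hVd3]
end
end

section
/- Let L₁, L₂ > 0, B = [0,L₁]×[0,L₂], ρA, D_E > 0, ν ∈ ℝ. Let w, p : ℝ × ℝ² → ℝ be smooth and satisfy ∂ₜw = p/(ρA) and ∂ₜp = −D_E(∂₁⁴w + 2∂₁²∂₂²w + ∂₂⁴w) on ℝ × B, together with, for all t: (clamped edge z¹ = 0) w(0,z²,t) = 0 and ∂₁w(0,z²,t) = 0 for all z² ∈ [0,L₂]; (free edge z¹ = L₁) ∂₁³w + (2−ν)∂₁∂₂²w = 0 and ∂₁²w + ν∂₂²w = 0 at z¹ = L₁ for all z² ∈ [0,L₂]; (zero bending moment on z²-edges) ∂₂²w + ν∂₁²w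 = 0 at z² = 0 and z² = L₂ for all z¹ ∈ [0,L₁]; (free-corner condition) ∂₁∂₂w(L₁,0,t) = 0 and ∂₁∂₂w(L₁,L₂,t) = 0. Define 𝓗(t) = ∫_B [ p²/(2ρA) + (D_E/2)((∂₁²w)² + (∂₂²w)² + 2ν ∂₁²w ∂₂²w + 2(1−ν)(∂₁∂₂w)²) ] dz and Q₁ = D_E(∂₂³w + (2−ν)∂₁²∂₂w). Then for every t: d𝓗/dt = ∫₀^{L₁} Q₁(z¹,0,t) ∂ₜw(z¹,0,t) dz¹ − ∫₀^{L₁} Q₁(z¹,L₂,t) ∂ₜw(z¹,L₂,t) dz¹. -/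
open MeasureTheory intervalIntegral

noncomputable section

/-- Partial derivative with respect to time `t` of a field `u (t, z¹, z²)`. -/
def pT (u : ℝ → ℝ → ℝ → ℝ) : ℝ → ℝ → ℝ → ℝ := fun t z1 z2 => deriv (fun s => u s z1 z2) t

/-- Partial derivative with respect to the first spatial coordinate `z¹`. -/
def pZ1 (u : ℝ → ℝ → ℝ → ℝ) : ℝ → ℝ → ℝ → ℝ := fun t z1 z2 => deriv (fun s => u t s z2) z1

/-- Partial derivative with respect to the second spatial coordinate `z²`. -/
def pZ2 (u : ℝ → ℝ → ℝ → ℝ) : ℝ → ℝ → ℝ → ℝ := fun t z1 z2 => deriv (fun s => u t z1 s) z2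

/-- The biharmonic operator `Δ²w = ∂₁⁴w + 2∂₁²∂₂²w + ∂₂⁴w` at fixed time. -/
def biharm (w : ℝ → ℝ → ℝ → ℝ) : ℝ → ℝ → ℝ → ℝ := fun t z1 z2 =>
  pZ1 (pZ1 (pZ1 (pZ1 w))) t z1 z2 + 2 * pZ1 (pZ1 (pZ2 (pZ2 w))) t z1 z2
    + pZ2 (pZ2 (pZ2 (pZ2 w))) t z1 z2

/-- A field `u (t, z¹, z²)` is smooth if the uncurried map is `C^∞`. -/
def SmoothField (u : ℝ → ℝ → ℝ → ℝ) : Prop :=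
  ContDiff ℝ (⊤ : ℕ∞) (fun q : ℝ × ℝ × ℝ => u q.1 q.2.1 q.2.2)

/-- The Kirchhoff plate energy density
`p²/(2ρA) + (D_E/2)((∂₁²w)² + (∂₂²w)² + 2ν ∂₁²w ∂₂²w + 2(1−ν)(∂₁∂₂w)²)`. -/
def plateDensity (ρA D_E ν : ℝ) (w p : ℝ → ℝ → ℝ → ℝ) (t z1 z2 : ℝ) : ℝ :=
  p t z1 z2 ^ 2 / (2 * ρA)
    + D_E / 2 * ((pZ1 (pZ1 w) t z1 z2) ^ 2 + (pZ2 (pZ2 w) t z1 z2) ^ 2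
        + 2 * ν * pZ1 (pZ1 w) t z1 z2 * pZ2 (pZ2 w) t z1 z2
        + 2 * (1 - ν) * (pZ1 (pZ2 w) t z1 z2) ^ 2)

/-- The total plate energy `𝓗(t) = ∫_B plateDensity dz`. -/
def plateEnergy (L1 L2 ρA D_E ν : ℝ) (w p : ℝ → ℝ → ℝ → ℝ) (t : ℝ) : ℝ :=
  ∫ z1 in (0:ℝ)..L1, ∫ z2 in (0:ℝ)..L2, plateDensity ρA D_E ν w p t z1 z2

/-- Effective shear force `Q₁ = D_E(∂₂³w + (2−ν)∂₁²∂₂w)`. -/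
def Q1 (D_E ν : ℝ) (w : ℝ → ℝ → ℝ → ℝ) (t z1 z2 : ℝ) : ℝ :=
  D_E * (pZ2 (pZ2 (pZ2 w)) t z1 z2 + (2 - ν) * pZ1 (pZ1 (pZ2 w)) t z1 z2)

/-- The port-Hamiltonian plate dynamics `∂ₜw = p/(ρA)`, `∂ₜp = −D_E Δ²w`
holding on `ℝ × B` with `B = [0,L₁]×[0,L₂]`. -/
def PlateDynamics (L1 L2 ρA D_E : ℝ) (w p : ℝ → ℝ → ℝ → ℝ) : Prop :=
  ∀ t : ℝ, ∀ z1 ∈ Set.Icc (0:ℝ) L1, ∀ z2 ∈ Set.Icc (0:ℝ) L2,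
    pT w t z1 z2 = p t z1 z2 / ρA ∧
    pT p t z1 z2 = -(D_E * biharm w t z1 z2)

/-- Clamped edge `z¹ = 0`, free edge `z¹ = L₁`, zero bending moment on the two
edges `z² ∈ {0, L₂}`, and free-corner conditions at `(L₁,0)` and `(L₁,L₂)`. -/
def PlateBC (L1 L2 ν : ℝ) (w : ℝ → ℝ → ℝ → ℝ) : Prop :=
  ∀ t : ℝ,
    (∀ z2 ∈ Set.Icc (0:ℝ) L2, w t 0 z2 = 0 ∧ pZ1 w t 0 z2 = 0) ∧
    (∀ z2 ∈ Set.Icc (0:ℝ) L2,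
      pZ1 (pZ1 (pZ1 w)) t L1 z2 + (2 - ν) * pZ1 (pZ2 (pZ2 w)) t L1 z2 = 0 ∧
      pZ1 (pZ1 w) t L1 z2 + ν * pZ2 (pZ2 w) t L1 z2 = 0) ∧
    (∀ z1 ∈ Set.Icc (0:ℝ) L1,
      pZ2 (pZ2 w) t z1 0 + ν * pZ1 (pZ1 w) t z1 0 = 0 ∧
      pZ2 (pZ2 w) t z1 L2 + ν * pZ1 (pZ1 w) t z1 L2 = 0) ∧
    (pZ1 (pZ2 w) t L1 0 = 0 ∧ pZ1 (pZ2 w) t L1 L2 = 0)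

abbrev E3 := ℝ × ℝ × ℝ

def Dd (a : E3) (G : E3 → ℝ) : E3 → ℝ := fun q => fderiv ℝ G q a

def c3 (G : E3 → ℝ) : ℝ → ℝ → ℝ → ℝ := fun t z1 z2 => G (t, z1, z2)

def eT : E3 := (1, 0, 0)
def eA : E3 := (0, 1, 0)
def eB : E3 := (0, 0, 1)

lemma Dd_contDiff {G : E3 → ℝ} (hG : ContDiff ℝ (⊤:ℕ∞) G) (a : E3) :
    ContDiff ℝ (⊤:ℕ∞) (Dd a G) := by
  have h := (hG.fderiv_right (m := (⊤:ℕ∞)) (by exact_mod_cast le_top))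
  exact h.clm_apply contDiff_const

lemma Dd_cont {G : E3 → ℝ} (hG : ContDiff ℝ (⊤:ℕ∞) G) (a : E3) : Continuous (Dd a G) :=
  (Dd_contDiff hG a).continuous

lemma hasDerivAt_sliceT {G : E3 → ℝ} (hG : ContDiff ℝ (⊤:ℕ∞) G) (t z1 z2 : ℝ) :
    HasDerivAt (fun s => G (s, z1, z2)) (Dd eT G (t, z1, z2)) t := by
  have hline : HasDerivAt (fun s : ℝ => ((s, z1, z2) : E3)) eT t :=
    (hasDerivAt_id t).prodMk ((hasDerivAt_const t z1).prodMk (hasDerivAt_const t z2))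
  exact ((hG.differentiable  (by simp) (t, z1, z2)).hasFDerivAt).comp_hasDerivAt t hline

lemma hasDerivAt_slice1 {G : E3 → ℝ} (hG : ContDiff ℝ (⊤:ℕ∞) G) (t z1 z2 : ℝ) :
    HasDerivAt (fun s => G (t, s, z2)) (Dd eA G (t, z1, z2)) z1 := by
  have hline : HasDerivAt (fun s : ℝ => ((t, s, z2) : E3)) eA z1 :=
    (hasDerivAt_const z1 t).prodMk ((hasDerivAt_id z1).prodMk (hasDerivAt_const z1 z2))
  exact ((hG.differentiable  (by simp) (t, z1, z2)).hasFDerivAt).comp_hasDerivAt z1 hline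

lemma hasDerivAt_slice2 {G : E3 → ℝ} (hG : ContDiff ℝ (⊤:ℕ∞) G) (t z1 z2 : ℝ) :
    HasDerivAt (fun s => G (t, z1, s)) (Dd eB G (t, z1, z2)) z2 := by
  have hline : HasDerivAt (fun s : ℝ => ((t, z1, s) : E3)) eB z2 :=
    (hasDerivAt_const z2 t).prodMk ((hasDerivAt_const z2 z1).prodMk (hasDerivAt_id z2))
  exact ((hG.differentiable  (by simp) (t, z1, z2)).hasFDerivAt).comp_hasDerivAt z2 hline

lemma pT_c3 {G : E3 → ℝ} (hG : ContDiff ℝ (⊤:ℕ∞) G) : pT (c3 G) = c3 (Dd eT G) := by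
  funext t z1 z2
  exact (hasDerivAt_sliceT hG t z1 z2).deriv

lemma pZ1_c3 {G : E3 → ℝ} (hG : ContDiff ℝ (⊤:ℕ∞) G) : pZ1 (c3 G) = c3 (Dd eA G) := by
  funext t z1 z2
  exact (hasDerivAt_slice1 hG t z1 z2).deriv

lemma pZ2_c3 {G : E3 → ℝ} (hG : ContDiff ℝ (⊤:ℕ∞) G) : pZ2 (c3 G) = c3 (Dd eB G) := by
  funext t z1 z2
  exact (hasDerivAt_slice2 hG t z1 z2).deriv

lemma Dd_comm {G : E3 → ℝ} (hG : ContDiff ℝ (⊤:ℕ∞) G) (a b : E3) :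
    Dd a (Dd b G) = Dd b (Dd a G) := by
  have hdG : Differentiable ℝ (fderiv ℝ G) :=
    (hG.fderiv_right (m := (⊤:ℕ∞)) (by exact_mod_cast le_top)).differentiable (by simp)
  have key : ∀ (a b : E3) (q : E3), Dd a (Dd b G) q = fderiv ℝ (fderiv ℝ G) q a b := by
    intro a b q
    have h1 : Dd b G = fun q => (ContinuousLinearMap.apply ℝ ℝ b) (fderiv ℝ G q) := rfl
    have h2 : fderiv ℝ (Dd b G) q =
        (ContinuousLinearMap.apply ℝ ℝ b).comp (fderiv ℝ (fderiv ℝ G) q) := by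
      rw [h1]
      exact (ContinuousLinearMap.apply ℝ ℝ b).hasFDerivAt.comp q (hdG q).hasFDerivAt |>.fderiv
    show fderiv ℝ (Dd b G) q a = _
    rw [h2]; rfl
  funext q
  rw [key a b q, key b a q]
  have hsymm : ∀ v w, fderiv ℝ (fderiv ℝ G) q v w = fderiv ℝ (fderiv ℝ G) q w v := by
    intro v w
    exact second_derivative_symmetric (fun y => (hG.differentiable (by simp) y).hasFDerivAt)
      (hdG q).hasFDerivAt v w
  exact hsymm a b

section Helpers

open Set

lemma fubini_core {f : ℝ → ℝ → ℝ} (hf : Continuous fun q : ℝ × ℝ => f q.1 q.2)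
    {a b c d : ℝ} (hab : a ≤ b) (hcd : c ≤ d) :
    (∫ x in a..b, ∫ y in c..d, f x y) = ∫ y in c..d, ∫ x in a..b, f x y := by
  simp only [intervalIntegral.integral_of_le hab, intervalIntegral.integral_of_le hcd]
  apply MeasureTheory.integral_integral_swap
  have h1 : (volume.restrict (Ioc a b)).prod (volume.restrict (Ioc c d)) =
      (volume.prod volume).restrict ((Ioc a b) ×ˢ (Ioc c d)) := Measure.prod_restrict _ _
  rw [Function.uncurry_def]
  rw [h1]
  have h2 : IntegrableOn (fun q : ℝ × ℝ => f q.1 q.2) ((Icc a b) ×ˢ (Icc c d))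
      (volume.prod volume) := by
    rw [← Measure.volume_eq_prod]
    exact hf.continuousOn.integrableOn_compact (isCompact_Icc.prod isCompact_Icc)
  exact h2.mono_set (prod_mono Ioc_subset_Icc_self Ioc_subset_Icc_self)

lemma fubini_swap {f : ℝ → ℝ → ℝ} (hf : Continuous fun q : ℝ × ℝ => f q.1 q.2)
    (a b c d : ℝ) :
    (∫ x in a..b, ∫ y in c..d, f x y) = ∫ y in c..d, ∫ x in a..b, f x y := by
  rcases le_total a b with hab | hab <;> rcases le_total c d with hcd | hcd
  · exact fubini_core hf hab hcd
  · simp only [intervalIntegral.integral_symm d c, intervalIntegral.integral_neg, neg_inj]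
    exact fubini_core hf hab hcd
  · simp only [intervalIntegral.integral_symm b a, intervalIntegral.integral_neg, neg_inj]
    exact fubini_core hf hab hcd
  · simp only [intervalIntegral.integral_symm b a, intervalIntegral.integral_symm d c,
      intervalIntegral.integral_neg, neg_neg, neg_inj]
    exact fubini_core hf hab hcd

lemma cont_inner {f : ℝ → ℝ → ℝ} (hf : Continuous fun q : ℝ × ℝ => f q.1 q.2)
    (c d : ℝ) : Continuous fun x => ∫ y in c..d, f x y := by
  exact intervalIntegral.continuous_parametric_intervalIntegral_of_continuous'
    (f := f) (μ := volume) hf c d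

lemma I2_add {f g : ℝ → ℝ → ℝ} (hf : Continuous fun q : ℝ × ℝ => f q.1 q.2)
    (hg : Continuous fun q : ℝ × ℝ => g q.1 q.2) (a b c d : ℝ) :
    (∫ x in a..b, ∫ y in c..d, (f x y + g x y)) =
      (∫ x in a..b, ∫ y in c..d, f x y) + ∫ x in a..b, ∫ y in c..d, g x y := by
  have hin : ∀ x, (∫ y in c..d, (f x y + g x y)) =
      (∫ y in c..d, f x y) + ∫ y in c..d, g x y := by
    intro x
    apply intervalIntegral.integral_add
    · exact ((hf.comp (by fun_prop : Continuous fun y : ℝ => ((x, y) : ℝ × ℝ)))).intervalIntegrable c d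
    · exact ((hg.comp (by fun_prop : Continuous fun y : ℝ => ((x, y) : ℝ × ℝ)))).intervalIntegrable c d
  simp only [hin]
  apply intervalIntegral.integral_add
  · exact (cont_inner hf c d).intervalIntegrable a b
  · exact (cont_inner hg c d).intervalIntegrable a b

lemma I2_congr {f g : ℝ → ℝ → ℝ} {b d : ℝ} (hb : 0 ≤ b) (hd : 0 ≤ d)
    (h : ∀ x ∈ Icc 0 b, ∀ y ∈ Icc 0 d, f x y = g x y) :
    (∫ x in (0:ℝ)..b, ∫ y in (0:ℝ)..d, f x y) = ∫ x in (0:ℝ)..b, ∫ y in (0:ℝ)..d, g x y := by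
  apply intervalIntegral.integral_congr
  intro x hx
  rw [uIcc_of_le hb] at hx
  apply intervalIntegral.integral_congr
  intro y hy
  rw [uIcc_of_le hd] at hy
  exact h x hx y hy

lemma I1_congr {f g : ℝ → ℝ} {b : ℝ} (hb : 0 ≤ b)
    (h : ∀ x ∈ Icc 0 b, f x = g x) :
    (∫ x in (0:ℝ)..b, f x) = ∫ x in (0:ℝ)..b, g x := by
  apply intervalIntegral.integral_congr
  intro x hx
  rw [uIcc_of_le hb] at hx
  exact h x hx

lemma I1_add {f g : ℝ → ℝ} (hf : Continuous f) (hg : Continuous g) (a b : ℝ) :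
    (∫ x in a..b, (f x + g x)) = (∫ x in a..b, f x) + ∫ x in a..b, g x :=
  intervalIntegral.integral_add (hf.intervalIntegrable a b) (hg.intervalIntegrable a b)

end Helpers

lemma I1_sub {f g : ℝ → ℝ} (hf : Continuous f) (hg : Continuous g) (a b : ℝ) :
    (∫ x in a..b, (f x - g x)) = (∫ x in a..b, f x) - ∫ x in a..b, g x :=
  intervalIntegral.integral_sub (hf.intervalIntegrable a b) (hg.intervalIntegrable a b)
section DerivUnder

lemma I2_sub {f g : ℝ → ℝ → ℝ} (hf : Continuous fun q : ℝ × ℝ => f q.1 q.2)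
    (hg : Continuous fun q : ℝ × ℝ => g q.1 q.2) (a b c d : ℝ) :
    (∫ x in a..b, ∫ y in c..d, (f x y - g x y)) =
      (∫ x in a..b, ∫ y in c..d, f x y) - ∫ x in a..b, ∫ y in c..d, g x y := by
  have hin : ∀ x, (∫ y in c..d, (f x y - g x y)) =
      (∫ y in c..d, f x y) - ∫ y in c..d, g x y := by
    intro x
    apply intervalIntegral.integral_sub
    · exact ((hf.comp (by fun_prop : Continuous fun y : ℝ => ((x, y) : ℝ × ℝ)))).intervalIntegrable c d
    · exact ((hg.comp (by fun_prop : Continuous fun y : ℝ => ((x, y) : ℝ × ℝ)))).intervalIntegrable c d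
  simp only [hin]
  apply intervalIntegral.integral_sub
  · exact (cont_inner hf c d).intervalIntegrable a b
  · exact (cont_inner hg c d).intervalIntegrable a b

lemma hasDerivAt_I2 {g : E3 → ℝ} (hg : ContDiff ℝ (⊤:ℕ∞) g) (L1 L2 t : ℝ) :
    HasDerivAt (fun τ => ∫ z1 in (0:ℝ)..L1, ∫ z2 in (0:ℝ)..L2, g (τ, z1, z2))
      (∫ z1 in (0:ℝ)..L1, ∫ z2 in (0:ℝ)..L2, Dd eT g (t, z1, z2)) t := by
  set dg := Dd eT g with hdg
  have hdgc : Continuous dg := Dd_cont hg eT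
  have hgc : Continuous g := hg.continuous
  -- continuity of the inner parametric integral in (s, z1)
  have hinner : Continuous fun p : ℝ × ℝ => ∫ z2 in (0:ℝ)..L2, dg (p.1, p.2, z2) := by
    apply intervalIntegral.continuous_parametric_intervalIntegral_of_continuous'
      (f := fun (p : ℝ × ℝ) z2 => dg (p.1, p.2, z2)) (μ := volume)
    exact hdgc.comp (by fun_prop)
  have hKc : Continuous fun s => ∫ z1 in (0:ℝ)..L1, ∫ z2 in (0:ℝ)..L2, dg (s, z1, z2) :=
    cont_inner (f := fun s z1 => ∫ z2 in (0:ℝ)..L2, dg (s, z1, z2)) hinner 0 L1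
  set K : ℝ → ℝ := fun s => ∫ z1 in (0:ℝ)..L1, ∫ z2 in (0:ℝ)..L2, dg (s, z1, z2) with hK
  set φ : ℝ → ℝ := fun τ => ∫ z1 in (0:ℝ)..L1, ∫ z2 in (0:ℝ)..L2, g (τ, z1, z2) with hφ
  have h2 : ∀ τ, φ τ = φ 0 + ∫ s in (0:ℝ)..τ, K s := by
    intro τ
    have step1 : (∫ s in (0:ℝ)..τ, K s)
        = ∫ z1 in (0:ℝ)..L1, ∫ s in (0:ℝ)..τ, ∫ z2 in (0:ℝ)..L2, dg (s, z1, z2) :=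
      fubini_swap (f := fun s z1 => ∫ z2 in (0:ℝ)..L2, dg (s, z1, z2)) hinner 0 τ 0 L1
    have step2 : ∀ z1, (∫ s in (0:ℝ)..τ, ∫ z2 in (0:ℝ)..L2, dg (s, z1, z2))
        = ∫ z2 in (0:ℝ)..L2, ∫ s in (0:ℝ)..τ, dg (s, z1, z2) := by
      intro z1
      exact fubini_swap (f := fun s z2 => dg (s, z1, z2)) (hdgc.comp (by fun_prop)) 0 τ 0 L2
    have step3 : ∀ z1 z2, (∫ s in (0:ℝ)..τ, dg (s, z1, z2)) = g (τ, z1, z2) - g (0, z1, z2) := by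
      intro z1 z2
      apply intervalIntegral.integral_eq_sub_of_hasDerivAt
      · intro s _
        exact hasDerivAt_sliceT hg s z1 z2
      · exact (hdgc.comp (by fun_prop : Continuous fun s : ℝ => ((s, z1, z2) : E3))).intervalIntegrable 0 τ
    have : (∫ s in (0:ℝ)..τ, K s)
        = ∫ z1 in (0:ℝ)..L1, ∫ z2 in (0:ℝ)..L2, (g (τ, z1, z2) - g (0, z1, z2)) := by
      rw [step1]
      congr 1
      funext z1
      rw [step2 z1]
      congr 1
      funext z2
      exact step3 z1 z2
    rw [this, I2_sub (hgc.comp (by fun_prop)) (hgc.comp (by fun_prop))]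
    ring
  have h3 : HasDerivAt (fun τ => φ 0 + ∫ s in (0:ℝ)..τ, K s) (K t) t := by
    apply HasDerivAt.const_add
    exact intervalIntegral.integral_hasDerivAt_right (hKc.intervalIntegrable 0 t)
      (hKc.aestronglyMeasurable.stronglyMeasurableAtFilter) hKc.continuousAt
  have hφeq : φ = fun τ => φ 0 + ∫ s in (0:ℝ)..τ, K s := funext h2
  show HasDerivAt φ (K t) t
  rw [hφeq]
  exact h3

end DerivUnder

def fE (ρA D_E ν : ℝ) (W P : E3 → ℝ) : E3 → ℝ := fun q =>
  P q ^ 2 / (2 * ρA) + D_E / 2 * ((Dd eA (Dd eA W) q) ^ 2 + (Dd eB (Dd eB W) q) ^ 2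
    + 2 * ν * Dd eA (Dd eA W) q * Dd eB (Dd eB W) q + 2 * (1 - ν) * (Dd eA (Dd eB W) q) ^ 2)

theorem core (L1 L2 ρA D_E ν : ℝ) (hL1 : 0 < L1) (hL2 : 0 < L2)
    (hρA : 0 < ρA) (hDE : 0 < D_E)
    (W P : E3 → ℝ) (hW : ContDiff ℝ (⊤:ℕ∞) W) (hP : ContDiff ℝ (⊤:ℕ∞) P)
    (hdyn1 : ∀ τ : ℝ, ∀ z1 ∈ Set.Icc (0:ℝ) L1, ∀ z2 ∈ Set.Icc (0:ℝ) L2,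
      Dd eT W (τ, z1, z2) = P (τ, z1, z2) / ρA)
    (hdyn2 : ∀ τ : ℝ, ∀ z1 ∈ Set.Icc (0:ℝ) L1, ∀ z2 ∈ Set.Icc (0:ℝ) L2,
      Dd eT P (τ, z1, z2) = -(D_E * ((Dd eA (Dd eA (Dd eA (Dd eA W)))) (τ, z1, z2) + 2 * (Dd eA (Dd eA (Dd eB (Dd eB W)))) (τ, z1, z2)
        + (Dd eB (Dd eB (Dd eB (Dd eB W)))) (τ, z1, z2))))
    (hbc0 : ∀ τ : ℝ, ∀ z2 ∈ Set.Icc (0:ℝ) L2, W (τ, 0, z2) = 0)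
    (hbc1 : ∀ τ : ℝ, ∀ z2 ∈ Set.Icc (0:ℝ) L2, Dd eA W (τ, 0, z2) = 0)
    (hbcF1 : ∀ τ : ℝ, ∀ z2 ∈ Set.Icc (0:ℝ) L2,
      (Dd eA (Dd eA (Dd eA W))) (τ, L1, z2) + (2 - ν) * (Dd eA (Dd eB (Dd eB W))) (τ, L1, z2) = 0)
    (hbcF2 : ∀ τ : ℝ, ∀ z2 ∈ Set.Icc (0:ℝ) L2,
      (Dd eA (Dd eA W)) (τ, L1, z2) + ν * (Dd eB (Dd eB W)) (τ, L1, z2) = 0)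
    (hbcM0 : ∀ τ : ℝ, ∀ z1 ∈ Set.Icc (0:ℝ) L1,
      (Dd eB (Dd eB W)) (τ, z1, 0) + ν * (Dd eA (Dd eA W)) (τ, z1, 0) = 0)
    (hbcML : ∀ τ : ℝ, ∀ z1 ∈ Set.Icc (0:ℝ) L1,
      (Dd eB (Dd eB W)) (τ, z1, L2) + ν * (Dd eA (Dd eA W)) (τ, z1, L2) = 0)
    (hbcC0 : ∀ τ : ℝ, (Dd eA (Dd eB W)) (τ, L1, 0) = 0)
    (hbcCL : ∀ τ : ℝ, (Dd eA (Dd eB W)) (τ, L1, L2) = 0)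
    (t : ℝ) :
    HasDerivAt (fun τ => ∫ z1 in (0:ℝ)..L1, ∫ z2 in (0:ℝ)..L2, fE ρA D_E ν W P (τ, z1, z2))
      ((∫ z1 in (0:ℝ)..L1, D_E * ((Dd eB (Dd eB (Dd eB W))) (t, z1, 0) + (2 - ν) * (Dd eA (Dd eA (Dd eB W))) (t, z1, 0)) * (Dd eT W) (t, z1, 0)) - (∫ z1 in (0:ℝ)..L1, D_E * ((Dd eB (Dd eB (Dd eB W))) (t, z1, L2) + (2 - ν) * (Dd eA (Dd eA (Dd eB W))) (t, z1, L2)) * (Dd eT W) (t, z1, L2))) t := by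
  have hD1 : ContDiff ℝ (⊤:ℕ∞) (Dd eA W) := Dd_contDiff hW eA
  have hD2 : ContDiff ℝ (⊤:ℕ∞) (Dd eB W) := Dd_contDiff hW eB
  have hDT : ContDiff ℝ (⊤:ℕ∞) (Dd eT W) := Dd_contDiff hW eT
  have hD11 : ContDiff ℝ (⊤:ℕ∞) (Dd eA (Dd eA W)) := Dd_contDiff hD1 eA
  have hD12 : ContDiff ℝ (⊤:ℕ∞) (Dd eA (Dd eB W)) := Dd_contDiff hD2 eA
  have hD1T : ContDiff ℝ (⊤:ℕ∞) (Dd eA (Dd eT W)) := Dd_contDiff hDT eA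
  have hD22 : ContDiff ℝ (⊤:ℕ∞) (Dd eB (Dd eB W)) := Dd_contDiff hD2 eB
  have hD2T : ContDiff ℝ (⊤:ℕ∞) (Dd eB (Dd eT W)) := Dd_contDiff hDT eB
  have hDTT : ContDiff ℝ (⊤:ℕ∞) (Dd eT (Dd eT W)) := Dd_contDiff hDT eT
  have hD111 : ContDiff ℝ (⊤:ℕ∞) (Dd eA (Dd eA (Dd eA W))) := Dd_contDiff hD11 eA
  have hD112 : ContDiff ℝ (⊤:ℕ∞) (Dd eA (Dd eA (Dd eB W))) := Dd_contDiff hD12 eA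
  have hD11T : ContDiff ℝ (⊤:ℕ∞) (Dd eA (Dd eA (Dd eT W))) := Dd_contDiff hD1T eA
  have hD122 : ContDiff ℝ (⊤:ℕ∞) (Dd eA (Dd eB (Dd eB W))) := Dd_contDiff hD22 eA
  have hD12T : ContDiff ℝ (⊤:ℕ∞) (Dd eA (Dd eB (Dd eT W))) := Dd_contDiff hD2T eA
  have hD222 : ContDiff ℝ (⊤:ℕ∞) (Dd eB (Dd eB (Dd eB W))) := Dd_contDiff hD22 eB
  have hD22T : ContDiff ℝ (⊤:ℕ∞) (Dd eB (Dd eB (Dd eT W))) := Dd_contDiff hD2T eB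
  have hD1111 : ContDiff ℝ (⊤:ℕ∞) (Dd eA (Dd eA (Dd eA (Dd eA W)))) := Dd_contDiff hD111 eA
  have hD1122 : ContDiff ℝ (⊤:ℕ∞) (Dd eA (Dd eA (Dd eB (Dd eB W)))) := Dd_contDiff hD122 eA
  have hD2222 : ContDiff ℝ (⊤:ℕ∞) (Dd eB (Dd eB (Dd eB (Dd eB W)))) := Dd_contDiff hD222 eB
  have hf : ContDiff ℝ (⊤:ℕ∞) (fE ρA D_E ν W P) := by
    unfold fE
    exact ((hP.pow 2).div_const _).add (contDiff_const.mul
      ((((hD11.pow 2).add (hD22.pow 2)).add ((contDiff_const.mul hD11).mul hD22)).add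
        (contDiff_const.mul (hD12.pow 2))))
  -- continuity helpers at fixed t
  have csl1 : ∀ {G : E3 → ℝ}, ContDiff ℝ (⊤:ℕ∞) G → ∀ z2 : ℝ, Continuous fun x : ℝ => G (t, x, z2) :=
    fun hG z2 => hG.continuous.comp (by fun_prop)
  have csl2 : ∀ {G : E3 → ℝ}, ContDiff ℝ (⊤:ℕ∞) G → ∀ z1 : ℝ, Continuous fun y : ℝ => G (t, z1, y) :=
    fun hG z1 => hG.continuous.comp (by fun_prop)
  have cpr : ∀ {G : E3 → ℝ}, ContDiff ℝ (⊤:ℕ∞) G → Continuous fun z : ℝ × ℝ => G (t, z.1, z.2) :=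
    fun hG => hG.continuous.comp (by fun_prop)
  have cpr2 : ∀ {G : E3 → ℝ}, ContDiff ℝ (⊤:ℕ∞) G → Continuous fun z : ℝ × ℝ => G (t, z.2, z.1) :=
    fun hG => hG.continuous.comp (by fun_prop)
  -- commutation identities
  have cT11 : Dd eT (Dd eA (Dd eA W)) = (Dd eA (Dd eA (Dd eT W))) := by
    rw [Dd_comm hD1 eT eA, Dd_comm hW eT eA]
  have cT22 : Dd eT (Dd eB (Dd eB W)) = (Dd eB (Dd eB (Dd eT W))) := by
    rw [Dd_comm hD2 eT eB, Dd_comm hW eT eB]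
  have cT12 : Dd eT (Dd eA (Dd eB W)) = (Dd eA (Dd eB (Dd eT W))) := by
    rw [Dd_comm hD2 eT eA, Dd_comm hW eT eB]
  have c112 : Dd eB (Dd eA (Dd eA W)) = (Dd eA (Dd eA (Dd eB W))) := by
    rw [Dd_comm hD1 eB eA, Dd_comm hW eB eA]
  have c1122 : Dd eB (Dd eA (Dd eA (Dd eB W))) = (Dd eA (Dd eA (Dd eB (Dd eB W)))) := by
    rw [Dd_comm hD12 eB eA, Dd_comm hD2 eB eA]
  have c122 : Dd eB (Dd eA (Dd eB W)) = (Dd eA (Dd eB (Dd eB W))) := by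
    rw [Dd_comm hD2 eB eA]
  have c12T : Dd eB (Dd eA (Dd eT W)) = (Dd eA (Dd eB (Dd eT W))) := by
    rw [Dd_comm hDT eB eA]
  -- derived boundary conditions at the clamped edge
  have hV0e : ∀ z2 : ℝ, z2 ∈ Set.Icc (0:ℝ) L2 → Dd eT W (t, 0, z2) = 0 := by
    intro z2 hz2
    have h1 : (fun s => W (s, 0, z2)) = fun _ => (0:ℝ) := funext fun s => hbc0 s z2 hz2
    have h2 : Dd eT W (t, 0, z2) = deriv (fun s => W (s, 0, z2)) t :=
      ((hasDerivAt_sliceT hW t 0 z2).deriv).symm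
    rw [h2, h1, deriv_const]
  have hV1e : ∀ z2 : ℝ, z2 ∈ Set.Icc (0:ℝ) L2 → (Dd eA (Dd eT W)) (t, 0, z2) = 0 := by
    intro z2 hz2
    have hc : (Dd eA (Dd eT W)) = Dd eT (Dd eA W) := (Dd_comm hW eT eA).symm
    have h1 : (fun s => Dd eA W (s, 0, z2)) = fun _ => (0:ℝ) := funext fun s => hbc1 s z2 hz2
    have h2 : Dd eT (Dd eA W) (t, 0, z2) = deriv (fun s => Dd eA W (s, 0, z2)) t :=
      ((hasDerivAt_sliceT hD1 t 0 z2).deriv).symm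
    rw [hc, h2, h1, deriv_const]
  -- time derivative of the density
  have hDTf : ∀ s z1 z2 : ℝ, Dd eT (fE ρA D_E ν W P) (s, z1, z2) =
      P (s, z1, z2) * Dd eT P (s, z1, z2) / ρA
        + D_E * ((Dd eA (Dd eA W)) (s, z1, z2) * (Dd eA (Dd eA (Dd eT W))) (s, z1, z2)
          + (Dd eB (Dd eB W)) (s, z1, z2) * (Dd eB (Dd eB (Dd eT W))) (s, z1, z2)
          + ν * ((Dd eA (Dd eA W)) (s, z1, z2) * (Dd eB (Dd eB (Dd eT W))) (s, z1, z2)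
            + (Dd eB (Dd eB W)) (s, z1, z2) * (Dd eA (Dd eA (Dd eT W))) (s, z1, z2))
          + 2 * (1 - ν) * ((Dd eA (Dd eB W)) (s, z1, z2) * (Dd eA (Dd eB (Dd eT W))) (s, z1, z2))) := by
    intro s z1 z2
    have hA := hasDerivAt_sliceT hD11 s z1 z2
    have hB := hasDerivAt_sliceT hD22 s z1 z2
    have hC := hasDerivAt_sliceT hD12 s z1 z2
    have hPs := hasDerivAt_sliceT hP s z1 z2
    have hmain : HasDerivAt (fun τ => fE ρA D_E ν W P (τ, z1, z2))
        (P (s, z1, z2) * Dd eT P (s, z1, z2) / ρA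
          + D_E * ((Dd eA (Dd eA W)) (s, z1, z2) * (Dd eA (Dd eA (Dd eT W))) (s, z1, z2)
            + (Dd eB (Dd eB W)) (s, z1, z2) * (Dd eB (Dd eB (Dd eT W))) (s, z1, z2)
            + ν * ((Dd eA (Dd eA W)) (s, z1, z2) * (Dd eB (Dd eB (Dd eT W))) (s, z1, z2)
              + (Dd eB (Dd eB W)) (s, z1, z2) * (Dd eA (Dd eA (Dd eT W))) (s, z1, z2))
            + 2 * (1 - ν) * ((Dd eA (Dd eB W)) (s, z1, z2) * (Dd eA (Dd eB (Dd eT W))) (s, z1, z2)))) s := by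
      have h1 := (hPs.pow 2).div_const (2 * ρA)
      have h2 := (((hA.pow 2).add (hB.pow 2)).add
          ((HasDerivAt.const_mul (2 * ν) hA).mul hB)).add
        (HasDerivAt.const_mul (2 * (1 - ν)) (hC.pow 2))
      have h3 := h1.add (HasDerivAt.const_mul (D_E / 2) h2)
      refine h3.congr_deriv ?_
      rw [← cT11, ← cT22, ← cT12]
      push_cast
      ring
    have e1 : Dd eT (fE ρA D_E ν W P) (s, z1, z2) = deriv (fun τ => fE ρA D_E ν W P (τ, z1, z2)) s :=
      ((hasDerivAt_sliceT hf s z1 z2).deriv).symm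
    rw [e1, hmain.deriv]

  -- pair/slice continuity facts
  have cS1p : Continuous fun z : ℝ × ℝ => ((Dd eA (Dd eA W)) (t, z.1, z.2) + ν * (Dd eB (Dd eB W)) (t, z.1, z.2)) * (Dd eA (Dd eA (Dd eT W))) (t, z.1, z.2) :=
    ((cpr hD11).add (continuous_const.mul (cpr hD22))).mul (cpr hD11T)
  have cS2p : Continuous fun z : ℝ × ℝ => ((Dd eB (Dd eB W)) (t, z.1, z.2) + ν * (Dd eA (Dd eA W)) (t, z.1, z.2)) * (Dd eB (Dd eB (Dd eT W))) (t, z.1, z.2) :=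
    ((cpr hD22).add (continuous_const.mul (cpr hD11))).mul (cpr hD22T)
  have cS3p : Continuous fun z : ℝ × ℝ => 2 * (1 - ν) * ((Dd eA (Dd eB W)) (t, z.1, z.2) * (Dd eA (Dd eB (Dd eT W))) (t, z.1, z.2)) :=
    continuous_const.mul ((cpr hD12).mul (cpr hD12T))
  have cSDp : Continuous fun z : ℝ × ℝ => (Dd eT W) (t, z.1, z.2) * ((Dd eA (Dd eA (Dd eA (Dd eA W)))) (t, z.1, z.2) + 2 * (Dd eA (Dd eA (Dd eB (Dd eB W)))) (t, z.1, z.2) + (Dd eB (Dd eB (Dd eB (Dd eB W)))) (t, z.1, z.2)) :=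
    (cpr hDT).mul (((cpr hD1111).add (continuous_const.mul (cpr hD1122))).add (cpr hD2222))
  have cT1p : Continuous fun z : ℝ × ℝ => ((Dd eA (Dd eA (Dd eA (Dd eA W)))) (t, z.1, z.2) + ν * (Dd eA (Dd eA (Dd eB (Dd eB W)))) (t, z.1, z.2)) * (Dd eT W) (t, z.1, z.2) :=
    ((cpr hD1111).add (continuous_const.mul (cpr hD1122))).mul (cpr hDT)
  have cT1pi : Continuous fun z : ℝ × ℝ => ((Dd eA (Dd eA (Dd eA (Dd eA W)))) (t, z.2, z.1) + ν * (Dd eA (Dd eA (Dd eB (Dd eB W)))) (t, z.2, z.1)) * (Dd eT W) (t, z.2, z.1) :=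
    ((cpr2 hD1111).add (continuous_const.mul (cpr2 hD1122))).mul (cpr2 hDT)
  have cT2p : Continuous fun z : ℝ × ℝ => ((Dd eB (Dd eB (Dd eB (Dd eB W)))) (t, z.1, z.2) + ν * (Dd eA (Dd eA (Dd eB (Dd eB W)))) (t, z.1, z.2)) * (Dd eT W) (t, z.1, z.2) :=
    ((cpr hD2222).add (continuous_const.mul (cpr hD1122))).mul (cpr hDT)
  have cXCp : Continuous fun z : ℝ × ℝ => (Dd eA (Dd eB (Dd eB W))) (t, z.1, z.2) * (Dd eA (Dd eT W)) (t, z.1, z.2) :=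
    (cpr hD122).mul (cpr hD1T)
  have cX3p : Continuous fun z : ℝ × ℝ => (Dd eA (Dd eA (Dd eB (Dd eB W)))) (t, z.1, z.2) * (Dd eT W) (t, z.1, z.2) :=
    (cpr hD1122).mul (cpr hDT)
  -- core pointwise identity on B
  have hcore : ∀ z1 ∈ Set.Icc (0:ℝ) L1, ∀ z2 ∈ Set.Icc (0:ℝ) L2,
      Dd eT (fE ρA D_E ν W P) (t, z1, z2) = D_E * (((Dd eA (Dd eA W)) (t, z1, z2) + ν * (Dd eB (Dd eB W)) (t, z1, z2)) * (Dd eA (Dd eA (Dd eT W))) (t, z1, z2) + ((Dd eB (Dd eB W)) (t, z1, z2) + ν * (Dd eA (Dd eA W)) (t, z1, z2)) * (Dd eB (Dd eB (Dd eT W))) (t, z1, z2) + 2 * (1 - ν) * ((Dd eA (Dd eB W)) (t, z1, z2) * (Dd eA (Dd eB (Dd eT W))) (t, z1, z2)) - (Dd eT W) (t, z1, z2) * ((Dd eA (Dd eA (Dd eA (Dd eA W)))) (t, z1, z2) + 2 * (Dd eA (Dd eA (Dd eB (Dd eB W)))) (t, z1, z2) + (Dd eB (Dd eB (Dd eB (Dd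 eB W)))) (t, z1, z2))) := by
    intro z1 hz1 z2 hz2
    have hPv : P (t, z1, z2) = ρA * Dd eT W (t, z1, z2) := by
      rw [hdyn1 t z1 hz1 z2 hz2]; field_simp
    rw [hDTf t z1 z2, hPv, hdyn2 t z1 hz1 z2 hz2]
    field_simp
    ring
  -- step 1-2 : rewrite the derivative integrand and pull the constant out
  have hstep1 : (∫ z1 in (0:ℝ)..L1, ∫ z2 in (0:ℝ)..L2, Dd eT (fE ρA D_E ν W P) (t, z1, z2))
      = ∫ z1 in (0:ℝ)..L1, ∫ z2 in (0:ℝ)..L2, D_E * (((Dd eA (Dd eA W)) (t, z1, z2) + ν * (Dd eB (Dd eB W)) (t, z1, z2)) * (Dd eA (Dd eA (Dd eT W))) (t, z1, z2) + ((Dd eB (Dd eB W)) (t, z1, z2) + ν * (Dd eA (Dd eA W)) (t, z1, z2)) * (Dd eB (Dd eB (Dd eT W))) (t, z1, z2) + 2 * (1 - ν) * ((Dd eA (Dd eB W)) (t, z1, z2) * (Dd eA (Dd eB (Dd eT W))) (t, z1, z2)) - (Dd eT W) (t, z1, z2) * ((Dd eA (Dd eA (Dd eA (Dd eA W)))) (t,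 z1, z2) + 2 * (Dd eA (Dd eA (Dd eB (Dd eB W)))) (t, z1, z2) + (Dd eB (Dd eB (Dd eB (Dd eB W)))) (t, z1, z2))) :=
    I2_congr hL1.le hL2.le hcore
  have hstep2 : (∫ z1 in (0:ℝ)..L1, ∫ z2 in (0:ℝ)..L2, D_E * (((Dd eA (Dd eA W)) (t, z1, z2) + ν * (Dd eB (Dd eB W)) (t, z1, z2)) * (Dd eA (Dd eA (Dd eT W))) (t, z1, z2) + ((Dd eB (Dd eB W)) (t, z1, z2) + ν * (Dd eA (Dd eA W)) (t, z1, z2)) * (Dd eB (Dd eB (Dd eT W))) (t, z1, z2) + 2 * (1 - ν) * ((Dd eA (Dd eB W)) (t, z1, z2) * (Dd eA (Dd eB (Dd eT W))) (t, z1, z2)) - (Dd eT W) (t, z1, z2) * ((Dd eA (Dd eA (Dd eA (Dd eA W)))) (t, z1, z2) + 2 * (Dd eA (Dd eA (Dd eB (Dd eB W)))) (t, z1, z2) + (Dd eB (Dd eB (Dd eB (Dd eB W)))) (t, z1, z2))))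
      = D_E * ∫ z1 in (0:ℝ)..L1, ∫ z2 in (0:ℝ)..L2, (((Dd eA (Dd eA W)) (t, z1, z2) + ν * (Dd eB (Dd eB W)) (t, z1, z2)) * (Dd eA (Dd eA (Dd eT W))) (t, z1, z2) + ((Dd eB (Dd eB W)) (t, z1, z2) + ν * (Dd eA (Dd eA W)) (t, z1, z2)) * (Dd eB (Dd eB (Dd eT W))) (t, z1, z2) + 2 * (1 - ν) * ((Dd eA (Dd eB W)) (t, z1, z2) * (Dd eA (Dd eB (Dd eT W))) (t, z1, z2)) - (Dd eT W) (t, z1, z2) * ((Dd eA (Dd eA (Dd eA (Dd eA W)))) (t, z1, z2) + 2 * (Dd eA (Dd eA (Dd eB (Dd eB W)))) (t, z1, z2) + (Dd eB (Dd eB (Dd eB (Dd eB W)))) (t, z1, z2))) := by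
    simp only [intervalIntegral.integral_const_mul]
  -- split the integral
  have hsp1 : (∫ z1 in (0:ℝ)..L1, ∫ z2 in (0:ℝ)..L2, (((Dd eA (Dd eA W)) (t, z1, z2) + ν * (Dd eB (Dd eB W)) (t, z1, z2)) * (Dd eA (Dd eA (Dd eT W))) (t, z1, z2) + ((Dd eB (Dd eB W)) (t, z1, z2) + ν * (Dd eA (Dd eA W)) (t, z1, z2)) * (Dd eB (Dd eB (Dd eT W))) (t, z1, z2) + 2 * (1 - ν) * ((Dd eA (Dd eB W)) (t, z1, z2) * (Dd eA (Dd eB (Dd eT W))) (t, z1, z2)) - (Dd eT W) (t, z1, z2) * ((Dd eA (Dd eA (Dd eA (Dd eA W)))) (t, z1, z2) + 2 * (Dd eA (Dd eA (Dd eB (Dd eB W)))) (t, z1, z2) + (Dd eB (Dd eB (Dd eB (Dd eB W)))) (t, z1, z2))))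
      = (∫ z1 in (0:ℝ)..L1, ∫ z2 in (0:ℝ)..L2, (((Dd eA (Dd eA W)) (t, z1, z2) + ν * (Dd eB (Dd eB W)) (t, z1, z2)) * (Dd eA (Dd eA (Dd eT W))) (t, z1, z2) + ((Dd eB (Dd eB W)) (t, z1, z2) + ν * (Dd eA (Dd eA W)) (t, z1, z2)) * (Dd eB (Dd eB (Dd eT W))) (t, z1, z2) + 2 * (1 - ν) * ((Dd eA (Dd eB W)) (t, z1, z2) * (Dd eA (Dd eB (Dd eT W))) (t, z1, z2)))) - ∫ z1 in (0:ℝ)..L1, ∫ z2 in (0:ℝ)..L2, (Dd eT W) (t, z1, z2) * ((Dd eA (Dd eA (Dd eA (Dd eA W)))) (t, z1, z2) + 2 * (Dd eA (Dd eA (Dd eB (Dd eB W)))) (t, z1, z2) + (Dd eB (Dd eB (Dd eB (Dd eB W)))) (t, z1, z2)) :=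
    I2_sub ((cS1p.add cS2p).add cS3p) cSDp 0 L1 0 L2
  have hsp2 : (∫ z1 in (0:ℝ)..L1, ∫ z2 in (0:ℝ)..L2, (((Dd eA (Dd eA W)) (t, z1, z2) + ν * (Dd eB (Dd eB W)) (t, z1, z2)) * (Dd eA (Dd eA (Dd eT W))) (t, z1, z2) + ((Dd eB (Dd eB W)) (t, z1, z2) + ν * (Dd eA (Dd eA W)) (t, z1, z2)) * (Dd eB (Dd eB (Dd eT W))) (t, z1, z2) + 2 * (1 - ν) * ((Dd eA (Dd eB W)) (t, z1, z2) * (Dd eA (Dd eB (Dd eT W))) (t, z1, z2))))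
      = (∫ z1 in (0:ℝ)..L1, ∫ z2 in (0:ℝ)..L2, (((Dd eA (Dd eA W)) (t, z1, z2) + ν * (Dd eB (Dd eB W)) (t, z1, z2)) * (Dd eA (Dd eA (Dd eT W))) (t, z1, z2) + ((Dd eB (Dd eB W)) (t, z1, z2) + ν * (Dd eA (Dd eA W)) (t, z1, z2)) * (Dd eB (Dd eB (Dd eT W))) (t, z1, z2))) + ∫ z1 in (0:ℝ)..L1, ∫ z2 in (0:ℝ)..L2, 2 * (1 - ν) * ((Dd eA (Dd eB W)) (t, z1, z2) * (Dd eA (Dd eB (Dd eT W))) (t, z1, z2)) :=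
    I2_add (cS1p.add cS2p) cS3p 0 L1 0 L2
  have hsp3 : (∫ z1 in (0:ℝ)..L1, ∫ z2 in (0:ℝ)..L2, (((Dd eA (Dd eA W)) (t, z1, z2) + ν * (Dd eB (Dd eB W)) (t, z1, z2)) * (Dd eA (Dd eA (Dd eT W))) (t, z1, z2) + ((Dd eB (Dd eB W)) (t, z1, z2) + ν * (Dd eA (Dd eA W)) (t, z1, z2)) * (Dd eB (Dd eB (Dd eT W))) (t, z1, z2)))
      = (∫ z1 in (0:ℝ)..L1, ∫ z2 in (0:ℝ)..L2, ((Dd eA (Dd eA W)) (t, z1, z2) + ν * (Dd eB (Dd eB W)) (t, z1, z2)) * (Dd eA (Dd eA (Dd eT W))) (t, z1, z2)) + ∫ z1 in (0:ℝ)..L1, ∫ z2 in (0:ℝ)..L2, ((Dd eB (Dd eB W)) (t, z1, z2) + ν * (Dd eA (Dd eA W)) (t, z1, z2)) * (Dd eB (Dd eB (Dd eT W))) (t, z1, z2) :=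
    I2_add cS1p cS2p 0 L1 0 L2
  -- J1 : integration by parts twice in z1
  have hinJ1 : ∀ z2 ∈ Set.Icc (0:ℝ) L2,
      (∫ z1 in (0:ℝ)..L1, ((Dd eA (Dd eA W)) (t, z1, z2) + ν * (Dd eB (Dd eB W)) (t, z1, z2)) * (Dd eA (Dd eA (Dd eT W))) (t, z1, z2)) = -(((Dd eA (Dd eA (Dd eA W))) (t, L1, z2) + ν * (Dd eA (Dd eB (Dd eB W))) (t, L1, z2)) * (Dd eT W) (t, L1, z2))
        + ∫ z1 in (0:ℝ)..L1, ((Dd eA (Dd eA (Dd eA (Dd eA W)))) (t, z1, z2) + ν * (Dd eA (Dd eA (Dd eB (Dd eB W)))) (t, z1, z2)) * (Dd eT W) (t, z1, z2) := by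
    intro z2 hz2
    have h1 := intervalIntegral.integral_mul_deriv_eq_deriv_mul (a := (0:ℝ)) (b := L1)
      (u := fun z1 => (Dd eA (Dd eA W)) (t, z1, z2) + ν * (Dd eB (Dd eB W)) (t, z1, z2))
      (v := fun z1 => (Dd eA (Dd eT W)) (t, z1, z2))
      (u' := fun z1 => (Dd eA (Dd eA (Dd eA W))) (t, z1, z2) + ν * (Dd eA (Dd eB (Dd eB W))) (t, z1, z2))
      (v' := fun z1 => (Dd eA (Dd eA (Dd eT W))) (t, z1, z2))
      (fun x _ => (hasDerivAt_slice1 hD11 t x z2).add (HasDerivAt.const_mul ν (hasDerivAt_slice1 hD22 t x z2)))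
      (fun x _ => hasDerivAt_slice1 hD1T t x z2)
      (((csl1 hD111 z2).add (continuous_const.mul (csl1 hD122 z2))).intervalIntegrable 0 L1)
      ((csl1 hD11T z2).intervalIntegrable 0 L1)
    have h2 := intervalIntegral.integral_mul_deriv_eq_deriv_mul (a := (0:ℝ)) (b := L1)
      (u := fun z1 => (Dd eA (Dd eA (Dd eA W))) (t, z1, z2) + ν * (Dd eA (Dd eB (Dd eB W))) (t, z1, z2))
      (v := fun z1 => (Dd eT W) (t, z1, z2))
      (u' := fun z1 => (Dd eA (Dd eA (Dd eA (Dd eA W)))) (t, z1, z2) + ν * (Dd eA (Dd eA (Dd eB (Dd eB W)))) (t, z1, z2))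
      (v' := fun z1 => (Dd eA (Dd eT W)) (t, z1, z2))
      (fun x _ => (hasDerivAt_slice1 hD111 t x z2).add (HasDerivAt.const_mul ν (hasDerivAt_slice1 hD122 t x z2)))
      (fun x _ => hasDerivAt_slice1 hDT t x z2)
      (((csl1 hD1111 z2).add (continuous_const.mul (csl1 hD1122 z2))).intervalIntegrable 0 L1)
      ((csl1 hD1T z2).intervalIntegrable 0 L1)
    rw [h1, h2]
    simp only [hbcF2 t z2 hz2, hV1e z2 hz2, hV0e z2 hz2]
    ring
  have hJ1 : (∫ z1 in (0:ℝ)..L1, ∫ z2 in (0:ℝ)..L2, ((Dd eA (Dd eA W)) (t, z1, z2) + ν * (Dd eB (Dd eB W)) (t, z1, z2)) * (Dd eA (Dd eA (Dd eT W))) (t, z1, z2)) = -(∫ z2 in (0:ℝ)..L2, ((Dd eA (Dd eA (Dd eA W))) (t, L1, z2) + ν * (Dd eA (Dd eB (Dd eB W))) (t, L1, z2)) * (Dd eT W) (t, L1, z2)) + ∫ z1 in (0:ℝ)..L1, ∫ z2 in (0:ℝ)..L2, ((Dd eA (Dd eA (Dd eA (Dd eA W)))) (t, z1, z2) + ν *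 (Dd eA (Dd eA (Dd eB (Dd eB W)))) (t, z1, z2)) * (Dd eT W) (t, z1, z2) := by
    have hsw1 : (∫ z1 in (0:ℝ)..L1, ∫ z2 in (0:ℝ)..L2, ((Dd eA (Dd eA W)) (t, z1, z2) + ν * (Dd eB (Dd eB W)) (t, z1, z2)) * (Dd eA (Dd eA (Dd eT W))) (t, z1, z2)) = ∫ z2 in (0:ℝ)..L2, ∫ z1 in (0:ℝ)..L1, ((Dd eA (Dd eA W)) (t, z1, z2) + ν * (Dd eB (Dd eB W)) (t, z1, z2)) * (Dd eA (Dd eA (Dd eT W))) (t, z1, z2) := fubini_swap cS1p 0 L1 0 L2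
    have hcg : (∫ z2 in (0:ℝ)..L2, ∫ z1 in (0:ℝ)..L1, ((Dd eA (Dd eA W)) (t, z1, z2) + ν * (Dd eB (Dd eB W)) (t, z1, z2)) * (Dd eA (Dd eA (Dd eT W))) (t, z1, z2))
        = ∫ z2 in (0:ℝ)..L2, (-(((Dd eA (Dd eA (Dd eA W))) (t, L1, z2) + ν * (Dd eA (Dd eB (Dd eB W))) (t, L1, z2)) * (Dd eT W) (t, L1, z2)) + ∫ z1 in (0:ℝ)..L1, ((Dd eA (Dd eA (Dd eA (Dd eA W)))) (t, z1, z2) + ν * (Dd eA (Dd eA (Dd eB (Dd eB W)))) (t, z1, z2)) * (Dd eT W) (t, z1, z2)) :=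
      I1_congr hL2.le hinJ1
    have hadd : (∫ z2 in (0:ℝ)..L2, (-(((Dd eA (Dd eA (Dd eA W))) (t, L1, z2) + ν * (Dd eA (Dd eB (Dd eB W))) (t, L1, z2)) * (Dd eT W) (t, L1, z2)) + ∫ z1 in (0:ℝ)..L1, ((Dd eA (Dd eA (Dd eA (Dd eA W)))) (t, z1, z2) + ν * (Dd eA (Dd eA (Dd eB (Dd eB W)))) (t, z1, z2)) * (Dd eT W) (t, z1, z2)))
        = (∫ z2 in (0:ℝ)..L2, -(((Dd eA (Dd eA (Dd eA W))) (t, L1, z2) + ν * (Dd eA (Dd eB (Dd eB W))) (t, L1, z2)) * (Dd eT W) (t, L1, z2)))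
          + ∫ z2 in (0:ℝ)..L2, ∫ z1 in (0:ℝ)..L1, ((Dd eA (Dd eA (Dd eA (Dd eA W)))) (t, z1, z2) + ν * (Dd eA (Dd eA (Dd eB (Dd eB W)))) (t, z1, z2)) * (Dd eT W) (t, z1, z2) :=
      I1_add (g := fun z2 => ∫ z1 in (0:ℝ)..L1, (Dd eA (Dd eA (Dd eA (Dd eA W))) (t, z1, z2) + ν * Dd eA (Dd eA (Dd eB (Dd eB W))) (t, z1, z2)) * Dd eT W (t, z1, z2)) ((((csl2 hD111 L1).add (continuous_const.mul (csl2 hD122 L1))).mul (csl2 hDT L1)).neg)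
        (cont_inner (f := fun z2 z1 => (Dd eA (Dd eA (Dd eA (Dd eA W))) (t, z1, z2) + ν * Dd eA (Dd eA (Dd eB (Dd eB W))) (t, z1, z2)) * Dd eT W (t, z1, z2)) cT1pi 0 L1) 0 L2
    have hneg : (∫ z2 in (0:ℝ)..L2, -(((Dd eA (Dd eA (Dd eA W))) (t, L1, z2) + ν * (Dd eA (Dd eB (Dd eB W))) (t, L1, z2)) * (Dd eT W) (t, L1, z2)))
        = -(∫ z2 in (0:ℝ)..L2, ((Dd eA (Dd eA (Dd eA W))) (t, L1, z2) + ν * (Dd eA (Dd eB (Dd eB W))) (t, L1, z2)) * (Dd eT W) (t, L1, z2)) := intervalIntegral.integral_neg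
    have hsw2 : (∫ z2 in (0:ℝ)..L2, ∫ z1 in (0:ℝ)..L1, ((Dd eA (Dd eA (Dd eA (Dd eA W)))) (t, z1, z2) + ν * (Dd eA (Dd eA (Dd eB (Dd eB W)))) (t, z1, z2)) * (Dd eT W) (t, z1, z2)) = ∫ z1 in (0:ℝ)..L1, ∫ z2 in (0:ℝ)..L2, ((Dd eA (Dd eA (Dd eA (Dd eA W)))) (t, z1, z2) + ν * (Dd eA (Dd eA (Dd eB (Dd eB W)))) (t, z1, z2)) * (Dd eT W) (t, z1, z2) := (fubini_swap cT1p 0 L1 0 L2).symm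
    rw [hsw1, hcg, hadd, hneg, hsw2]
  -- J2 : integration by parts twice in z2
  have hinJ2 : ∀ z1 ∈ Set.Icc (0:ℝ) L1,
      (∫ z2 in (0:ℝ)..L2, ((Dd eB (Dd eB W)) (t, z1, z2) + ν * (Dd eA (Dd eA W)) (t, z1, z2)) * (Dd eB (Dd eB (Dd eT W))) (t, z1, z2)) = -(((Dd eB (Dd eB (Dd eB W))) (t, z1, L2) + ν * (Dd eA (Dd eA (Dd eB W))) (t, z1, L2)) * (Dd eT W) (t, z1, L2))
        + ((Dd eB (Dd eB (Dd eB W))) (t, z1, 0) + ν * (Dd eA (Dd eA (Dd eB W))) (t, z1, 0)) * (Dd eT W) (t, z1, 0)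
        + ∫ z2 in (0:ℝ)..L2, ((Dd eB (Dd eB (Dd eB (Dd eB W)))) (t, z1, z2) + ν * (Dd eA (Dd eA (Dd eB (Dd eB W)))) (t, z1, z2)) * (Dd eT W) (t, z1, z2) := by
    intro z1 hz1
    have hu1 : ∀ y : ℝ, HasDerivAt (fun z2 => (Dd eB (Dd eB W)) (t, z1, z2) + ν * (Dd eA (Dd eA W)) (t, z1, z2))
        ((Dd eB (Dd eB (Dd eB W))) (t, z1, y) + ν * (Dd eA (Dd eA (Dd eB W))) (t, z1, y)) y := by
      intro y
      have h := (hasDerivAt_slice2 hD22 t z1 y).add (HasDerivAt.const_mul ν (hasDerivAt_slice2 hD11 t z1 y))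
      rw [c112] at h
      exact h
    have hu2 : ∀ y : ℝ, HasDerivAt (fun z2 => (Dd eB (Dd eB (Dd eB W))) (t, z1, z2) + ν * (Dd eA (Dd eA (Dd eB W))) (t, z1, z2))
        ((Dd eB (Dd eB (Dd eB (Dd eB W)))) (t, z1, y) + ν * (Dd eA (Dd eA (Dd eB (Dd eB W)))) (t, z1, y)) y := by
      intro y
      have h := (hasDerivAt_slice2 hD222 t z1 y).add (HasDerivAt.const_mul ν (hasDerivAt_slice2 hD112 t z1 y))
      rw [c1122] at h
      exact h
    have h1 := intervalIntegral.integral_mul_deriv_eq_deriv_mul (a := (0:ℝ)) (b := L2)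
      (u := fun z2 => (Dd eB (Dd eB W)) (t, z1, z2) + ν * (Dd eA (Dd eA W)) (t, z1, z2))
      (v := fun z2 => (Dd eB (Dd eT W)) (t, z1, z2))
      (u' := fun z2 => (Dd eB (Dd eB (Dd eB W))) (t, z1, z2) + ν * (Dd eA (Dd eA (Dd eB W))) (t, z1, z2))
      (v' := fun z2 => (Dd eB (Dd eB (Dd eT W))) (t, z1, z2))
      (fun y _ => hu1 y)
      (fun y _ => hasDerivAt_slice2 hD2T t z1 y)
      (((csl2 hD222 z1).add (continuous_const.mul (csl2 hD112 z1))).intervalIntegrable 0 L2)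
      ((csl2 hD22T z1).intervalIntegrable 0 L2)
    have h2 := intervalIntegral.integral_mul_deriv_eq_deriv_mul (a := (0:ℝ)) (b := L2)
      (u := fun z2 => (Dd eB (Dd eB (Dd eB W))) (t, z1, z2) + ν * (Dd eA (Dd eA (Dd eB W))) (t, z1, z2))
      (v := fun z2 => (Dd eT W) (t, z1, z2))
      (u' := fun z2 => (Dd eB (Dd eB (Dd eB (Dd eB W)))) (t, z1, z2) + ν * (Dd eA (Dd eA (Dd eB (Dd eB W)))) (t, z1, z2))
      (v' := fun z2 => (Dd eB (Dd eT W)) (t, z1, z2))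
      (fun y _ => hu2 y)
      (fun y _ => hasDerivAt_slice2 hDT t z1 y)
      (((csl2 hD2222 z1).add (continuous_const.mul (csl2 hD1122 z1))).intervalIntegrable 0 L2)
      ((csl2 hD2T z1).intervalIntegrable 0 L2)
    rw [h1, h2]
    simp only [hbcM0 t z1 hz1, hbcML t z1 hz1]
    ring
  have hJ2 : (∫ z1 in (0:ℝ)..L1, ∫ z2 in (0:ℝ)..L2, ((Dd eB (Dd eB W)) (t, z1, z2) + ν * (Dd eA (Dd eA W)) (t, z1, z2)) * (Dd eB (Dd eB (Dd eT W))) (t, z1, z2)) = -(∫ z1 in (0:ℝ)..L1, ((Dd eB (Dd eB (Dd eB W))) (t, z1, L2) + ν * (Dd eA (Dd eA (Dd eB W))) (t, z1, L2)) * (Dd eT W) (t, z1, L2)) + (∫ z1 in (0:ℝ)..L1, ((Dd eB (Dd eB (Dd eB W))) (t, z1, 0) + ν * (Dd eA (Dd eA (Dd eB W))) (t, z1, 0)) * (Dd eT W) (t, z1, 0)) + ∫ z1 in (0:ℝ)..L1, ∫ z2 in (0:ℝ)..L2, ((Dd eB (Dd eB (Dd eB (Dd eB W)))) (t, z1, z2)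 + ν * (Dd eA (Dd eA (Dd eB (Dd eB W)))) (t, z1, z2)) * (Dd eT W) (t, z1, z2) := by
    have hcg : (∫ z1 in (0:ℝ)..L1, ∫ z2 in (0:ℝ)..L2, ((Dd eB (Dd eB W)) (t, z1, z2) + ν * (Dd eA (Dd eA W)) (t, z1, z2)) * (Dd eB (Dd eB (Dd eT W))) (t, z1, z2))
        = ∫ z1 in (0:ℝ)..L1, (-(((Dd eB (Dd eB (Dd eB W))) (t, z1, L2) + ν * (Dd eA (Dd eA (Dd eB W))) (t, z1, L2)) * (Dd eT W) (t, z1, L2)) + ((Dd eB (Dd eB (Dd eB W))) (t, z1, 0) + ν * (Dd eA (Dd eA (Dd eB W))) (t, z1, 0)) * (Dd eT W) (t, z1, 0) + ∫ z2 in (0:ℝ)..L2, ((Dd eB (Dd eB (Dd eB (Dd eB W)))) (t, z1, z2) + ν * (Dd eA (Dd eA (Dd eB (Dd eB W)))) (t, z1, z2)) * (Dd eT W) (t, z1, z2)) :=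
      I1_congr hL1.le hinJ2
    have cB1 : Continuous fun z1 : ℝ => ((Dd eB (Dd eB (Dd eB W))) (t, z1, L2) + ν * (Dd eA (Dd eA (Dd eB W))) (t, z1, L2)) * (Dd eT W) (t, z1, L2) := by
      exact (((hD222.continuous.comp (by fun_prop)).add (continuous_const.mul (hD112.continuous.comp (by fun_prop)))).mul (hDT.continuous.comp (by fun_prop)))
    have cB0 : Continuous fun z1 : ℝ => ((Dd eB (Dd eB (Dd eB W))) (t, z1, 0) + ν * (Dd eA (Dd eA (Dd eB W))) (t, z1, 0)) * (Dd eT W) (t, z1, 0) := by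
      exact (((hD222.continuous.comp (by fun_prop)).add (continuous_const.mul (hD112.continuous.comp (by fun_prop)))).mul (hDT.continuous.comp (by fun_prop)))
    have hadd1 : (∫ z1 in (0:ℝ)..L1, (-(((Dd eB (Dd eB (Dd eB W))) (t, z1, L2) + ν * (Dd eA (Dd eA (Dd eB W))) (t, z1, L2)) * (Dd eT W) (t, z1, L2)) + ((Dd eB (Dd eB (Dd eB W))) (t, z1, 0) + ν * (Dd eA (Dd eA (Dd eB W))) (t, z1, 0)) * (Dd eT W) (t, z1, 0) + ∫ z2 in (0:ℝ)..L2, ((Dd eB (Dd eB (Dd eB (Dd eB W)))) (t, z1, z2) + ν * (Dd eA (Dd eA (Dd eB (Dd eB W)))) (t, z1, z2)) * (Dd eT W) (t, z1, z2)))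
        = (∫ z1 in (0:ℝ)..L1, (-(((Dd eB (Dd eB (Dd eB W))) (t, z1, L2) + ν * (Dd eA (Dd eA (Dd eB W))) (t, z1, L2)) * (Dd eT W) (t, z1, L2)) + ((Dd eB (Dd eB (Dd eB W))) (t, z1, 0) + ν * (Dd eA (Dd eA (Dd eB W))) (t, z1, 0)) * (Dd eT W) (t, z1, 0)))
          + ∫ z1 in (0:ℝ)..L1, ∫ z2 in (0:ℝ)..L2, ((Dd eB (Dd eB (Dd eB (Dd eB W)))) (t, z1, z2) + ν * (Dd eA (Dd eA (Dd eB (Dd eB W)))) (t, z1, z2)) * (Dd eT W) (t, z1, z2) :=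
      I1_add ((cB1.neg).add cB0) (cont_inner (f := fun z1 z2 => (Dd eB (Dd eB (Dd eB (Dd eB W))) (t, z1, z2) + ν * Dd eA (Dd eA (Dd eB (Dd eB W))) (t, z1, z2)) * Dd eT W (t, z1, z2)) cT2p 0 L2) 0 L1
    have hadd2 : (∫ z1 in (0:ℝ)..L1, (-(((Dd eB (Dd eB (Dd eB W))) (t, z1, L2) + ν * (Dd eA (Dd eA (Dd eB W))) (t, z1, L2)) * (Dd eT W) (t, z1, L2)) + ((Dd eB (Dd eB (Dd eB W))) (t, z1, 0) + ν * (Dd eA (Dd eA (Dd eB W))) (t, z1, 0)) * (Dd eT W) (t, z1, 0)))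
        = (∫ z1 in (0:ℝ)..L1, -(((Dd eB (Dd eB (Dd eB W))) (t, z1, L2) + ν * (Dd eA (Dd eA (Dd eB W))) (t, z1, L2)) * (Dd eT W) (t, z1, L2)))
          + ∫ z1 in (0:ℝ)..L1, ((Dd eB (Dd eB (Dd eB W))) (t, z1, 0) + ν * (Dd eA (Dd eA (Dd eB W))) (t, z1, 0)) * (Dd eT W) (t, z1, 0) :=
      I1_add (cB1.neg) cB0 0 L1
    have hneg : (∫ z1 in (0:ℝ)..L1, -(((Dd eB (Dd eB (Dd eB W))) (t, z1, L2) + ν * (Dd eA (Dd eA (Dd eB W))) (t, z1, L2)) * (Dd eT W) (t, z1, L2)))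
        = -(∫ z1 in (0:ℝ)..L1, ((Dd eB (Dd eB (Dd eB W))) (t, z1, L2) + ν * (Dd eA (Dd eA (Dd eB W))) (t, z1, L2)) * (Dd eT W) (t, z1, L2)) := intervalIntegral.integral_neg
    rw [hcg, hadd1, hadd2, hneg]

  -- J3 : the twisting term
  have hinJ3 : ∀ z1 : ℝ,
      (∫ z2 in (0:ℝ)..L2, (Dd eA (Dd eB W)) (t, z1, z2) * (Dd eA (Dd eB (Dd eT W))) (t, z1, z2)) = (Dd eA (Dd eB W)) (t, z1, L2) * (Dd eA (Dd eT W)) (t, z1, L2) - (Dd eA (Dd eB W)) (t, z1, 0) * (Dd eA (Dd eT W)) (t, z1, 0) - ∫ z2 in (0:ℝ)..L2, (Dd eA (Dd eB (Dd eB W))) (t, z1, z2) * (Dd eA (Dd eT W)) (t, z1, z2) := by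
    intro z1
    have hu : ∀ y : ℝ, HasDerivAt (fun z2 => (Dd eA (Dd eB W)) (t, z1, z2)) ((Dd eA (Dd eB (Dd eB W))) (t, z1, y)) y := by
      intro y
      have h := hasDerivAt_slice2 hD12 t z1 y
      rw [c122] at h
      exact h
    have hv : ∀ y : ℝ, HasDerivAt (fun z2 => (Dd eA (Dd eT W)) (t, z1, z2)) ((Dd eA (Dd eB (Dd eT W))) (t, z1, y)) y := by
      intro y
      have h := hasDerivAt_slice2 hD1T t z1 y
      rw [c12T] at h
      exact h
    exact intervalIntegral.integral_mul_deriv_eq_deriv_mul (a := (0:ℝ)) (b := L2)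
      (fun y _ => hu y) (fun y _ => hv y)
      ((csl2 hD122 z1).intervalIntegrable 0 L2)
      ((csl2 hD12T z1).intervalIntegrable 0 L2)
  have hibpA : (∫ z1 in (0:ℝ)..L1, (Dd eA (Dd eB W)) (t, z1, L2) * (Dd eA (Dd eT W)) (t, z1, L2)) = -(∫ z1 in (0:ℝ)..L1, (Dd eA (Dd eA (Dd eB W))) (t, z1, L2) * (Dd eT W) (t, z1, L2)) := by
    have h := intervalIntegral.integral_mul_deriv_eq_deriv_mul (a := (0:ℝ)) (b := L1)
      (u := fun z1 => (Dd eA (Dd eB W)) (t, z1, L2))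
      (v := fun z1 => (Dd eT W) (t, z1, L2))
      (u' := fun z1 => (Dd eA (Dd eA (Dd eB W))) (t, z1, L2))
      (v' := fun z1 => (Dd eA (Dd eT W)) (t, z1, L2))
      (fun x _ => hasDerivAt_slice1 hD12 t x L2)
      (fun x _ => hasDerivAt_slice1 hDT t x L2)
      ((csl1 hD112 L2).intervalIntegrable 0 L1)
      ((csl1 hD1T L2).intervalIntegrable 0 L1)
    rw [h]
    simp only [hbcCL t, hV0e L2 ⟨hL2.le, le_refl L2⟩]
    ring
  have hibpB : (∫ z1 in (0:ℝ)..L1, (Dd eA (Dd eB W)) (t, z1, 0) * (Dd eA (Dd eT W)) (t, z1, 0)) = -(∫ z1 in (0:ℝ)..L1, (Dd eA (Dd eA (Dd eB W))) (t, z1, 0) * (Dd eT W) (t, z1, 0)) := by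
    have h := intervalIntegral.integral_mul_deriv_eq_deriv_mul (a := (0:ℝ)) (b := L1)
      (u := fun z1 => (Dd eA (Dd eB W)) (t, z1, 0))
      (v := fun z1 => (Dd eT W) (t, z1, 0))
      (u' := fun z1 => (Dd eA (Dd eA (Dd eB W))) (t, z1, 0))
      (v' := fun z1 => (Dd eA (Dd eT W)) (t, z1, 0))
      (fun x _ => hasDerivAt_slice1 hD12 t x 0)
      (fun x _ => hasDerivAt_slice1 hDT t x 0)
      ((csl1 hD112 0).intervalIntegrable 0 L1)
      ((csl1 hD1T 0).intervalIntegrable 0 L1)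
    rw [h]
    simp only [hbcC0 t, hV0e 0 ⟨le_refl (0:ℝ), hL2.le⟩]
    ring
  have hibpC : (∫ z1 in (0:ℝ)..L1, ∫ z2 in (0:ℝ)..L2, (Dd eA (Dd eB (Dd eB W))) (t, z1, z2) * (Dd eA (Dd eT W)) (t, z1, z2)) = (∫ z2 in (0:ℝ)..L2, (Dd eA (Dd eB (Dd eB W))) (t, L1, z2) * (Dd eT W) (t, L1, z2)) - ∫ z1 in (0:ℝ)..L1, ∫ z2 in (0:ℝ)..L2, (Dd eA (Dd eA (Dd eB (Dd eB W)))) (t, z1, z2) * (Dd eT W) (t, z1, z2) := by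
    have hsw : (∫ z1 in (0:ℝ)..L1, ∫ z2 in (0:ℝ)..L2, (Dd eA (Dd eB (Dd eB W))) (t, z1, z2) * (Dd eA (Dd eT W)) (t, z1, z2)) = ∫ z2 in (0:ℝ)..L2, ∫ z1 in (0:ℝ)..L1, (Dd eA (Dd eB (Dd eB W))) (t, z1, z2) * (Dd eA (Dd eT W)) (t, z1, z2) := fubini_swap cXCp 0 L1 0 L2
    have hin2 : ∀ z2 ∈ Set.Icc (0:ℝ) L2,
        (∫ z1 in (0:ℝ)..L1, (Dd eA (Dd eB (Dd eB W))) (t, z1, z2) * (Dd eA (Dd eT W)) (t, z1, z2)) = (Dd eA (Dd eB (Dd eB W))) (t, L1, z2) * (Dd eT W) (t, L1, z2) - ∫ z1 in (0:ℝ)..L1, (Dd eA (Dd eA (Dd eB (Dd eB W)))) (t, z1, z2) * (Dd eT W) (t, z1, z2) := by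
      intro z2 hz2
      have h := intervalIntegral.integral_mul_deriv_eq_deriv_mul (a := (0:ℝ)) (b := L1)
        (u := fun z1 => (Dd eA (Dd eB (Dd eB W))) (t, z1, z2))
        (v := fun z1 => (Dd eT W) (t, z1, z2))
        (u' := fun z1 => (Dd eA (Dd eA (Dd eB (Dd eB W)))) (t, z1, z2))
        (v' := fun z1 => (Dd eA (Dd eT W)) (t, z1, z2))
        (fun x _ => hasDerivAt_slice1 hD122 t x z2)
        (fun x _ => hasDerivAt_slice1 hDT t x z2)
        ((csl1 hD1122 z2).intervalIntegrable 0 L1)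
        ((csl1 hD1T z2).intervalIntegrable 0 L1)
      rw [h]
      simp only [hV0e z2 hz2]
      ring
    have hcg : (∫ z2 in (0:ℝ)..L2, ∫ z1 in (0:ℝ)..L1, (Dd eA (Dd eB (Dd eB W))) (t, z1, z2) * (Dd eA (Dd eT W)) (t, z1, z2))
        = ∫ z2 in (0:ℝ)..L2, ((Dd eA (Dd eB (Dd eB W))) (t, L1, z2) * (Dd eT W) (t, L1, z2) - ∫ z1 in (0:ℝ)..L1, (Dd eA (Dd eA (Dd eB (Dd eB W)))) (t, z1, z2) * (Dd eT W) (t, z1, z2)) :=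
      I1_congr hL2.le hin2
    have hsub : (∫ z2 in (0:ℝ)..L2, ((Dd eA (Dd eB (Dd eB W))) (t, L1, z2) * (Dd eT W) (t, L1, z2) - ∫ z1 in (0:ℝ)..L1, (Dd eA (Dd eA (Dd eB (Dd eB W)))) (t, z1, z2) * (Dd eT W) (t, z1, z2)))
        = (∫ z2 in (0:ℝ)..L2, (Dd eA (Dd eB (Dd eB W))) (t, L1, z2) * (Dd eT W) (t, L1, z2)) - ∫ z2 in (0:ℝ)..L2, ∫ z1 in (0:ℝ)..L1, (Dd eA (Dd eA (Dd eB (Dd eB W)))) (t, z1, z2) * (Dd eT W) (t, z1, z2) :=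
      I1_sub (f := fun z2 => (Dd eA (Dd eB (Dd eB W))) (t, L1, z2) * (Dd eT W) (t, L1, z2))
        (g := fun z2 => ∫ z1 in (0:ℝ)..L1, (Dd eA (Dd eA (Dd eB (Dd eB W)))) (t, z1, z2) * (Dd eT W) (t, z1, z2))
        ((csl2 hD122 L1).mul (csl2 hDT L1))
        (cont_inner (f := fun z2 z1 => (Dd eA (Dd eA (Dd eB (Dd eB W)))) (t, z1, z2) * (Dd eT W) (t, z1, z2))
          (((cpr2 hD1122).mul (cpr2 hDT))) 0 L1) 0 L2
    have hsw2 : (∫ z2 in (0:ℝ)..L2, ∫ z1 in (0:ℝ)..L1, (Dd eA (Dd eA (Dd eB (Dd eB W)))) (t, z1, z2) * (Dd eT W) (t, z1, z2)) = ∫ z1 in (0:ℝ)..L1, ∫ z2 in (0:ℝ)..L2, (Dd eA (Dd eA (Dd eB (Dd eB W)))) (t, z1, z2) * (Dd eT W) (t, z1, z2) := (fubini_swap cX3p 0 L1 0 L2).symm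
    rw [hsw, hcg, hsub, hsw2]
  have hJ3 : (∫ z1 in (0:ℝ)..L1, ∫ z2 in (0:ℝ)..L2, 2 * (1 - ν) * ((Dd eA (Dd eB W)) (t, z1, z2) * (Dd eA (Dd eB (Dd eT W))) (t, z1, z2))) = 2 * (1 - ν) * (-(∫ z1 in (0:ℝ)..L1, (Dd eA (Dd eA (Dd eB W))) (t, z1, L2) * (Dd eT W) (t, z1, L2)) - (-(∫ z1 in (0:ℝ)..L1, (Dd eA (Dd eA (Dd eB W))) (t, z1, 0) * (Dd eT W) (t, z1, 0))) - ((∫ z2 in (0:ℝ)..L2, (Dd eA (Dd eB (Dd eB W))) (t, L1, z2) * (Dd eT W) (t, L1, z2)) - ∫ z1 in (0:ℝ)..L1, ∫ z2 in (0:ℝ)..L2, (Dd eA (Dd eA (Dd eB (Dd eB W)))) (t, z1, z2) * (Dd eT W) (t, z1, z2))) := by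
    have hpull : (∫ z1 in (0:ℝ)..L1, ∫ z2 in (0:ℝ)..L2, 2 * (1 - ν) * ((Dd eA (Dd eB W)) (t, z1, z2) * (Dd eA (Dd eB (Dd eT W))) (t, z1, z2))) = 2 * (1 - ν) * ∫ z1 in (0:ℝ)..L1, ∫ z2 in (0:ℝ)..L2, (Dd eA (Dd eB W)) (t, z1, z2) * (Dd eA (Dd eB (Dd eT W))) (t, z1, z2) := by
      simp only [intervalIntegral.integral_const_mul]
    have hcg : (∫ z1 in (0:ℝ)..L1, ∫ z2 in (0:ℝ)..L2, (Dd eA (Dd eB W)) (t, z1, z2) * (Dd eA (Dd eB (Dd eT W))) (t, z1, z2))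
        = ∫ z1 in (0:ℝ)..L1, ((Dd eA (Dd eB W)) (t, z1, L2) * (Dd eA (Dd eT W)) (t, z1, L2) - (Dd eA (Dd eB W)) (t, z1, 0) * (Dd eA (Dd eT W)) (t, z1, 0) - ∫ z2 in (0:ℝ)..L2, (Dd eA (Dd eB (Dd eB W))) (t, z1, z2) * (Dd eA (Dd eT W)) (t, z1, z2)) :=
      I1_congr hL1.le (fun z1 _ => hinJ3 z1)
    have cA : Continuous fun z1 : ℝ => (Dd eA (Dd eB W)) (t, z1, L2) * (Dd eA (Dd eT W)) (t, z1, L2) :=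
      ((csl1 hD12 L2).mul (csl1 hD1T L2))
    have cB : Continuous fun z1 : ℝ => (Dd eA (Dd eB W)) (t, z1, 0) * (Dd eA (Dd eT W)) (t, z1, 0) :=
      ((csl1 hD12 0).mul (csl1 hD1T 0))
    have hs1 : (∫ z1 in (0:ℝ)..L1, ((Dd eA (Dd eB W)) (t, z1, L2) * (Dd eA (Dd eT W)) (t, z1, L2) - (Dd eA (Dd eB W)) (t, z1, 0) * (Dd eA (Dd eT W)) (t, z1, 0) - ∫ z2 in (0:ℝ)..L2, (Dd eA (Dd eB (Dd eB W))) (t, z1, z2) * (Dd eA (Dd eT W)) (t, z1, z2)))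
        = (∫ z1 in (0:ℝ)..L1, ((Dd eA (Dd eB W)) (t, z1, L2) * (Dd eA (Dd eT W)) (t, z1, L2) - (Dd eA (Dd eB W)) (t, z1, 0) * (Dd eA (Dd eT W)) (t, z1, 0))) - ∫ z1 in (0:ℝ)..L1, ∫ z2 in (0:ℝ)..L2, (Dd eA (Dd eB (Dd eB W))) (t, z1, z2) * (Dd eA (Dd eT W)) (t, z1, z2) :=
      I1_sub (f := fun z1 => (Dd eA (Dd eB W)) (t, z1, L2) * (Dd eA (Dd eT W)) (t, z1, L2) - (Dd eA (Dd eB W)) (t, z1, 0) * (Dd eA (Dd eT W)) (t, z1, 0))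
        (g := fun z1 => ∫ z2 in (0:ℝ)..L2, (Dd eA (Dd eB (Dd eB W))) (t, z1, z2) * (Dd eA (Dd eT W)) (t, z1, z2))
        (cA.sub cB)
        (cont_inner (f := fun z1 z2 => (Dd eA (Dd eB (Dd eB W))) (t, z1, z2) * (Dd eA (Dd eT W)) (t, z1, z2)) ((cpr hD122).mul (cpr hD1T)) 0 L2) 0 L1
    have hs2 : (∫ z1 in (0:ℝ)..L1, ((Dd eA (Dd eB W)) (t, z1, L2) * (Dd eA (Dd eT W)) (t, z1, L2) - (Dd eA (Dd eB W)) (t, z1, 0) * (Dd eA (Dd eT W)) (t, z1, 0))) = (∫ z1 in (0:ℝ)..L1, (Dd eA (Dd eB W)) (t, z1, L2) * (Dd eA (Dd eT W)) (t, z1, L2)) - ∫ z1 in (0:ℝ)..L1, (Dd eA (Dd eB W)) (t, z1, 0) * (Dd eA (Dd eT W)) (t, z1, 0) :=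
      I1_sub cA cB 0 L1
    rw [hpull, hcg, hs1, hs2, hibpA, hibpB, hibpC]
  -- edge identity at the free edge z1 = L1
  have hEdge : (∫ z2 in (0:ℝ)..L2, ((Dd eA (Dd eA (Dd eA W))) (t, L1, z2) + ν * (Dd eA (Dd eB (Dd eB W))) (t, L1, z2)) * (Dd eT W) (t, L1, z2)) + 2 * (1 - ν) * (∫ z2 in (0:ℝ)..L2, (Dd eA (Dd eB (Dd eB W))) (t, L1, z2) * (Dd eT W) (t, L1, z2)) = 0 := by
    have h1 : 2 * (1 - ν) * (∫ z2 in (0:ℝ)..L2, (Dd eA (Dd eB (Dd eB W))) (t, L1, z2) * (Dd eT W) (t, L1, z2))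
        = ∫ z2 in (0:ℝ)..L2, 2 * (1 - ν) * ((Dd eA (Dd eB (Dd eB W))) (t, L1, z2) * (Dd eT W) (t, L1, z2)) :=
      (intervalIntegral.integral_const_mul _ _).symm
    have h2 : (∫ z2 in (0:ℝ)..L2, ((Dd eA (Dd eA (Dd eA W))) (t, L1, z2) + ν * (Dd eA (Dd eB (Dd eB W))) (t, L1, z2)) * (Dd eT W) (t, L1, z2)) + (∫ z2 in (0:ℝ)..L2, 2 * (1 - ν) * ((Dd eA (Dd eB (Dd eB W))) (t, L1, z2) * (Dd eT W) (t, L1, z2)))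
        = ∫ z2 in (0:ℝ)..L2, (((Dd eA (Dd eA (Dd eA W))) (t, L1, z2) + ν * (Dd eA (Dd eB (Dd eB W))) (t, L1, z2)) * (Dd eT W) (t, L1, z2) + 2 * (1 - ν) * ((Dd eA (Dd eB (Dd eB W))) (t, L1, z2) * (Dd eT W) (t, L1, z2))) :=
      (I1_add ((((csl2 hD111 L1).add (continuous_const.mul (csl2 hD122 L1))).mul (csl2 hDT L1)))
        (continuous_const.mul ((csl2 hD122 L1).mul (csl2 hDT L1))) 0 L2).symm
    have h3 : (∫ z2 in (0:ℝ)..L2, (((Dd eA (Dd eA (Dd eA W))) (t, L1, z2) + ν * (Dd eA (Dd eB (Dd eB W))) (t, L1, z2)) * (Dd eT W) (t, L1, z2) + 2 * (1 - ν) * ((Dd eA (Dd eB (Dd eB W))) (t, L1, z2) * (Dd eT W) (t, L1, z2))))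
        = ∫ _ in (0:ℝ)..L2, (0:ℝ) := by
      apply I1_congr hL2.le
      intro z2 hz2
      have h := hbcF1 t z2 hz2
      linear_combination ((Dd eT W) (t, L1, z2)) * h
    rw [h1, h2, h3]
    simp
  -- interior identity
  have hInt : (∫ z1 in (0:ℝ)..L1, ∫ z2 in (0:ℝ)..L2, ((Dd eA (Dd eA (Dd eA (Dd eA W)))) (t, z1, z2) + ν * (Dd eA (Dd eA (Dd eB (Dd eB W)))) (t, z1, z2)) * (Dd eT W) (t, z1, z2)) + (∫ z1 in (0:ℝ)..L1, ∫ z2 in (0:ℝ)..L2, ((Dd eB (Dd eB (Dd eB (Dd eB W)))) (t, z1, z2) + ν * (Dd eA (Dd eA (Dd eB (Dd eB W)))) (t, z1, z2)) * (Dd eT W) (t, z1, z2)) + 2 * (1 - ν) * (∫ z1 in (0:ℝ)..L1, ∫ z2 in (0:ℝ)..L2, (Dd eA (Dd eA (Dd eB (Dd eB W)))) (t, z1, z2) * (Dd eT W) (t, z1, z2)) = ∫ z1 in (0:ℝ)..L1, ∫ z2 in (0:ℝ)..L2, (Dd eT W) (t, z1, z2) * ((Dd eA (Dd eA (Dd eA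 (Dd eA W)))) (t, z1, z2) + 2 * (Dd eA (Dd eA (Dd eB (Dd eB W)))) (t, z1, z2) + (Dd eB (Dd eB (Dd eB (Dd eB W)))) (t, z1, z2)) := by
    have h1 : (∫ z1 in (0:ℝ)..L1, ∫ z2 in (0:ℝ)..L2, 2 * (1 - ν) * ((Dd eA (Dd eA (Dd eB (Dd eB W)))) (t, z1, z2) * (Dd eT W) (t, z1, z2))) = 2 * (1 - ν) * ∫ z1 in (0:ℝ)..L1, ∫ z2 in (0:ℝ)..L2, (Dd eA (Dd eA (Dd eB (Dd eB W)))) (t, z1, z2) * (Dd eT W) (t, z1, z2) := by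
      simp only [intervalIntegral.integral_const_mul]
    have h2 : (∫ z1 in (0:ℝ)..L1, ∫ z2 in (0:ℝ)..L2, (((Dd eA (Dd eA (Dd eA (Dd eA W)))) (t, z1, z2) + ν * (Dd eA (Dd eA (Dd eB (Dd eB W)))) (t, z1, z2)) * (Dd eT W) (t, z1, z2) + ((Dd eB (Dd eB (Dd eB (Dd eB W)))) (t, z1, z2) + ν * (Dd eA (Dd eA (Dd eB (Dd eB W)))) (t, z1, z2)) * (Dd eT W) (t, z1, z2))) = (∫ z1 in (0:ℝ)..L1, ∫ z2 in (0:ℝ)..L2, ((Dd eA (Dd eA (Dd eA (Dd eA W)))) (t, z1, z2) + ν * (Dd eA (Dd eA (Dd eB (Dd eB W)))) (t, z1, z2)) * (Dd eT W) (t, z1, z2)) + ∫ z1 in (0:ℝ)..L1, ∫ z2 in (0:ℝ)..L2, ((Dd eB (Dd eB (Dd eB (Dd eB W)))) (t, z1, z2) + ν * (Dd eA (Dd eA (Dd eB (Dd eB W)))) (t, z1, z2)) * (Dd eT W) (t, z1, z2) := I2_add cT1p cT2p 0 L1 0 L2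
    have h3 : (∫ z1 in (0:ℝ)..L1, ∫ z2 in (0:ℝ)..L2, ((((Dd eA (Dd eA (Dd eA (Dd eA W)))) (t, z1, z2) + ν * (Dd eA (Dd eA (Dd eB (Dd eB W)))) (t, z1, z2)) * (Dd eT W) (t, z1, z2) + ((Dd eB (Dd eB (Dd eB (Dd eB W)))) (t, z1, z2) + ν * (Dd eA (Dd eA (Dd eB (Dd eB W)))) (t, z1, z2)) * (Dd eT W) (t, z1, z2)) + 2 * (1 - ν) * ((Dd eA (Dd eA (Dd eB (Dd eB W)))) (t, z1, z2) * (Dd eT W) (t, z1, z2))))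
        = (∫ z1 in (0:ℝ)..L1, ∫ z2 in (0:ℝ)..L2, (((Dd eA (Dd eA (Dd eA (Dd eA W)))) (t, z1, z2) + ν * (Dd eA (Dd eA (Dd eB (Dd eB W)))) (t, z1, z2)) * (Dd eT W) (t, z1, z2) + ((Dd eB (Dd eB (Dd eB (Dd eB W)))) (t, z1, z2) + ν * (Dd eA (Dd eA (Dd eB (Dd eB W)))) (t, z1, z2)) * (Dd eT W) (t, z1, z2))) + ∫ z1 in (0:ℝ)..L1, ∫ z2 in (0:ℝ)..L2, 2 * (1 - ν) * ((Dd eA (Dd eA (Dd eB (Dd eB W)))) (t, z1, z2) * (Dd eT W) (t, z1, z2)) :=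
      I2_add (cT1p.add cT2p) (continuous_const.mul ((cpr hD1122).mul (cpr hDT))) 0 L1 0 L2
    have h4 : (∫ z1 in (0:ℝ)..L1, ∫ z2 in (0:ℝ)..L2, ((((Dd eA (Dd eA (Dd eA (Dd eA W)))) (t, z1, z2) + ν * (Dd eA (Dd eA (Dd eB (Dd eB W)))) (t, z1, z2)) * (Dd eT W) (t, z1, z2) + ((Dd eB (Dd eB (Dd eB (Dd eB W)))) (t, z1, z2) + ν * (Dd eA (Dd eA (Dd eB (Dd eB W)))) (t, z1, z2)) * (Dd eT W) (t, z1, z2)) + 2 * (1 - ν) * ((Dd eA (Dd eA (Dd eB (Dd eB W)))) (t, z1, z2) * (Dd eT W) (t, z1, z2)))) = ∫ z1 in (0:ℝ)..L1, ∫ z2 in (0:ℝ)..L2, (Dd eT W) (t, z1, z2) * ((Dd eA (Dd eA (Dd eA (Dd eA W)))) (t, z1, z2) + 2 * (Dd eA (Dd eA (Dd eB (Dd eB W)))) (t, z1, z2) + (Dd eB (Dd eB (Dd eB (Dd eB W)))) (t, z1, z2)) :=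
      I2_congr hL1.le hL2.le (fun z1 _ z2 _ => by ring)
    rw [← h4, h3, h2, h1]
  -- expressing the ports
  have hP0 : (∫ z1 in (0:ℝ)..L1, D_E * ((Dd eB (Dd eB (Dd eB W))) (t, z1, 0) + (2 - ν) * (Dd eA (Dd eA (Dd eB W))) (t, z1, 0)) * (Dd eT W) (t, z1, 0)) = D_E * ((∫ z1 in (0:ℝ)..L1, ((Dd eB (Dd eB (Dd eB W))) (t, z1, 0) + ν * (Dd eA (Dd eA (Dd eB W))) (t, z1, 0)) * (Dd eT W) (t, z1, 0)) + 2 * (1 - ν) * (∫ z1 in (0:ℝ)..L1, (Dd eA (Dd eA (Dd eB W))) (t, z1, 0) * (Dd eT W) (t, z1, 0))) := by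
    have e1 : (∫ z1 in (0:ℝ)..L1, D_E * ((Dd eB (Dd eB (Dd eB W))) (t, z1, 0) + (2 - ν) * (Dd eA (Dd eA (Dd eB W))) (t, z1, 0)) * (Dd eT W) (t, z1, 0))
        = ∫ z1 in (0:ℝ)..L1, D_E * (((Dd eB (Dd eB (Dd eB W))) (t, z1, 0) + ν * (Dd eA (Dd eA (Dd eB W))) (t, z1, 0)) * (Dd eT W) (t, z1, 0) + 2 * (1 - ν) * ((Dd eA (Dd eA (Dd eB W))) (t, z1, 0) * (Dd eT W) (t, z1, 0))) :=
      I1_congr hL1.le (fun z1 _ => by ring)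
    have e2 : (∫ z1 in (0:ℝ)..L1, D_E * (((Dd eB (Dd eB (Dd eB W))) (t, z1, 0) + ν * (Dd eA (Dd eA (Dd eB W))) (t, z1, 0)) * (Dd eT W) (t, z1, 0) + 2 * (1 - ν) * ((Dd eA (Dd eA (Dd eB W))) (t, z1, 0) * (Dd eT W) (t, z1, 0))))
        = D_E * ∫ z1 in (0:ℝ)..L1, (((Dd eB (Dd eB (Dd eB W))) (t, z1, 0) + ν * (Dd eA (Dd eA (Dd eB W))) (t, z1, 0)) * (Dd eT W) (t, z1, 0) + 2 * (1 - ν) * ((Dd eA (Dd eA (Dd eB W))) (t, z1, 0) * (Dd eT W) (t, z1, 0))) :=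
      intervalIntegral.integral_const_mul _ _
    have e3 : (∫ z1 in (0:ℝ)..L1, (((Dd eB (Dd eB (Dd eB W))) (t, z1, 0) + ν * (Dd eA (Dd eA (Dd eB W))) (t, z1, 0)) * (Dd eT W) (t, z1, 0) + 2 * (1 - ν) * ((Dd eA (Dd eA (Dd eB W))) (t, z1, 0) * (Dd eT W) (t, z1, 0))))
        = (∫ z1 in (0:ℝ)..L1, ((Dd eB (Dd eB (Dd eB W))) (t, z1, 0) + ν * (Dd eA (Dd eA (Dd eB W))) (t, z1, 0)) * (Dd eT W) (t, z1, 0)) + ∫ z1 in (0:ℝ)..L1, 2 * (1 - ν) * ((Dd eA (Dd eA (Dd eB W))) (t, z1, 0) * (Dd eT W) (t, z1, 0)) :=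
      I1_add ((((csl1 hD222 0).add (continuous_const.mul (csl1 hD112 0))).mul (csl1 hDT 0)))
        (continuous_const.mul ((csl1 hD112 0).mul (csl1 hDT 0))) 0 L1
    have e4 : (∫ z1 in (0:ℝ)..L1, 2 * (1 - ν) * ((Dd eA (Dd eA (Dd eB W))) (t, z1, 0) * (Dd eT W) (t, z1, 0)))
        = 2 * (1 - ν) * (∫ z1 in (0:ℝ)..L1, (Dd eA (Dd eA (Dd eB W))) (t, z1, 0) * (Dd eT W) (t, z1, 0)) := intervalIntegral.integral_const_mul _ _
    rw [e1, e2, e3, e4]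
  have hPL : (∫ z1 in (0:ℝ)..L1, D_E * ((Dd eB (Dd eB (Dd eB W))) (t, z1, L2) + (2 - ν) * (Dd eA (Dd eA (Dd eB W))) (t, z1, L2)) * (Dd eT W) (t, z1, L2)) = D_E * ((∫ z1 in (0:ℝ)..L1, ((Dd eB (Dd eB (Dd eB W))) (t, z1, L2) + ν * (Dd eA (Dd eA (Dd eB W))) (t, z1, L2)) * (Dd eT W) (t, z1, L2)) + 2 * (1 - ν) * (∫ z1 in (0:ℝ)..L1, (Dd eA (Dd eA (Dd eB W))) (t, z1, L2) * (Dd eT W) (t, z1, L2))) := by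
    have e1 : (∫ z1 in (0:ℝ)..L1, D_E * ((Dd eB (Dd eB (Dd eB W))) (t, z1, L2) + (2 - ν) * (Dd eA (Dd eA (Dd eB W))) (t, z1, L2)) * (Dd eT W) (t, z1, L2))
        = ∫ z1 in (0:ℝ)..L1, D_E * (((Dd eB (Dd eB (Dd eB W))) (t, z1, L2) + ν * (Dd eA (Dd eA (Dd eB W))) (t, z1, L2)) * (Dd eT W) (t, z1, L2) + 2 * (1 - ν) * ((Dd eA (Dd eA (Dd eB W))) (t, z1, L2) * (Dd eT W) (t, z1, L2))) :=
      I1_congr hL1.le (fun z1 _ => by ring)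
    have e2 : (∫ z1 in (0:ℝ)..L1, D_E * (((Dd eB (Dd eB (Dd eB W))) (t, z1, L2) + ν * (Dd eA (Dd eA (Dd eB W))) (t, z1, L2)) * (Dd eT W) (t, z1, L2) + 2 * (1 - ν) * ((Dd eA (Dd eA (Dd eB W))) (t, z1, L2) * (Dd eT W) (t, z1, L2))))
        = D_E * ∫ z1 in (0:ℝ)..L1, (((Dd eB (Dd eB (Dd eB W))) (t, z1, L2) + ν * (Dd eA (Dd eA (Dd eB W))) (t, z1, L2)) * (Dd eT W) (t, z1, L2) + 2 * (1 - ν) * ((Dd eA (Dd eA (Dd eB W))) (t, z1, L2) * (Dd eT W) (t, z1, L2))) :=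
      intervalIntegral.integral_const_mul _ _
    have e3 : (∫ z1 in (0:ℝ)..L1, (((Dd eB (Dd eB (Dd eB W))) (t, z1, L2) + ν * (Dd eA (Dd eA (Dd eB W))) (t, z1, L2)) * (Dd eT W) (t, z1, L2) + 2 * (1 - ν) * ((Dd eA (Dd eA (Dd eB W))) (t, z1, L2) * (Dd eT W) (t, z1, L2))))
        = (∫ z1 in (0:ℝ)..L1, ((Dd eB (Dd eB (Dd eB W))) (t, z1, L2) + ν * (Dd eA (Dd eA (Dd eB W))) (t, z1, L2)) * (Dd eT W) (t, z1, L2)) + ∫ z1 in (0:ℝ)..L1, 2 * (1 - ν) * ((Dd eA (Dd eA (Dd eB W))) (t, z1, L2) * (Dd eT W) (t, z1, L2)) :=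
      I1_add ((((csl1 hD222 L2).add (continuous_const.mul (csl1 hD112 L2))).mul (csl1 hDT L2)))
        (continuous_const.mul ((csl1 hD112 L2).mul (csl1 hDT L2))) 0 L1
    have e4 : (∫ z1 in (0:ℝ)..L1, 2 * (1 - ν) * ((Dd eA (Dd eA (Dd eB W))) (t, z1, L2) * (Dd eT W) (t, z1, L2)))
        = 2 * (1 - ν) * (∫ z1 in (0:ℝ)..L1, (Dd eA (Dd eA (Dd eB W))) (t, z1, L2) * (Dd eT W) (t, z1, L2)) := intervalIntegral.integral_const_mul _ _
    rw [e1, e2, e3, e4]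
  -- final assembly
  have hKt : (∫ z1 in (0:ℝ)..L1, ∫ z2 in (0:ℝ)..L2, Dd eT (fE ρA D_E ν W P) (t, z1, z2)) = (∫ z1 in (0:ℝ)..L1, D_E * ((Dd eB (Dd eB (Dd eB W))) (t, z1, 0) + (2 - ν) * (Dd eA (Dd eA (Dd eB W))) (t, z1, 0)) * (Dd eT W) (t, z1, 0)) - (∫ z1 in (0:ℝ)..L1, D_E * ((Dd eB (Dd eB (Dd eB W))) (t, z1, L2) + (2 - ν) * (Dd eA (Dd eA (Dd eB W))) (t, z1, L2)) * (Dd eT W) (t, z1, L2)) := by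
    rw [hstep1, hstep2, hsp1, hsp2, hsp3, hJ1, hJ2, hJ3, hP0, hPL]
    linear_combination D_E * hInt - D_E * hEdge
  have hED := hasDerivAt_I2 hf L1 L2 t
  rw [hKt] at hED
  exact hED

/-- power balance of the boundary-actuated Kirchhoff–Love plate
(clamped at `z¹ = 0`, free at `z¹ = L₁`, zero bending moment on the `z²`-edges):
the energy changes only through the shear-force ports on the edges
`z² ∈ {0, L₂}`. -/
theorem stmt6 (L1 L2 ρA D_E ν : ℝ) (hL1 : 0 < L1) (hL2 : 0 < L2)
    (hρA : 0 < ρA) (hDE : 0 < D_E)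
    (w p : ℝ → ℝ → ℝ → ℝ) (hw : SmoothField w) (hp : SmoothField p)
    (hdyn : PlateDynamics L1 L2 ρA D_E w p)
    (hbc : PlateBC L1 L2 ν w) :
    ∀ t : ℝ,
      HasDerivAt (plateEnergy L1 L2 ρA D_E ν w p)
        ((∫ z1 in (0:ℝ)..L1, Q1 D_E ν w t z1 0 * pT w t z1 0)
          - ∫ z1 in (0:ℝ)..L1, Q1 D_E ν w t z1 L2 * pT w t z1 L2)
        t := by
  intro t
  set W : E3 → ℝ := fun q => w q.1 q.2.1 q.2.2 with hWdef
  set P : E3 → ℝ := fun q => p q.1 q.2.1 q.2.2 with hPdef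
  have hWc : ContDiff ℝ (⊤:ℕ∞) W := hw
  have hPc : ContDiff ℝ (⊤:ℕ∞) P := hp
  have r1 : pZ1 w = c3 (Dd eA W) := pZ1_c3 hWc
  have r2 : pZ2 w = c3 (Dd eB W) := pZ2_c3 hWc
  have rT : pT w = c3 (Dd eT W) := pT_c3 hWc
  have r11 : pZ1 (pZ1 w) = c3 (Dd eA (Dd eA W)) := by
    rw [r1]; exact pZ1_c3 (Dd_contDiff hWc eA)
  have r22 : pZ2 (pZ2 w) = c3 (Dd eB (Dd eB W)) := by
    rw [r2]; exact pZ2_c3 (Dd_contDiff hWc eB)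
  have r12 : pZ1 (pZ2 w) = c3 (Dd eA (Dd eB W)) := by
    rw [r2]; exact pZ1_c3 (Dd_contDiff hWc eB)
  have r111 : pZ1 (pZ1 (pZ1 w)) = c3 (Dd eA (Dd eA (Dd eA W))) := by
    rw [r11]; exact pZ1_c3 (Dd_contDiff (Dd_contDiff hWc eA) eA)
  have r112 : pZ1 (pZ1 (pZ2 w)) = c3 (Dd eA (Dd eA (Dd eB W))) := by
    rw [r12]; exact pZ1_c3 (Dd_contDiff (Dd_contDiff hWc eB) eA)
  have r122 : pZ1 (pZ2 (pZ2 w)) = c3 (Dd eA (Dd eB (Dd eB W))) := by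
    rw [r22]; exact pZ1_c3 (Dd_contDiff (Dd_contDiff hWc eB) eB)
  have r222 : pZ2 (pZ2 (pZ2 w)) = c3 (Dd eB (Dd eB (Dd eB W))) := by
    rw [r22]; exact pZ2_c3 (Dd_contDiff (Dd_contDiff hWc eB) eB)
  have r1111 : pZ1 (pZ1 (pZ1 (pZ1 w))) = c3 (Dd eA (Dd eA (Dd eA (Dd eA W)))) := by
    rw [r111]; exact pZ1_c3 (Dd_contDiff (Dd_contDiff (Dd_contDiff hWc eA) eA) eA)
  have r1122 : pZ1 (pZ1 (pZ2 (pZ2 w))) = c3 (Dd eA (Dd eA (Dd eB (Dd eB W)))) := by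
    rw [r122]; exact pZ1_c3 (Dd_contDiff (Dd_contDiff (Dd_contDiff hWc eB) eB) eA)
  have r2222 : pZ2 (pZ2 (pZ2 (pZ2 w))) = c3 (Dd eB (Dd eB (Dd eB (Dd eB W)))) := by
    rw [r222]; exact pZ2_c3 (Dd_contDiff (Dd_contDiff (Dd_contDiff hWc eB) eB) eB)
  have rTp : pT p = c3 (Dd eT P) := pT_c3 hPc
  have key := core L1 L2 ρA D_E ν hL1 hL2 hρA hDE W P hWc hPc
    (by
      intro τ z1 hz1 z2 hz2
      have h := (hdyn τ z1 hz1 z2 hz2).1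
      rw [rT] at h
      exact h)
    (by
      intro τ z1 hz1 z2 hz2
      have h := (hdyn τ z1 hz1 z2 hz2).2
      rw [rTp] at h
      simp only [biharm, r1111, r1122, r2222] at h
      exact h)
    (fun τ z2 hz2 => ((hbc τ).1 z2 hz2).1)
    (by
      intro τ z2 hz2
      have h := ((hbc τ).1 z2 hz2).2
      rw [r1] at h
      exact h)
    (by
      intro τ z2 hz2
      have h := ((hbc τ).2.1 z2 hz2).1
      rw [r111, r122] at h
      exact h)
    (by
      intro τ z2 hz2
      have h := ((hbc τ).2.1 z2 hz2).2
      rw [r11, r22] at h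
      exact h)
    (by
      intro τ z1 hz1
      have h := ((hbc τ).2.2.1 z1 hz1).1
      rw [r22, r11] at h
      exact h)
    (by
      intro τ z1 hz1
      have h := ((hbc τ).2.2.1 z1 hz1).2
      rw [r22, r11] at h
      exact h)
    (by
      intro τ
      have h := ((hbc τ).2.2.2).1
      rw [r12] at h
      exact h)
    (by
      intro τ
      have h := ((hbc τ).2.2.2).2
      rw [r12] at h
      exact h)
    t
  have hfun : plateEnergy L1 L2 ρA D_E ν w p
      = fun τ => ∫ z1 in (0:ℝ)..L1, ∫ z2 in (0:ℝ)..L2, fE ρA D_E ν W P (τ, z1, z2) := by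
    funext τ
    simp only [plateEnergy, plateDensity, r11, r22, r12]
    rfl
  have hpv0 : (∫ z1 in (0:ℝ)..L1, Q1 D_E ν w t z1 0 * pT w t z1 0)
      = ∫ z1 in (0:ℝ)..L1, D_E * ((Dd eB (Dd eB (Dd eB W))) (t, z1, 0) + (2 - ν) * (Dd eA (Dd eA (Dd eB W))) (t, z1, 0)) * Dd eT W (t, z1, 0) := by
    simp only [Q1, r222, r112, rT]
    rfl
  have hpvL : (∫ z1 in (0:ℝ)..L1, Q1 D_E ν w t z1 L2 * pT w t z1 L2)
      = ∫ z1 in (0:ℝ)..L1, D_E * ((Dd eB (Dd eB (Dd eB W))) (t, z1, L2) + (2 - ν) * (Dd eA (Dd eA (Dd eB W))) (t, z1, L2)) * Dd eT W (t, z1, L2) := by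
    simp only [Q1, r222, r112, rT]
    rfl
  rw [hfun, hpv0, hpvL]
  exact key

end
end
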